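/- arXiv:math/0605524 — 8 statements merged into one kernel-verified Lean document; each statement's English description precedes it below -/
import Mathlib

section
/- Let f : 𝔽₂ⁿ → {0,1} be a nonzero boolean function. If f is not the indicator function of a coset of a subgroup, then ‖f‖_A ≥ 3/2. -/
open scoped Classical
open Finset

noncomputable def ft {n : ℕ} (f : (Fin n → ZMod 2) → ℝ) (r : Fin n → ZMod 2) : ℝ :=
  (∑ x : Fin n → ZMod 2, f x * (-1 : ℝ) ^ (∑ i, r i * x i).val) /
    (Fintype.card (Fin n → ZMod 2))

noncomputable def aNorm {n : ℕ} (f : (Fin n → ZMod 2) → ℝ) : ℝ := ∑ r : Fin n → ZMod 2, |ft f r|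

/-!
If `aNorm f < 3 / 2`, the support of `f` is closed under `(x, y, z) ↦ x + y + z`. Indeed, by
Fourier inversion `f x + f y + f z - f (x + y + z)` is `∑ r, ft f r * (a + b + c - a * b * c)`
with signs `a, b, c = χ_r x, χ_r y, χ_r z`; since `a + b + c - a * b * c = ±2`, this is at most
`2 * aNorm f < 3`, whereas it equals `3` when `x, y, z` lie in the support and `x + y + z` does
not. Over `𝔽₂` a nonempty set closed under `x + y + z` is a coset `t + H`: the translate `S - t`
is closed under addition.
-/

namespace ZModModule

variable {V : Type*} [AddCommGroup V] [Module (ZMod 2) V]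

theorem exists_submodule_mem_iff_sub_mem {S : Set V} {t : V} (ht : t ∈ S)
    (hS : ∀ x ∈ S, ∀ y ∈ S, ∀ z ∈ S, x + y + z ∈ S) :
    ∃ H : Submodule (ZMod 2) V, ∀ x, x ∈ S ↔ x - t ∈ H := by
  let H : AddSubgroup V :=
    { carrier := {v | v + t ∈ S}
      add_mem' := fun {a b} ha hb => by
        have hab : a + t + (b + t) + t = a + b + t := by
          rw [show a + t + (b + t) + t = a + b + (t + t) + t by abel, add_self, add_zero]
        simpa [hab] using hS _ ha _ hb _ ht
      zero_mem' := by simpa using ht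
      neg_mem' := by simp [neg_eq_self] }
  exact ⟨AddSubgroup.toZModSubmodule 2 H, fun x => by simp [H]⟩

end ZModModule

theorem neg_one_pow_val_add {R : Type*} [Ring R] (a b : ZMod 2) :
    (-1 : R) ^ (a + b).val = (-1) ^ a.val * (-1) ^ b.val := by
  rw [ZMod.val_add, ← neg_one_pow_eq_pow_mod_two, pow_add]

section Walsh

variable {n : ℕ}

def walsh (r x : Fin n → ZMod 2) : ℝ := (-1) ^ (r ⬝ᵥ x).val

theorem walsh_add_right (r x y : Fin n → ZMod 2) : walsh r (x + y) = walsh r x * walsh r y := by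
  rw [walsh, dotProduct_add, neg_one_pow_val_add, walsh, walsh]

theorem walsh_add_left (r s x : Fin n → ZMod 2) : walsh (r + s) x = walsh r x * walsh s x := by
  rw [walsh, add_dotProduct, neg_one_pow_val_add, walsh, walsh]

theorem walsh_eq_one_or_neg_one (r x : Fin n → ZMod 2) : walsh r x = 1 ∨ walsh r x = -1 :=
  neg_one_pow_eq_or ℝ _

theorem sum_walsh_left (x : Fin n → ZMod 2) :
    ∑ r, walsh r x = if x = 0 then 2 ^ n else 0 := by
  split_ifs with hx
  · simp [hx, walsh]
  obtain ⟨i, hi⟩ : ∃ i, x i ≠ 0 := Function.ne_iff.mp hx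
  have he : walsh (Pi.single i 1) x = -1 := by
    rw [walsh, single_dotProduct, one_mul]
    generalize x i = c at hi ⊢
    fin_cases c
    · exact absurd rfl hi
    · exact pow_one (-1 : ℝ)
  -- translating `r` by a vector that pairs to `1` with `x` negates every term
  have hneg : ∑ r, walsh r x = -∑ r, walsh r x := by
    calc ∑ r, walsh r x = ∑ r, walsh (r + Pi.single i 1) x :=
          (Equiv.sum_comp (Equiv.addRight (Pi.single i 1)) (fun r => walsh r x)).symm
      _ = -∑ r, walsh r x := by
          simp only [walsh_add_left, he, mul_neg_one, Finset.sum_neg_distrib]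
  linarith

theorem ft_eq_sum_walsh (f : (Fin n → ZMod 2) → ℝ) (r : Fin n → ZMod 2) :
    ft f r = (∑ x, f x * walsh r x) / 2 ^ n := by
  simp [ft, walsh, dotProduct]

theorem sum_ft_mul_walsh (f : (Fin n → ZMod 2) → ℝ) (x : Fin n → ZMod 2) :
    ∑ r, ft f r * walsh r x = f x := by
  have hdelta : ∀ y, ∑ r, walsh r y * walsh r x = if y = x then 2 ^ n else 0 := by
    intro y
    simp_rw [← walsh_add_right, sum_walsh_left, ← ZModModule.sub_eq_add, sub_eq_zero]
  simp_rw [ft_eq_sum_walsh, div_mul_eq_mul_div, ← Finset.sum_div, Finset.sum_mul, mul_assoc]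
  rw [Finset.sum_comm]
  simp_rw [← Finset.mul_sum, hdelta]
  simp

end Walsh

theorem abs_add_add_sub_mul_le_two {R : Type*} [Ring R] [LinearOrder R] [IsStrictOrderedRing R]
    {a b c : R} (ha : a = 1 ∨ a = -1) (hb : b = 1 ∨ b = -1) (hc : c = 1 ∨ c = -1) :
    |a + b + c - a * b * c| ≤ 2 := by
  rcases ha with rfl | rfl <;> rcases hb with rfl | rfl <;> rcases hc with rfl | rfl <;> norm_num

theorem add_add_sub_le_two_mul_aNorm {n : ℕ} (f : (Fin n → ZMod 2) → ℝ) (x y z : Fin n → ZMod 2) :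
    f x + f y + f z - f (x + y + z) ≤ 2 * aNorm f := by
  simp_rw [← sum_ft_mul_walsh f, walsh_add_right, ← Finset.sum_add_distrib,
    ← Finset.sum_sub_distrib, aNorm, Finset.mul_sum]
  refine Finset.sum_le_sum fun r _ => ?_
  have hbound := abs_add_add_sub_mul_le_two (walsh_eq_one_or_neg_one r x)
    (walsh_eq_one_or_neg_one r y) (walsh_eq_one_or_neg_one r z)
  calc _ = ft f r * (walsh r x + walsh r y + walsh r z - walsh r x * walsh r y * walsh r z) := by
        ring
    _ ≤ |ft f r| * 2 := (le_abs_self _).trans (by rw [abs_mul]; gcongr)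
    _ = 2 * |ft f r| := mul_comm _ _

theorem spectral_norm_ge_three_halves {n : ℕ} (f : (Fin n → ZMod 2) → ℝ)
    (hbool : ∀ x, f x = 0 ∨ f x = 1) (hne : ∃ x, f x = 1)
    (hnc : ¬ ∃ (t : Fin n → ZMod 2) (H : Submodule (ZMod 2) (Fin n → ZMod 2)),
      ∀ x, f x = if x - t ∈ H then (1 : ℝ) else 0) :
    (3 : ℝ) / 2 ≤ aNorm f := by
  by_contra hA
  obtain ⟨t, ht⟩ := hne
  have hclosed : ∀ x ∈ {x | f x = 1}, ∀ y ∈ {x | f x = 1}, ∀ z ∈ {x | f x = 1},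
      x + y + z ∈ {x | f x = 1} := by
    intro x hx y hy z hz
    refine (hbool _).resolve_left fun h0 => hA ?_
    have := add_add_sub_le_two_mul_aNorm f x y z
    rw [hx, hy, hz, h0] at this
    linarith
  obtain ⟨H, hH⟩ := ZModModule.exists_submodule_mem_iff_sub_mem (S := {x | f x = 1}) ht hclosed
  refine hnc ⟨t, H, fun x => ?_⟩
  rw [← hH x]
  rcases hbool x with h | h <;> simp [h]
end

section
/- Let H ≤ 𝔽₂ⁿ be a subgroup, η > 0, and f : 𝔽₂ⁿ → ℝ with ‖f‖_A ≤ M. Then there is a subgroup H' ≤ H with codim(H : H') ≤ M/η such that for every r ∉ (H')^⊥, ∑_{r' ∈ r + (H')^⊥} |f̂(r')| ≤ η. -/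
open scoped Classical
open Finset

def ann {n : ℕ} (H : Submodule (ZMod 2) (Fin n → ZMod 2)) : Set (Fin n → ZMod 2) :=
  {r | ∀ x ∈ H, ∑ i, r i * x i = 0}

/-!
Energy increment. Weigh each character `r` by `|f̂(r)|` and let the mass of `H'` be the
total weight of `(H')^⊥`. If some coset `r + (H')^⊥ ≠ (H')^⊥` carries weight more than `η`,
replace `H'` by `H' ∩ ker r`: its annihilator contains both `(H')^⊥` and that coset, so the
mass grows by more than `η` while the dimension drops by at most one. The mass never exceeds
`‖f‖_A ≤ M`, so after descending from `H` the codimension is at most `M / η`.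
-/

open Module

theorem Submodule.finrank_le_finrank_inf_ker_add_one {K V : Type*} [Field K] [AddCommGroup V]
    [Module K V] [FiniteDimensional K V] (W : Submodule K V) (φ : Dual K V) :
    finrank K W ≤ finrank K (W ⊓ LinearMap.ker φ : Submodule K V) + 1 := by
  have h := LinearMap.finrank_range_add_finrank_ker (φ.domRestrict W)
  have hrange : finrank K (LinearMap.range (φ.domRestrict W)) ≤ 1 := by
    simpa using Submodule.finrank_le (LinearMap.range (φ.domRestrict W))
  rw [LinearMap.ker_domRestrict, (W.equivSubtypeMap _).finrank_eq, Submodule.map_comap_subtype]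
    at h
  omega

section Annihilator

variable {n : ℕ}

noncomputable abbrev dotProductDual (r : Fin n → ZMod 2) : Dual (ZMod 2) (Fin n → ZMod 2) :=
  dotProductBilin (ZMod 2) (ZMod 2) r

lemma ann_antitone {H₁ H₂ : Submodule (ZMod 2) (Fin n → ZMod 2)} (h : H₁ ≤ H₂) :
    ann H₂ ⊆ ann H₁ :=
  fun _ hr x hx => hr x (h hx)

lemma sub_mem_ann {H : Submodule (ZMod 2) (Fin n → ZMod 2)} {r s : Fin n → ZMod 2}
    (hr : r ∈ ann H) (hs : s ∈ ann H) : r - s ∈ ann H := by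
  intro x hx
  have hrx : r ⬝ᵥ x = 0 := hr x hx
  have hsx : s ⬝ᵥ x = 0 := hs x hx
  show (r - s) ⬝ᵥ x = 0
  rw [sub_dotProduct, hrx, hsx, sub_zero]

lemma mem_ann_inf_ker_of_sub_mem {H : Submodule (ZMod 2) (Fin n → ZMod 2)}
    {r s : Fin n → ZMod 2} (hs : s - r ∈ ann H) :
    s ∈ ann (H ⊓ LinearMap.ker (dotProductDual r)) := by
  rintro x ⟨hxH, hxr⟩
  have hsr : (s - r) ⬝ᵥ x = 0 := hs x hxH
  have hr : r ⬝ᵥ x = 0 := hxr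
  calc s ⬝ᵥ x = (s - r) ⬝ᵥ x + r ⬝ᵥ x := by rw [← add_dotProduct, sub_add_cancel]
    _ = 0 := by rw [hsr, hr, add_zero]

lemma inf_ker_dotProductDual_lt {H : Submodule (ZMod 2) (Fin n → ZMod 2)} {r : Fin n → ZMod 2}
    (hr : r ∉ ann H) : H ⊓ LinearMap.ker (dotProductDual r) < H :=
  inf_le_left.lt_of_ne fun heq => hr fun _ hx => (heq.ge hx).2

end Annihilator

section Mass

variable {n : ℕ} (w : (Fin n → ZMod 2) → ℝ)

noncomputable def annMass (H : Submodule (ZMod 2) (Fin n → ZMod 2)) : ℝ :=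
  ∑ r ∈ Finset.univ.filter (· ∈ ann H), w r

noncomputable def cosetMass (H : Submodule (ZMod 2) (Fin n → ZMod 2)) (r : Fin n → ZMod 2) :
    ℝ :=
  ∑ r' ∈ Finset.univ.filter (fun r' => r' - r ∈ ann H), w r'

variable {w} (hw : ∀ r, 0 ≤ w r)
include hw

lemma annMass_nonneg (H : Submodule (ZMod 2) (Fin n → ZMod 2)) : 0 ≤ annMass w H :=
  Finset.sum_nonneg fun r _ => hw r

lemma annMass_le_sum (H : Submodule (ZMod 2) (Fin n → ZMod 2)) : annMass w H ≤ ∑ r, w r :=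
  Finset.sum_le_sum_of_subset_of_nonneg (Finset.filter_subset _ _) fun r _ _ => hw r

lemma annMass_add_cosetMass_le {H : Submodule (ZMod 2) (Fin n → ZMod 2)} {r : Fin n → ZMod 2}
    (hr : r ∉ ann H) :
    annMass w H + cosetMass w H r ≤ annMass w (H ⊓ LinearMap.ker (dotProductDual r)) := by
  have hdisj : Disjoint (Finset.univ.filter (· ∈ ann H))
      (Finset.univ.filter (fun r' => r' - r ∈ ann H)) := by
    refine Finset.disjoint_filter.2 fun s _ hs hsr => hr ?_
    simpa using sub_mem_ann hs hsr
  rw [annMass, cosetMass, ← Finset.sum_union hdisj]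
  refine Finset.sum_le_sum_of_subset_of_nonneg ?_ fun r _ _ => hw r
  intro s hs
  simp only [Finset.mem_union, Finset.mem_filter, Finset.mem_univ, true_and] at hs ⊢
  rcases hs with hs | hs
  · exact ann_antitone inf_le_left hs
  · exact mem_ann_inf_ker_of_sub_mem hs

theorem exists_le_forall_cosetMass_le {η : ℝ} (hη : 0 ≤ η)
    (H : Submodule (ZMod 2) (Fin n → ZMod 2)) :
    ∃ H' ≤ H,
      annMass w H + ((finrank (ZMod 2) H : ℝ) - finrank (ZMod 2) H') * η ≤ annMass w H' ∧
      ∀ r ∉ ann H', cosetMass w H' r ≤ η := by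
  induction H using WellFoundedLT.induction with
  | ind H ih =>
    by_cases hgood : ∀ r ∉ ann H, cosetMass w H r ≤ η
    · exact ⟨H, le_rfl, by simp, hgood⟩
    push Not at hgood
    obtain ⟨r, hr, hbig⟩ := hgood
    obtain ⟨H', hle, hmass, hspec⟩ := ih _ (inf_ker_dotProductDual_lt hr)
    refine ⟨H', hle.trans inf_le_left, ?_, hspec⟩
    have hstep := annMass_add_cosetMass_le hw hr
    have hrank : (finrank (ZMod 2) H : ℝ) ≤
        finrank (ZMod 2) (H ⊓ LinearMap.ker (dotProductDual r) : Submodule _ _) + 1 :=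
      mod_cast H.finrank_le_finrank_inf_ker_add_one (dotProductDual r)
    linarith [mul_le_mul_of_nonneg_right hrank hη]

end Mass

theorem spectral_support_subgroup {n : ℕ} (H : Submodule (ZMod 2) (Fin n → ZMod 2))
    (η M : ℝ) (hη : 0 < η) (f : (Fin n → ZMod 2) → ℝ) (hf : aNorm f ≤ M) :
    ∃ H' : Submodule (ZMod 2) (Fin n → ZMod 2), H' ≤ H ∧
      ((Module.finrank (ZMod 2) H : ℝ) - Module.finrank (ZMod 2) H' ≤ M / η) ∧
      ∀ r ∉ ann H', ∑ r' ∈ Finset.univ.filter (fun r' => r' - r ∈ ann H'), |ft f r'| ≤ η := by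
  have hw : ∀ r, 0 ≤ |ft f r| := fun r => abs_nonneg _
  obtain ⟨H', hle, hmass, hspec⟩ := exists_le_forall_cosetMass_le hw hη.le H
  refine ⟨H', hle, ?_, hspec⟩
  rw [le_div_iff₀ hη]
  have htotal : ∑ r, |ft f r| ≤ M := hf
  linarith [annMass_nonneg hw H, annMass_le_sum hw H']
end

section
/- Let d ≥ 0 be an integer and P_d(X) := 4^d · ((2d)!)^{-1} · ∏_{j=-d}^{d} (X − j). If f : 𝔽₂ⁿ → ℝ satisfies ‖f − f_ℤ‖_∞ ≤ ε for some integer-valued function f_ℤ and ‖f‖_∞ ≤ d, where ε ≤ 1/2, then ‖P_d(f)‖_∞ ≤ ε·4^d. -/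
open Finset

noncomputable def Pd (d : ℕ) (t : ℝ) : ℝ :=
  4 ^ d / (Nat.factorial (2 * d)) * ∏ j ∈ Finset.Icc (-(d : ℤ)) (d : ℤ), (t - j)

lemma prod_Icc_int_cast (n : ℕ) : ∏ k ∈ Finset.Icc (1:ℤ) (n:ℤ), (k:ℝ) = Nat.factorial n := by
  induction n with
  | zero => simp
  | succ n ih =>
      have h1 : (1:ℤ) ≤ (n:ℤ) + 1 := by omega
      have hins : Finset.Icc (1:ℤ) ((n:ℤ)+1) = insert ((n:ℤ)+1) (Finset.Icc (1:ℤ) (n:ℤ)) := by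
        ext k
        simp only [Finset.mem_Icc, Finset.mem_insert]
        omega
      have hnot : ((n:ℤ)+1) ∉ Finset.Icc (1:ℤ) (n:ℤ) := by
        simp only [Finset.mem_Icc]
        omega
      rw [show ((n+1:ℕ):ℤ) = (n:ℤ) + 1 by push_cast; ring, hins,
        Finset.prod_insert hnot, ih, Nat.factorial_succ]
      push_cast
      ring

lemma prod_sigma_eq (d : ℕ) (m : ℤ) (hm1 : -(d:ℤ) ≤ m) (hm2 : m ≤ d) :
    ∏ j ∈ (Finset.Icc (-(d:ℤ)) (d:ℤ)).erase m,
      (if j < m then ((d:ℝ) - j) else ((j:ℝ) - m)) = Nat.factorial (2*d) := by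
  rw [← prod_Icc_int_cast (2*d)]
  refine Finset.prod_nbij' (fun j => if j < m then (d:ℤ) - j else j - m)
    (fun k => if k ≤ (d:ℤ) - m then m + k else (d:ℤ) - k) ?_ ?_ ?_ ?_ ?_
  · intro a ha
    simp only [Finset.mem_erase, Finset.mem_Icc] at ha ⊢
    split <;> omega
  · intro b hb
    simp only [Finset.mem_erase, Finset.mem_Icc] at hb ⊢
    split <;> omega
  · intro a ha
    simp only [Finset.mem_erase, Finset.mem_Icc] at ha
    split <;> split <;> omega
  · intro b hb
    simp only [Finset.mem_erase, Finset.mem_Icc] at hb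
    split <;> split <;> omega
  · intro a ha
    by_cases h : a < m
    · rw [if_pos h, if_pos h]; push_cast; ring
    · rw [if_neg h, if_neg h]; push_cast; ring

lemma key_bound (d : ℕ) (m : ℤ) (hm1 : -(d:ℤ) ≤ m) (hm2 : m ≤ d) (t : ℝ)
    (h1 : (m:ℝ) ≤ t) (h2 : t ≤ d) (h3 : t < m + 1) :
    ∏ j ∈ (Finset.Icc (-(d:ℤ)) (d:ℤ)).erase m, |t - (j:ℝ)| ≤ Nat.factorial (2*d) := by
  rw [← prod_sigma_eq d m hm1 hm2]
  refine Finset.prod_le_prod (fun j _ => abs_nonneg _) ?_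
  intro j hj
  simp only [Finset.mem_erase, Finset.mem_Icc] at hj
  obtain ⟨hne, hjl, hjr⟩ := hj
  by_cases hlt : j < m
  · rw [if_pos hlt]
    have hjm : (j:ℝ) + 1 ≤ (m:ℝ) := by exact_mod_cast hlt
    have hjd : (j:ℝ) ≤ d := by exact_mod_cast hjr
    rw [abs_of_nonneg (by linarith)]
    linarith
  · rw [if_neg hlt]
    have hmj : (m:ℝ) + 1 ≤ (j:ℝ) := by
      have : m + 1 ≤ j := by omega
      exact_mod_cast this
    rw [abs_of_nonpos (by linarith)]
    linarith

lemma reflect_prod (d : ℕ) (m : ℤ) (t : ℝ) :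
    ∏ j ∈ (Finset.Icc (-(d:ℤ)) (d:ℤ)).erase m, |t - (j:ℝ)| =
    ∏ j ∈ (Finset.Icc (-(d:ℤ)) (d:ℤ)).erase (-m), |(-t) - (j:ℝ)| := by
  refine Finset.prod_nbij' (fun j => -j) (fun j => -j) ?_ ?_ ?_ ?_ ?_
  · intro a ha; simp only [Finset.mem_erase, Finset.mem_Icc] at ha ⊢; omega
  · intro a ha; simp only [Finset.mem_erase, Finset.mem_Icc] at ha ⊢; omega
  · intro a _; ring
  · intro a _; ring
  · intro a _
    push_cast
    rw [← abs_neg]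
    ring_nf

theorem Pd_small_of_almost_integer {n : ℕ} (d : ℕ) (ε : ℝ) (hε0 : 0 < ε) (hε : ε ≤ 1 / 2)
    (f : (Fin n → ZMod 2) → ℝ) (fZ : (Fin n → ZMod 2) → ℤ)
    (hf : ∀ x, |f x - fZ x| ≤ ε) (hbd : ∀ x, |f x| ≤ d) :
    ∀ x, |Pd d (f x)| ≤ ε * 4 ^ d := by
  intro x
  set t := f x with ht
  set m := fZ x with hm
  have hu : |t - (m:ℝ)| ≤ ε := hf x
  have htd : |t| ≤ d := hbd x
  have htd1 : t ≤ d := (abs_le.mp htd).2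
  have htd2 : -(d:ℝ) ≤ t := (abs_le.mp htd).1
  have hu1 : t - m ≤ ε := (abs_le.mp hu).2
  have hu2 : -ε ≤ t - m := (abs_le.mp hu).1
  have hm2 : m ≤ (d:ℤ) := by
    have h : (m:ℝ) < (d:ℝ) + 1 := by linarith
    have h' : m < (d:ℤ) + 1 := by exact_mod_cast h
    omega
  have hm1 : -(d:ℤ) ≤ m := by
    have h : -((d:ℝ) + 1) < (m:ℝ) := by linarith
    have h' : -((d:ℤ) + 1) < m := by exact_mod_cast h
    omega
  have hmem : m ∈ Finset.Icc (-(d:ℤ)) (d:ℤ) := Finset.mem_Icc.mpr ⟨hm1, hm2⟩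
  have hprod : ∏ j ∈ (Finset.Icc (-(d:ℤ)) (d:ℤ)).erase m, |t - (j:ℝ)|
      ≤ Nat.factorial (2*d) := by
    rcases le_total (m:ℝ) t with hc | hc
    · exact key_bound d m hm1 hm2 t hc htd1 (by linarith)
    · rw [reflect_prod d m t]
      refine key_bound d (-m) (by omega) (by omega) (-t) ?_ ?_ ?_
      · push_cast; linarith
      · linarith
      · push_cast; linarith
  have habs : |∏ j ∈ Finset.Icc (-(d:ℤ)) (d:ℤ), (t - (j:ℝ))| ≤ ε * Nat.factorial (2*d) := by
    rw [Finset.abs_prod, ← Finset.mul_prod_erase _ _ hmem]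
    have h0 : (0:ℝ) ≤ ∏ j ∈ (Finset.Icc (-(d:ℤ)) (d:ℤ)).erase m, |t - (j:ℝ)| :=
      Finset.prod_nonneg fun j _ => abs_nonneg _
    exact mul_le_mul hu hprod h0 hε0.le
  have hpos : (0:ℝ) < (Nat.factorial (2*d) : ℝ) := by exact_mod_cast Nat.factorial_pos (2*d)
  rw [Pd, abs_mul, abs_of_nonneg (by positivity : (0:ℝ) ≤ 4 ^ d / (Nat.factorial (2*d) : ℝ))]
  have h2 : 4 ^ d / (Nat.factorial (2*d) : ℝ) * |∏ j ∈ Finset.Icc (-(d:ℤ)) (d:ℤ), (t - (j:ℝ))|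
      ≤ 4 ^ d / (Nat.factorial (2*d) : ℝ) * (ε * Nat.factorial (2*d)) :=
    mul_le_mul_of_nonneg_left habs (by positivity)
  have h3 : 4 ^ d / (Nat.factorial (2*d) : ℝ) * (ε * Nat.factorial (2*d)) = ε * 4 ^ d := by
    field_simp
  linarith
end

section
/- Let d ≥ 0 be an integer and P_d(X) := 4^d · ((2d)!)^{-1} · ∏_{j=-d}^{d} (X − j). For every real t, |P_d(t)| ≥ |t̄|, where t̄ ≡ t (mod 1) with t̄ ∈ (−1/2, 1/2]. Consequently, if f : 𝔽₂ⁿ → ℝ satisfies ‖P_d(f)‖_∞ ≤ δ with δ ≤ 1/2, then there is an integer-valued function f_ℤ with ‖f − f_ℤ‖_∞ ≤ δ. -/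
open Finset

private lemma natO (a : ℕ) : a.factorial ≤ ∏ i ∈ Finset.range a, (2*i+1) := by
  induction a with
  | zero => simp
  | succ n ih =>
    rw [Finset.prod_range_succ, Nat.factorial_succ]
    have h2 : (n+1) * ∏ i ∈ Finset.range n, (2*i+1) ≤ (∏ i ∈ Finset.range n, (2*i+1)) * (2*n+1) := by
      rw [Nat.mul_comm]; exact Nat.mul_le_mul_left _ (by omega)
    have h1 : (n+1) * n.factorial ≤ (n+1) * ∏ i ∈ Finset.range n, (2*i+1) :=
      Nat.mul_le_mul_left _ ih
    omega

private lemma key_nat : ∀ m a b : ℕ, a + b = m →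
    (a + b).factorial ≤ (∏ i ∈ Finset.range a, (2*i+1)) * (2^b * b.factorial) := by
  intro m
  induction m with
  | zero =>
    intro a b h
    obtain rfl : a = 0 := by omega
    obtain rfl : b = 0 := by omega
    simp
  | succ m ih =>
    intro a b h
    by_cases hb : a ≤ b ∧ 1 ≤ b
    · obtain ⟨b, rfl⟩ : ∃ b', b = b' + 1 := ⟨b - 1, by omega⟩
      have h1 := ih a b (by omega)
      rw [show a + (b+1) = (a+b) + 1 by ring, Nat.factorial_succ]
      calc (a+b+1) * (a+b).factorial
          ≤ (a+b+1) * ((∏ i ∈ Finset.range a, (2*i+1)) * (2^b * b.factorial)) :=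
            Nat.mul_le_mul_left _ h1
        _ ≤ (2*(b+1)) * ((∏ i ∈ Finset.range a, (2*i+1)) * (2^b * b.factorial)) :=
            Nat.mul_le_mul_right _ (by omega)
        _ = (∏ i ∈ Finset.range a, (2*i+1)) * (2^(b+1) * (b+1).factorial) := by
            rw [Nat.factorial_succ, pow_succ]; ring
    · obtain ⟨a, rfl⟩ : ∃ a', a = a' + 1 := ⟨a - 1, by omega⟩
      have h1 := ih a b (by omega)
      rw [show (a+1) + b = (a+b) + 1 by ring, Nat.factorial_succ, Finset.prod_range_succ]
      calc (a+b+1) * (a+b).factorial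
          ≤ (a+b+1) * ((∏ i ∈ Finset.range a, (2*i+1)) * (2^b * b.factorial)) :=
            Nat.mul_le_mul_left _ h1
        _ ≤ (2*a+1) * ((∏ i ∈ Finset.range a, (2*i+1)) * (2^b * b.factorial)) :=
            Nat.mul_le_mul_right _ (by omega)
        _ = ((∏ i ∈ Finset.range a, (2*i+1)) * (2*a+1)) * (2^b * b.factorial) := by ring

private lemma natE (b : ℕ) : ∏ i ∈ Finset.range b, (2*(i+1)) = 2^b * b.factorial := by
  induction b with
  | zero => simp
  | succ n ih => rw [Finset.prod_range_succ, ih, Nat.factorial_succ, pow_succ]; ring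

private lemma Icc_int_image (a b : ℤ) :
    Finset.Icc a b = Finset.image (fun i : ℕ => a + i) (Finset.range (b + 1 - a).toNat) := by
  ext j
  simp only [Finset.mem_Icc, Finset.mem_image, Finset.mem_range]
  constructor
  · intro h; exact ⟨(j - a).toNat, by omega, by omega⟩
  · rintro ⟨i, hi, rfl⟩; omega

private lemma prod_Icc_int {M : Type*} [CommMonoid M] (a b : ℤ) (f : ℤ → M) :
    ∏ j ∈ Finset.Icc a b, f j = ∏ i ∈ Finset.range (b + 1 - a).toNat, f (a + i) := by
  rw [Icc_int_image a b, Finset.prod_image]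
  intro x _ y _ h
  have h' : a + (x:ℤ) = a + (y:ℤ) := h
  omega

private lemma core (d : ℕ) (k : ℤ) (hk1 : -(d:ℤ) ≤ k) (hk2 : k ≤ (d:ℤ)) (g : ℤ → ℝ)
    (hpos : ∀ j, 0 ≤ g j)
    (hup : ∀ j, k < j → j ≤ (d:ℤ) → ((2*(j-k)-1 : ℤ) : ℝ) ≤ g j)
    (hlo : ∀ j, -(d:ℤ) ≤ j → j < k → ((2*(k-j) : ℤ) : ℝ) ≤ g j) :
    ((2*d).factorial : ℝ) ≤ ∏ j ∈ (Finset.Icc (-(d:ℤ)) (d:ℤ)).erase k, g j := by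
  have hsplit : (Finset.Icc (-(d:ℤ)) (d:ℤ)).erase k
      = Finset.Icc (-(d:ℤ)) (k-1) ∪ Finset.Icc (k+1) (d:ℤ) := by
    ext j
    simp only [Finset.mem_erase, Finset.mem_Icc, Finset.mem_union]
    omega
  have hdisj : Disjoint (Finset.Icc (-(d:ℤ)) (k-1)) (Finset.Icc (k+1) (d:ℤ)) := by
    rw [Finset.disjoint_left]
    intro j hj hj'
    simp only [Finset.mem_Icc] at hj hj'
    omega
  rw [hsplit, Finset.prod_union hdisj]
  set a := ((d:ℤ) - k).toNat with ha
  set b := ((d:ℤ) + k).toNat with hb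
  have hloprod : ((2^b * b.factorial : ℕ) : ℝ) ≤ ∏ j ∈ Finset.Icc (-(d:ℤ)) (k-1), g j := by
    have h1 : ∏ j ∈ Finset.Icc (-(d:ℤ)) (k-1), (((2*(k-j)).toNat : ℕ) : ℝ)
        ≤ ∏ j ∈ Finset.Icc (-(d:ℤ)) (k-1), g j := by
      apply Finset.prod_le_prod
      · intro j _; positivity
      · intro j hj
        simp only [Finset.mem_Icc] at hj
        have h2 := hlo j hj.1 (by omega)
        have h3 : (((2*(k-j)).toNat : ℕ) : ℝ) = ((2*(k-j) : ℤ) : ℝ) := by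
          rw [← Int.cast_natCast, Int.toNat_of_nonneg (by omega)]
        rw [h3]; exact h2
    refine le_trans (le_of_eq ?_) h1
    rw [← Nat.cast_prod]
    congr 1
    symm
    rw [prod_Icc_int]
    have hcard : (k - 1 + 1 - (-(d:ℤ))).toNat = b := by omega
    rw [hcard, ← natE b, ← Finset.prod_range_reflect (fun i => 2*(i+1)) b]
    apply Finset.prod_congr rfl
    intro i hi
    simp only [Finset.mem_range] at hi
    omega
  have hupprod : ((∏ i ∈ Finset.range a, (2*i+1) : ℕ) : ℝ) ≤ ∏ j ∈ Finset.Icc (k+1) (d:ℤ), g j := by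
    have h1 : ∏ j ∈ Finset.Icc (k+1) (d:ℤ), (((2*(j-k)-1).toNat : ℕ) : ℝ)
        ≤ ∏ j ∈ Finset.Icc (k+1) (d:ℤ), g j := by
      apply Finset.prod_le_prod
      · intro j _; positivity
      · intro j hj
        simp only [Finset.mem_Icc] at hj
        have h2 := hup j (by omega) hj.2
        have h3 : (((2*(j-k)-1).toNat : ℕ) : ℝ) = ((2*(j-k)-1 : ℤ) : ℝ) := by
          rw [← Int.cast_natCast, Int.toNat_of_nonneg (by omega)]
        rw [h3]; exact h2
    refine le_trans (le_of_eq ?_) h1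
    rw [← Nat.cast_prod]
    congr 1
    symm
    rw [prod_Icc_int]
    have hcard : ((d:ℤ) + 1 - (k+1)).toNat = a := by omega
    rw [hcard]
    apply Finset.prod_congr rfl
    intro i hi
    simp only [Finset.mem_range] at hi
    omega
  have hab : a + b = 2*d := by omega
  have hkey := key_nat (2*d) a b hab
  rw [hab] at hkey
  calc ((2*d).factorial : ℝ)
      ≤ (((∏ i ∈ Finset.range a, (2*i+1)) * (2^b * b.factorial) : ℕ) : ℝ) := by
        exact_mod_cast hkey
    _ = ((2^b * b.factorial : ℕ) : ℝ) * ((∏ i ∈ Finset.range a, (2*i+1) : ℕ) : ℝ) := by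
        push_cast; ring
    _ ≤ (∏ j ∈ Finset.Icc (-(d:ℤ)) (k-1), g j) * ∏ j ∈ Finset.Icc (k+1) (d:ℤ), g j := by
        apply mul_le_mul hloprod hupprod (by positivity) (Finset.prod_nonneg (fun j _ => hpos j))

private lemma main_bound (d : ℕ) (t : ℝ) :
    ((2*d).factorial : ℝ) * |t - ⌈t - 1/2⌉| ≤ 4^d * ∏ j ∈ Finset.Icc (-(d:ℤ)) (d:ℤ), |t - j| := by
  have hfac : (0:ℝ) < (2*d).factorial := by exact_mod_cast (2*d).factorial_pos
  set k := ⌈t - 1/2⌉ with hkdef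
  have hs1 : t - (k:ℝ) ≤ 1/2 := by
    have := Int.le_ceil (t - 1/2); linarith
  have hs2 : -(1/2) < t - (k:ℝ) := by
    have := Int.ceil_lt_add_one (t - 1/2); linarith
  by_cases hkin : -(d:ℤ) ≤ k ∧ k ≤ (d:ℤ)
  · have hmem : k ∈ Finset.Icc (-(d:ℤ)) (d:ℤ) := Finset.mem_Icc.mpr hkin
    have hcard : ((Finset.Icc (-(d:ℤ)) (d:ℤ)).erase k).card = 2*d := by
      rw [Finset.card_erase_of_mem hmem, Int.card_Icc]
      omega
    have key : ((2*d).factorial : ℝ) ≤ ∏ j ∈ (Finset.Icc (-(d:ℤ)) (d:ℤ)).erase k, (2 * |t - j|) := by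
      by_cases hs : 0 ≤ t - (k:ℝ)
      · apply core d k hkin.1 hkin.2
        · intro j; positivity
        · intro j h1 h2
          have hj : (k:ℝ) + 1 ≤ j := by exact_mod_cast h1
          have h4 : (j:ℝ) - t ≤ |t - j| := by rw [abs_sub_comm]; exact le_abs_self _
          push_cast
          linarith
        · intro j h1 h2
          have hj : (j:ℝ) + 1 ≤ k := by exact_mod_cast h2
          have h4 : t - (j:ℝ) ≤ |t - j| := le_abs_self _
          push_cast
          linarith
      · push_neg at hs
        have hrefl : ∏ j ∈ (Finset.Icc (-(d:ℤ)) (d:ℤ)).erase k, (2 * |t - j|)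
            = ∏ j ∈ (Finset.Icc (-(d:ℤ)) (d:ℤ)).erase (-k), (2 * |t + j|) := by
          apply Finset.prod_nbij' (fun j => -j) (fun j => -j)
          · intro j hj
            simp only [Finset.mem_erase, Finset.mem_Icc] at hj ⊢
            omega
          · intro j hj
            simp only [Finset.mem_erase, Finset.mem_Icc] at hj ⊢
            omega
          · intro j _; ring
          · intro j _; ring
          · intro j _
            push_cast
            ring_nf
        rw [hrefl]
        apply core d (-k) (by omega) (by omega)
        · intro j; positivity
        · intro j h1 h2
          have hj : -(k:ℝ) + 1 ≤ j := by exact_mod_cast h1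
          have h4 : t + (j:ℝ) ≤ |t + j| := le_abs_self _
          push_cast
          linarith
        · intro j h1 h2
          have hj : (j:ℝ) + 1 ≤ -(k:ℝ) := by exact_mod_cast h2
          have h4 : -(t + (j:ℝ)) ≤ |t + j| := neg_le_abs _
          push_cast
          linarith
    rw [← Finset.mul_prod_erase _ _ hmem]
    have hprod : ∏ j ∈ (Finset.Icc (-(d:ℤ)) (d:ℤ)).erase k, (2 * |t - (j:ℝ)|)
        = 4^d * ∏ j ∈ (Finset.Icc (-(d:ℤ)) (d:ℤ)).erase k, |t - (j:ℝ)| := by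
      rw [Finset.prod_mul_distrib, Finset.prod_const, hcard, pow_mul]
      norm_num
    rw [hprod] at key
    calc ((2*d).factorial:ℝ) * |t - (k:ℝ)|
        ≤ (4^d * ∏ j ∈ (Finset.Icc (-(d:ℤ)) (d:ℤ)).erase k, |t - (j:ℝ)|) * |t - (k:ℝ)| :=
          mul_le_mul_of_nonneg_right key (abs_nonneg _)
      _ = 4^d * (|t - (k:ℝ)| * ∏ j ∈ (Finset.Icc (-(d:ℤ)) (d:ℤ)).erase k, |t - (j:ℝ)|) := by ring
  · have key : ((2*d+1).factorial : ℝ) ≤ ∏ j ∈ Finset.Icc (-(d:ℤ)) (d:ℤ), (2*|t - (j:ℝ)|) := by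
      rcases (by omega : (d:ℤ) < k ∨ k < -(d:ℤ)) with h | h
      · calc ((2*d+1).factorial : ℝ)
            ≤ ((∏ i ∈ Finset.range (2*d+1), (2*i+1) : ℕ) : ℝ) := by exact_mod_cast natO (2*d+1)
          _ = ∏ j ∈ Finset.Icc (-(d:ℤ)) (d:ℤ), (((2*((d:ℤ)-j)+1).toNat : ℕ) : ℝ) := by
              rw [← Nat.cast_prod]
              congr 1
              rw [prod_Icc_int]
              have hcard : ((d:ℤ) + 1 - (-(d:ℤ))).toNat = 2*d+1 := by omega
              rw [hcard, ← Finset.prod_range_reflect (fun i => 2*i+1) (2*d+1)]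
              apply Finset.prod_congr rfl
              intro i hi
              simp only [Finset.mem_range] at hi
              omega
          _ ≤ ∏ j ∈ Finset.Icc (-(d:ℤ)) (d:ℤ), (2*|t - (j:ℝ)|) := by
              apply Finset.prod_le_prod
              · intro j _; positivity
              · intro j hj
                simp only [Finset.mem_Icc] at hj
                have hj2 : (j:ℝ) ≤ (d:ℝ) := by exact_mod_cast hj.2
                have hk2 : (d:ℝ) + 1 ≤ (k:ℝ) := by exact_mod_cast h
                have h3 : (((2*((d:ℤ)-j)+1).toNat : ℕ) : ℝ) = ((2*((d:ℤ)-j)+1 : ℤ) : ℝ) := by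
                  rw [← Int.cast_natCast, Int.toNat_of_nonneg (by omega)]
                have h4 : t - (j:ℝ) ≤ |t - j| := le_abs_self _
                rw [h3]
                push_cast
                linarith
      · calc ((2*d+1).factorial : ℝ)
            ≤ ((∏ i ∈ Finset.range (2*d+1), (2*i+1) : ℕ) : ℝ) := by exact_mod_cast natO (2*d+1)
          _ = ∏ j ∈ Finset.Icc (-(d:ℤ)) (d:ℤ), (((2*(j+(d:ℤ))+1).toNat : ℕ) : ℝ) := by
              rw [← Nat.cast_prod]
              congr 1
              rw [prod_Icc_int]
              have hcard : ((d:ℤ) + 1 - (-(d:ℤ))).toNat = 2*d+1 := by omega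
              rw [hcard]
              apply Finset.prod_congr rfl
              intro i hi
              simp only [Finset.mem_range] at hi
              omega
          _ ≤ ∏ j ∈ Finset.Icc (-(d:ℤ)) (d:ℤ), (2*|t - (j:ℝ)|) := by
              apply Finset.prod_le_prod
              · intro j _; positivity
              · intro j hj
                simp only [Finset.mem_Icc] at hj
                have hj2 : -(d:ℝ) ≤ (j:ℝ) := by exact_mod_cast hj.1
                have hk2 : (k:ℝ) + 1 ≤ -(d:ℝ) := by exact_mod_cast (by omega : k + 1 ≤ -(d:ℤ))
                have h3 : (((2*(j+(d:ℤ))+1).toNat : ℕ) : ℝ) = ((2*(j+(d:ℤ))+1 : ℤ) : ℝ) := by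
                  rw [← Int.cast_natCast, Int.toNat_of_nonneg (by omega)]
                have h4 : (j:ℝ) - t ≤ |t - j| := by rw [abs_sub_comm]; exact le_abs_self _
                rw [h3]
                push_cast
                linarith
    have hcard : (Finset.Icc (-(d:ℤ)) (d:ℤ)).card = 2*d+1 := by
      rw [Int.card_Icc]; omega
    have hprod : ∏ j ∈ Finset.Icc (-(d:ℤ)) (d:ℤ), (2*|t - (j:ℝ)|)
        = 2 * 4^d * ∏ j ∈ Finset.Icc (-(d:ℤ)) (d:ℤ), |t - (j:ℝ)| := by
      rw [Finset.prod_mul_distrib, Finset.prod_const, hcard]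
      have : (2:ℝ)^(2*d+1) = 2*4^d := by
        rw [pow_succ, pow_mul]; norm_num; ring
      rw [this]
    rw [hprod] at key
    have e1 : ((2*d).factorial:ℝ) ≤ ((2*d+1).factorial:ℝ) := by
      exact_mod_cast Nat.factorial_le (by omega)
    have e3 : |t - (k:ℝ)| ≤ 1/2 := abs_le.mpr ⟨by linarith, hs1⟩
    have hP : (0:ℝ) ≤ ∏ j ∈ Finset.Icc (-(d:ℤ)) (d:ℤ), |t - (j:ℝ)| :=
      Finset.prod_nonneg (fun j _ => abs_nonneg _)
    calc ((2*d).factorial:ℝ) * |t - (k:ℝ)|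
        ≤ ((2*d).factorial:ℝ) * (1/2) := mul_le_mul_of_nonneg_left e3 hfac.le
      _ ≤ (2 * 4^d * ∏ j ∈ Finset.Icc (-(d:ℤ)) (d:ℤ), |t - (j:ℝ)|) * (1/2) := by
          have := e1.trans key
          linarith
      _ = 4^d * ∏ j ∈ Finset.Icc (-(d:ℤ)) (d:ℤ), |t - (j:ℝ)| := by ring

theorem almost_integer_of_Pd_small {n : ℕ} (d : ℕ) :
    (∀ t : ℝ, |t - ⌈t - 1 / 2⌉| ≤ |Pd d t|) ∧
    ∀ (δ : ℝ), 0 < δ → δ ≤ 1 / 2 →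
      ∀ (f : (Fin n → ZMod 2) → ℝ), (∀ x, |Pd d (f x)| ≤ δ) →
        ∃ fZ : (Fin n → ZMod 2) → ℤ, ∀ x, |f x - fZ x| ≤ δ := by
  have h1 : ∀ t : ℝ, |t - ⌈t - 1 / 2⌉| ≤ |Pd d t| := by
    intro t
    have hb := main_bound d t
    have hfac : (0:ℝ) < (Nat.factorial (2*d) : ℝ) := by
      exact_mod_cast (2*d).factorial_pos
    have habs : |Pd d t| = 4^d / (Nat.factorial (2*d) : ℝ)
        * ∏ j ∈ Finset.Icc (-(d:ℤ)) (d:ℤ), |t - (j:ℝ)| := by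
      rw [Pd, abs_mul, Finset.abs_prod]
      congr 1
      rw [abs_div, abs_of_pos hfac, abs_of_pos (by positivity : (0:ℝ) < 4^d)]
    rw [habs, div_mul_eq_mul_div, le_div_iff₀ hfac]
    linarith [hb]
  refine ⟨h1, ?_⟩
  intro δ hδ0 hδ f hf
  exact ⟨fun x => ⌈f x - 1/2⌉, fun x => le_trans (h1 (f x)) (hf x)⟩
end

section
/- There is an absolute constant C such that the following holds. Suppose f : 𝔽₂ⁿ → ℝ satisfies ‖f − f_ℤ‖_∞ ≤ ε for some integer-valued f_ℤ, ‖f‖_A ≤ M with M ≥ 1/2, η ≤ 2^{−CM(1+log M)}·ε, and f is η-spectrally supported on a subgroup H. Then there exist integer-valued functions g_ℤ, h_ℤ with ‖ψ_H f − g_ℤ‖_∞ ≤ 2^{CM}ε and ‖(f − ψ_H f) − h_ℤ‖_∞ ≤ 2^{CM}ε. -/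
open scoped Classical
open Finset

noncomputable def smooth {n : ℕ} (H : Submodule (ZMod 2) (Fin n → ZMod 2))
    (f : (Fin n → ZMod 2) → ℝ) (x : Fin n → ZMod 2) : ℝ :=
  (∑ y : H, f (x + y)) / (Fintype.card H)


namespace SPAI
variable {n : ℕ}

noncomputable def chi (r x : Fin n → ZMod 2) : ℝ := (-1) ^ (∑ i, r i * x i).val

lemma neg_one_pow_mod_two (k : ℕ) : (-1 : ℝ) ^ (k % 2) = (-1) ^ k := by
  conv_rhs => rw [← Nat.div_add_mod k 2]
  rw [pow_add, pow_mul, neg_one_sq, one_pow, one_mul]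

lemma neg_one_pow_val_add (a b : ZMod 2) :
    (-1 : ℝ) ^ ((a + b).val) = (-1) ^ a.val * (-1) ^ b.val := by
  rw [ZMod.val_add, neg_one_pow_mod_two, pow_add]

lemma Gadd_self (x : Fin n → ZMod 2) : x + x = 0 := by
  funext i
  simp only [Pi.add_apply, Pi.zero_apply]
  have : ∀ a : ZMod 2, a + a = 0 := by decide
  exact this _

lemma Gneg_eq (x : Fin n → ZMod 2) : -x = x :=
  neg_eq_of_add_eq_zero_right (Gadd_self x)

lemma Gsub_eq_add (x y : Fin n → ZMod 2) : x - y = x + y := by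
  rw [sub_eq_add_neg, Gneg_eq]

lemma bf_add_right (r x y : Fin n → ZMod 2) :
    ∑ i, r i * (x + y) i = (∑ i, r i * x i) + ∑ i, r i * y i := by
  rw [← Finset.sum_add_distrib]
  exact Finset.sum_congr rfl fun i _ => by simp [mul_add]

lemma bf_add_left (r s x : Fin n → ZMod 2) :
    ∑ i, (r + s) i * x i = (∑ i, r i * x i) + ∑ i, s i * x i := by
  rw [← Finset.sum_add_distrib]
  exact Finset.sum_congr rfl fun i _ => by simp [add_mul]

lemma chi_add_right (r x y : Fin n → ZMod 2) : chi r (x + y) = chi r x * chi r y := by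
  unfold chi
  rw [bf_add_right, neg_one_pow_val_add]

lemma chi_add_left (r s x : Fin n → ZMod 2) : chi (r + s) x = chi r x * chi s x := by
  unfold chi
  rw [bf_add_left, neg_one_pow_val_add]

lemma chi_comm (r x : Fin n → ZMod 2) : chi r x = chi x r := by
  unfold chi
  congr 2
  exact Finset.sum_congr rfl fun i _ => mul_comm _ _

lemma chi_abs (r x : Fin n → ZMod 2) : |chi r x| = 1 := by
  unfold chi; rw [abs_pow, abs_neg, abs_one, one_pow]

lemma chi_zero_left (x : Fin n → ZMod 2) : chi 0 x = 1 := by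
  unfold chi
  have : (∑ i, (0 : Fin n → ZMod 2) i * x i) = 0 := by simp
  rw [this]; simp


lemma zmod2_ne_zero {a : ZMod 2} (h : a ≠ 0) : a = 1 := by
  revert h; revert a; decide

lemma chi_eq_one {r x : Fin n → ZMod 2} (h : ∑ i, r i * x i = 0) : chi r x = 1 := by
  unfold chi; rw [h]; simp

lemma chi_eq_neg_one {r x : Fin n → ZMod 2} (h : ∑ i, r i * x i ≠ 0) : chi r x = -1 := by
  unfold chi; rw [zmod2_ne_zero h, ZMod.val_one]; simp

lemma sum_chi_H_of_mem (H : Submodule (ZMod 2) (Fin n → ZMod 2)) {r : Fin n → ZMod 2}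
    (hr : r ∈ ann H) : ∑ y : H, chi r (y : Fin n → ZMod 2) = Fintype.card H := by
  rw [Finset.sum_congr rfl (fun y _ => chi_eq_one (hr y.1 y.2))]
  simp [Finset.card_univ]

lemma sum_chi_H_of_not_mem (H : Submodule (ZMod 2) (Fin n → ZMod 2)) {r : Fin n → ZMod 2}
    (hr : r ∉ ann H) : ∑ y : H, chi r (y : Fin n → ZMod 2) = 0 := by
  simp only [ann, Set.mem_setOf_eq, not_forall] at hr
  obtain ⟨x0, hx0, hbf⟩ := hr
  set y0 : H := ⟨x0, hx0⟩
  have key : ∑ y : H, chi r ((y0 + y : H) : Fin n → ZMod 2)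
      = ∑ y : H, chi r (y : Fin n → ZMod 2) :=
    Fintype.sum_equiv (Equiv.addLeft y0) _ _ (fun y => rfl)
  have h2 : ∀ y : H, chi r ((y0 + y : H) : Fin n → ZMod 2)
      = - chi r (y : Fin n → ZMod 2) := by
    intro y
    have : ((y0 + y : H) : Fin n → ZMod 2) = x0 + (y : Fin n → ZMod 2) := rfl
    rw [this, chi_add_right, chi_eq_neg_one hbf]
    ring
  rw [Finset.sum_congr rfl (fun y _ => h2 y), Finset.sum_neg_distrib] at key
  linarith [key]

lemma sum_chi_snd (r : Fin n → ZMod 2) :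
    ∑ x : Fin n → ZMod 2, chi r x
      = if r = 0 then (Fintype.card (Fin n → ZMod 2) : ℝ) else 0 := by
  by_cases h : r = 0
  · subst h
    simp only [if_true]
    rw [Finset.sum_congr rfl (fun x _ => chi_zero_left x)]
    simp [Finset.card_univ]
  · rw [if_neg h]
    have : ∃ i, r i ≠ 0 := by
      by_contra hc; push_neg at hc; exact h (funext fun i => hc i)
    obtain ⟨i, hi⟩ := this
    set x0 : Fin n → ZMod 2 := Pi.single i 1 with hx0
    have hbf : ∑ j, r j * x0 j ≠ 0 := by
      have : ∑ j, r j * x0 j = r i := by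
        rw [Finset.sum_eq_single i]
        · simp [hx0]
        · intro j _ hj; simp [hx0, Pi.single_eq_of_ne hj]
        · intro hmem; exact absurd (Finset.mem_univ i) hmem
      rw [this]; exact hi
    have key : ∑ x : Fin n → ZMod 2, chi r (x0 + x) = ∑ x : Fin n → ZMod 2, chi r x :=
      Fintype.sum_equiv (Equiv.addLeft x0) _ _ (fun y => rfl)
    have h2 : ∀ x, chi r (x0 + x) = - chi r x := by
      intro x; rw [chi_add_right, chi_eq_neg_one hbf]; ring
    rw [Finset.sum_congr rfl (fun y _ => h2 y), Finset.sum_neg_distrib] at key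
    linarith [key]

lemma sum_chi_fst (x : Fin n → ZMod 2) :
    ∑ r : Fin n → ZMod 2, chi r x
      = if x = 0 then (Fintype.card (Fin n → ZMod 2) : ℝ) else 0 := by
  rw [Finset.sum_congr rfl (fun r _ => chi_comm r x)]
  exact sum_chi_snd x

lemma ft_eq (f : (Fin n → ZMod 2) → ℝ) (r : Fin n → ZMod 2) :
    ft f r = (∑ x : Fin n → ZMod 2, f x * chi r x) / (Fintype.card (Fin n → ZMod 2)) := rfl

lemma cardG_pos : 0 < (Fintype.card (Fin n → ZMod 2) : ℝ) := by
  exact_mod_cast Fintype.card_pos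

lemma inversion (f : (Fin n → ZMod 2) → ℝ) (x : Fin n → ZMod 2) :
    ∑ r : Fin n → ZMod 2, ft f r * chi r x = f x := by
  have hc := @cardG_pos n
  have h1 : ∀ r, ft f r * chi r x
      = (∑ z : Fin n → ZMod 2, f z * chi r (z + x)) / (Fintype.card (Fin n → ZMod 2)) := by
    intro r
    rw [ft_eq, div_mul_eq_mul_div, Finset.sum_mul]
    congr 1
    exact Finset.sum_congr rfl fun z _ => by rw [chi_add_right, mul_assoc]
  rw [Finset.sum_congr rfl (fun r _ => h1 r), ← Finset.sum_div, Finset.sum_comm]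
  have h2 : ∀ z, (∑ r : Fin n → ZMod 2, f z * chi r (z + x))
      = if z = x then f z * (Fintype.card (Fin n → ZMod 2) : ℝ) else 0 := by
    intro z
    rw [← Finset.mul_sum, sum_chi_fst]
    by_cases hz : z = x
    · subst hz; simp [Gadd_self]
    · have hne : z + x ≠ 0 := by
        intro hcontra
        apply hz
        have h3 := congrArg (· + x) hcontra
        simpa [add_assoc, Gadd_self] using h3
      rw [if_neg hne, if_neg hz, mul_zero]
  rw [Finset.sum_congr rfl (fun z _ => h2 z), Finset.sum_ite_eq' Finset.univ x
    (fun z => f z * (Fintype.card (Fin n → ZMod 2) : ℝ))]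
  rw [if_pos (Finset.mem_univ x)]
  field_simp


lemma cardH_pos (H : Submodule (ZMod 2) (Fin n → ZMod 2)) : 0 < (Fintype.card H : ℝ) := by
  exact_mod_cast Fintype.card_pos

lemma sum_chi_H (H : Submodule (ZMod 2) (Fin n → ZMod 2)) (r : Fin n → ZMod 2) :
    ∑ y : H, chi r (y : Fin n → ZMod 2) = if r ∈ ann H then (Fintype.card H : ℝ) else 0 := by
  by_cases hr : r ∈ ann H
  · rw [if_pos hr, sum_chi_H_of_mem H hr]
  · rw [if_neg hr, sum_chi_H_of_not_mem H hr]

lemma smooth_eq (H : Submodule (ZMod 2) (Fin n → ZMod 2)) (f : (Fin n → ZMod 2) → ℝ)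
    (x : Fin n → ZMod 2) :
    smooth H f x = ∑ r : Fin n → ZMod 2, (if r ∈ ann H then ft f r else 0) * chi r x := by
  have hc := cardH_pos H
  unfold smooth
  have h1 : ∀ y : H, f (x + (y : Fin n → ZMod 2))
      = ∑ r : Fin n → ZMod 2, ft f r * chi r x * chi r (y : Fin n → ZMod 2) := by
    intro y
    rw [← inversion f (x + (y : Fin n → ZMod 2))]
    exact Finset.sum_congr rfl fun r _ => by rw [chi_add_right, mul_assoc]
  rw [Finset.sum_congr rfl (fun y _ => h1 y), Finset.sum_comm]
  have h2 : ∀ r : Fin n → ZMod 2, (∑ y : H, ft f r * chi r x * chi r (y : Fin n → ZMod 2))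
      = ft f r * chi r x * (if r ∈ ann H then (Fintype.card H : ℝ) else 0) := by
    intro r; rw [← Finset.mul_sum, sum_chi_H]
  rw [Finset.sum_congr rfl (fun r _ => h2 r), Finset.sum_div]
  refine Finset.sum_congr rfl fun r _ => ?_
  by_cases hr : r ∈ ann H
  · rw [if_pos hr, if_pos hr]
    field_simp
  · rw [if_neg hr, if_neg hr]
    simp

lemma smooth_shift (H : Submodule (ZMod 2) (Fin n → ZMod 2)) (f : (Fin n → ZMod 2) → ℝ)
    (x : Fin n → ZMod 2) (y0 : H) :
    smooth H f (x + (y0 : Fin n → ZMod 2)) = smooth H f x := by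
  unfold smooth
  congr 1
  have : ∀ y : H, f (x + ((y0 + y : H) : Fin n → ZMod 2))
      = f (x + (y0 : Fin n → ZMod 2) + (y : Fin n → ZMod 2)) := by
    intro y
    congr 1
    push_cast
    rw [add_assoc]
  exact Fintype.sum_equiv (Equiv.addLeft y0)
    (fun y => f (x + (y0 : Fin n → ZMod 2) + (y : Fin n → ZMod 2)))
    (fun y => f (x + (y : Fin n → ZMod 2))) (fun y => (this y).symm)


lemma Gcancel (s r : Fin n → ZMod 2) : s + (s + r) = r := by
  rw [← add_assoc, Gadd_self, zero_add]

lemma ann_add {H : Submodule (ZMod 2) (Fin n → ZMod 2)} {r s : Fin n → ZMod 2}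
    (hr : r ∈ ann H) (hs : s ∈ ann H) : r + s ∈ ann H := by
  intro x hx
  rw [bf_add_left, hr x hx, hs x hx, add_zero]

lemma ann_cancel {H : Submodule (ZMod 2) (Fin n → ZMod 2)} {r s : Fin n → ZMod 2}
    (hs : s ∈ ann H) : r + s ∈ ann H ↔ r ∈ ann H := by
  constructor
  · intro h
    have := ann_add h hs
    rwa [add_assoc, Gadd_self, add_zero] at this
  · intro h; exact ann_add h hs

noncomputable def ev (a : (Fin n → ZMod 2) → ℝ) (y : Fin n → ZMod 2) : ℝ :=
  ∑ r : Fin n → ZMod 2, a r * chi r y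

noncomputable def cnv (u v : (Fin n → ZMod 2) → ℝ) (r : Fin n → ZMod 2) : ℝ :=
  ∑ s : Fin n → ZMod 2, u s * v (r + s)

noncomputable def tmass (u : (Fin n → ZMod 2) → ℝ) : ℝ := ∑ r : Fin n → ZMod 2, |u r|

noncomputable def cmass (H : Submodule (ZMod 2) (Fin n → ZMod 2))
    (u : (Fin n → ZMod 2) → ℝ) (t : Fin n → ZMod 2) : ℝ :=
  ∑ r : Fin n → ZMod 2, if r + t ∈ ann H then |u r| else 0

lemma tmass_nonneg (u : (Fin n → ZMod 2) → ℝ) : 0 ≤ tmass u :=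
  Finset.sum_nonneg fun r _ => abs_nonneg _

lemma abs_ev_le (a : (Fin n → ZMod 2) → ℝ) (y : Fin n → ZMod 2) : |ev a y| ≤ tmass a := by
  refine (Finset.abs_sum_le_sum_abs _ _).trans ?_
  refine Finset.sum_le_sum fun r _ => ?_
  rw [abs_mul, chi_abs, mul_one]

lemma ev_cnv (u v : (Fin n → ZMod 2) → ℝ) (y : Fin n → ZMod 2) :
    ev (cnv u v) y = ev u y * ev v y := by
  unfold ev cnv
  calc ∑ r : Fin n → ZMod 2, (∑ s : Fin n → ZMod 2, u s * v (r + s)) * chi r y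
      = ∑ r : Fin n → ZMod 2, ∑ s : Fin n → ZMod 2, u s * v (r + s) * chi r y :=
        Finset.sum_congr rfl fun r _ => Finset.sum_mul _ _ _
    _ = ∑ s : Fin n → ZMod 2, ∑ r : Fin n → ZMod 2, u s * v (r + s) * chi r y :=
        Finset.sum_comm
    _ = ∑ s : Fin n → ZMod 2, ∑ t : Fin n → ZMod 2, u s * chi s y * (v t * chi t y) := by
        refine Finset.sum_congr rfl fun s _ => ?_
        refine (Fintype.sum_equiv (Equiv.addLeft s)
          (fun t => u s * chi s y * (v t * chi t y))
          (fun r => u s * v (r + s) * chi r y) ?_).symm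
        intro t
        simp only [Equiv.coe_addLeft]
        have h1 : s + t + s = t := by rw [add_comm s t, add_assoc, Gadd_self, add_zero]
        rw [h1, chi_add_left]
        ring
    _ = (∑ r : Fin n → ZMod 2, u r * chi r y) * ∑ r : Fin n → ZMod 2, v r * chi r y := by
        rw [Finset.sum_mul]
        exact Finset.sum_congr rfl fun s _ => (Finset.mul_sum _ _ _).symm

lemma tmass_cnv (u v : (Fin n → ZMod 2) → ℝ) : tmass (cnv u v) ≤ tmass u * tmass v := by
  unfold tmass cnv
  calc ∑ r : Fin n → ZMod 2, |∑ s : Fin n → ZMod 2, u s * v (r + s)|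
      ≤ ∑ r : Fin n → ZMod 2, ∑ s : Fin n → ZMod 2, |u s| * |v (r + s)| := by
        refine Finset.sum_le_sum fun r _ => ?_
        refine (Finset.abs_sum_le_sum_abs _ _).trans ?_
        exact le_of_eq (Finset.sum_congr rfl fun s _ => abs_mul _ _)
    _ = ∑ s : Fin n → ZMod 2, |u s| * ∑ r : Fin n → ZMod 2, |v (r + s)| := by
        rw [Finset.sum_comm]
        exact Finset.sum_congr rfl fun s _ => (Finset.mul_sum _ _ _).symm
    _ = (∑ s : Fin n → ZMod 2, |u s|) * ∑ r : Fin n → ZMod 2, |v r| := by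
        rw [Finset.sum_mul]
        refine Finset.sum_congr rfl fun s _ => ?_
        congr 1
        exact Fintype.sum_equiv (Equiv.addRight s) _ _ (fun r => rfl)

lemma cmass_cnv {H : Submodule (ZMod 2) (Fin n → ZMod 2)} {η : ℝ}
    (u v : (Fin n → ZMod 2) → ℝ) (hv : ∀ s, cmass H v s ≤ η) (t : Fin n → ZMod 2) :
    cmass H (cnv u v) t ≤ tmass u * η := by
  unfold cmass cnv tmass
  calc (∑ r : Fin n → ZMod 2, if r + t ∈ ann H then |∑ s : Fin n → ZMod 2, u s * v (r + s)| else 0)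
      ≤ ∑ r : Fin n → ZMod 2, if r + t ∈ ann H
          then ∑ s : Fin n → ZMod 2, |u s| * |v (r + s)| else 0 := by
        refine Finset.sum_le_sum fun r _ => ?_
        by_cases h : r + t ∈ ann H
        · rw [if_pos h, if_pos h]
          refine (Finset.abs_sum_le_sum_abs _ _).trans ?_
          exact le_of_eq (Finset.sum_congr rfl fun s _ => abs_mul _ _)
        · rw [if_neg h, if_neg h]
    _ = ∑ r : Fin n → ZMod 2, ∑ s : Fin n → ZMod 2,
          (if r + t ∈ ann H then |u s| * |v (r + s)| else 0) := by
        refine Finset.sum_congr rfl fun r _ => ?_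
        by_cases h : r + t ∈ ann H <;> simp [h]
    _ = ∑ s : Fin n → ZMod 2, ∑ r : Fin n → ZMod 2,
          (if r + t ∈ ann H then |u s| * |v (r + s)| else 0) := Finset.sum_comm
    _ = ∑ s : Fin n → ZMod 2, |u s| * ∑ r : Fin n → ZMod 2,
          (if r + t ∈ ann H then |v (r + s)| else 0) := by
        refine Finset.sum_congr rfl fun s _ => ?_
        rw [Finset.mul_sum]
        refine Finset.sum_congr rfl fun r _ => ?_
        by_cases h : r + t ∈ ann H
        · rw [if_pos h, if_pos h]
        · rw [if_neg h, if_neg h, mul_zero]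
    _ ≤ ∑ s : Fin n → ZMod 2, |u s| * η := by
        refine Finset.sum_le_sum fun s _ => ?_
        refine mul_le_mul_of_nonneg_left ?_ (abs_nonneg _)
        refine le_trans (le_of_eq ?_) (hv (s + t))
        unfold cmass
        refine Fintype.sum_equiv (Equiv.addRight s) _ _ ?_
        intro r
        simp only [Equiv.coe_addRight]
        have hre : r + s + (s + t) = r + t := by rw [add_assoc, Gcancel]
        simp only [hre]
    _ = (∑ s : Fin n → ZMod 2, |u s|) * η := by rw [Finset.sum_mul]


lemma pow_self_le_exp_mul_factorial : ∀ k : ℕ, (k : ℝ) ^ k ≤ Real.exp k * k.factorial := by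
  intro k
  induction k with
  | zero => simp
  | succ k ih =>
    rcases Nat.eq_zero_or_pos k with hk | hk
    · subst hk
      simp only [Nat.cast_one, pow_one, Nat.factorial]
      have := Real.add_one_le_exp (1 : ℝ)
      push_cast
      nlinarith [Real.exp_pos (1:ℝ)]
    · have hkR : (0 : ℝ) < k := by exact_mod_cast hk
      have h1 : ((k + 1 : ℕ) : ℝ) ^ k ≤ Real.exp 1 * (k : ℝ) ^ k := by
        have h2 : ((k + 1 : ℕ) : ℝ) = (k : ℝ) * (1 + 1 / k) := by
          field_simp
          exact Nat.cast_succ k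
        rw [h2, mul_pow]
        have h3 : (1 + 1 / (k:ℝ)) ^ k ≤ Real.exp 1 := by
          have h4 : (1 : ℝ) + 1 / k ≤ Real.exp (1 / k) := by
            have := Real.add_one_le_exp (1 / (k:ℝ))
            linarith
          have h5 : (1 + 1 / (k:ℝ)) ^ k ≤ Real.exp (1 / k) ^ k := by
            apply pow_le_pow_left₀ (by positivity) h4
          refine h5.trans (le_of_eq ?_)
          rw [← Real.exp_nat_mul]
          congr 1
          field_simp
        calc (k:ℝ) ^ k * (1 + 1/(k:ℝ)) ^ k ≤ (k:ℝ)^k * Real.exp 1 := by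
              exact mul_le_mul_of_nonneg_left h3 (by positivity)
          _ = Real.exp 1 * (k:ℝ)^k := by ring
      have h6 : ((k + 1 : ℕ) : ℝ) ^ (k + 1) = ((k+1:ℕ):ℝ) ^ k * ((k+1:ℕ):ℝ) := by ring
      rw [h6]
      have h7 : ((k+1:ℕ):ℝ) ^ k * ((k+1:ℕ):ℝ) ≤ Real.exp 1 * (k:ℝ)^k * ((k+1:ℕ):ℝ) :=
        mul_le_mul_of_nonneg_right h1 (by positivity)
      refine h7.trans ?_
      have h8 : Real.exp 1 * (k:ℝ)^k * ((k+1:ℕ):ℝ)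
          ≤ Real.exp 1 * (Real.exp k * k.factorial) * ((k+1:ℕ):ℝ) := by
        refine mul_le_mul_of_nonneg_right (mul_le_mul_of_nonneg_left ih (le_of_lt (Real.exp_pos 1))) (by positivity)
      refine h8.trans (le_of_eq ?_)
      rw [Nat.factorial_succ]
      have h9 : Real.exp ((k:ℝ) + 1) = Real.exp 1 * Real.exp (k:ℝ) := by
        rw [Real.exp_add]; ring
      push_cast
      rw [h9]
      ring

lemma prod_abs_Icc : ∀ N : ℕ,
    (∏ m ∈ (Finset.Icc (-(N:ℤ)) (N:ℤ)).erase 0, (|m| : ℝ)) = ((N.factorial : ℝ)) ^ 2 := by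
  intro N
  induction N with
  | zero => simp
  | succ N ih =>
    have hset : Finset.Icc (-(N+1:ℕ):ℤ) ((N+1:ℕ):ℤ)
        = insert (-(N+1:ℕ):ℤ) (insert ((N+1:ℕ):ℤ) (Finset.Icc (-(N:ℕ):ℤ) (N:ℤ))) := by
      ext m
      simp only [Finset.mem_Icc, Finset.mem_insert]
      push_cast
      omega
    have h1 : (-(N+1:ℕ):ℤ) ≠ 0 := by push_cast; omega
    have h2 : ((N+1:ℕ):ℤ) ≠ 0 := by push_cast; omega
    have hne1 : (-(N+1:ℕ):ℤ) ∉ insert ((N+1:ℕ):ℤ) (Finset.Icc (-(N:ℕ):ℤ) (N:ℤ)) := by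
      simp only [Finset.mem_insert, Finset.mem_Icc]
      push_cast
      omega
    have hne2 : ((N+1:ℕ):ℤ) ∉ Finset.Icc (-(N:ℕ):ℤ) (N:ℤ) := by
      simp only [Finset.mem_Icc]
      push_cast
      omega
    have hA : (-(N+1:ℕ):ℤ) ∉ insert ((N+1:ℕ):ℤ) ((Finset.Icc (-(N:ℕ):ℤ) ((N:ℕ):ℤ)).erase 0) := by
      simp only [Finset.mem_insert, Finset.mem_erase, Finset.mem_Icc]
      push_cast
      omega
    have hB : ((N+1:ℕ):ℤ) ∉ (Finset.Icc (-(N:ℕ):ℤ) ((N:ℕ):ℤ)).erase 0 := by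
      simp only [Finset.mem_erase, Finset.mem_Icc]
      push_cast
      omega
    rw [hset, Finset.erase_insert_of_ne h1, Finset.erase_insert_of_ne h2,
      Finset.prod_insert hA, Finset.prod_insert hB, ih]
    rw [Nat.factorial_succ]
    push_cast
    rw [abs_neg, abs_of_nonneg (by positivity : (0:ℝ) ≤ (N:ℝ)+1)]
    ring


lemma exp_one_sq_le : (Real.exp 1) ^ 2 ≤ 8 := by
  have h := Real.exp_one_lt_d9
  nlinarith [Real.exp_pos 1]

lemma final_numeric {θ P0 ε : ℝ} {N : ℕ} (hN : 1 ≤ N)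
    (h2 : |θ| * ((N.factorial : ℝ) ^ 2 / 2 ^ (2 * N)) ≤ |P0|)
    (h3 : |P0| ≤ ε * (2 * (N : ℝ)) ^ (2 * N) + ε) (hε : 0 ≤ ε) :
    |θ| ≤ 2 ^ (7 * N + 1) * ε := by
  have hNR : (1 : ℝ) ≤ (N : ℝ) := by exact_mod_cast hN
  have hNN : (1 : ℝ) ≤ (N : ℝ) ^ (2 * N) := one_le_pow₀ hNR
  have hF : (0 : ℝ) < (N.factorial : ℝ) := by exact_mod_cast N.factorial_pos
  have hFsq : ((N : ℝ) ^ N) ^ 2 ≤ (Real.exp N * N.factorial) ^ 2 := by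
    have h := pow_self_le_exp_mul_factorial N
    have h0 : (0 : ℝ) ≤ (N : ℝ) ^ N := by positivity
    nlinarith
  have hexp : (Real.exp (N : ℝ)) ^ 2 ≤ 8 ^ N := by
    rw [← Real.exp_one_pow, ← pow_mul, mul_comm N 2, pow_mul]
    exact pow_le_pow_left₀ (by positivity) exp_one_sq_le N
  have e4 : |θ| * (N.factorial : ℝ) ^ 2 ≤ |P0| * 2 ^ (2 * N) := by
    have h := mul_le_mul_of_nonneg_right h2 (by positivity : (0:ℝ) ≤ 2 ^ (2 * N))
    calc |θ| * (N.factorial : ℝ) ^ 2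
        = |θ| * ((N.factorial : ℝ) ^ 2 / 2 ^ (2 * N)) * 2 ^ (2 * N) := by field_simp
      _ ≤ |P0| * 2 ^ (2 * N) := h
  have hmp : (2 * (N : ℝ)) ^ (2 * N) = 2 ^ (2 * N) * (N : ℝ) ^ (2 * N) := mul_pow _ _ _
  have h8 : (8:ℝ) ^ N = 2 ^ (3 * N) := by
    rw [show (8:ℝ) = 2^3 by norm_num, ← pow_mul]
  have hle : (2:ℝ) ^ (2*N) + 1 ≤ 2 ^ (2*N+1) := by
    have h1 : (1:ℝ) ≤ 2 ^ (2*N) := one_le_pow₀ one_le_two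
    rw [pow_succ]
    linarith
  have hps : (2:ℝ)^(3*N) * (2^(2*N+1) * 2^(2*N)) = 2^(7*N+1) := by
    rw [← pow_add, ← pow_add]
    congr 1
    omega
  have key : |θ| * (N : ℝ) ^ (2 * N) ≤ 2 ^ (7 * N + 1) * ε * (N : ℝ) ^ (2 * N) := by
    calc |θ| * (N : ℝ) ^ (2 * N)
        = |θ| * ((N : ℝ) ^ N) ^ 2 := by rw [← pow_mul, mul_comm N 2]
      _ ≤ |θ| * (Real.exp N * N.factorial) ^ 2 :=
          mul_le_mul_of_nonneg_left hFsq (abs_nonneg _)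
      _ = (Real.exp (N:ℝ))^2 * (|θ| * (N.factorial : ℝ)^2) := by ring
      _ ≤ 8^N * (|P0| * 2^(2*N)) := by
          refine mul_le_mul hexp e4 ?_ (by positivity)
          positivity
      _ ≤ 8^N * ((ε * (2*(N:ℝ))^(2*N) + ε) * 2^(2*N)) := by
          refine mul_le_mul_of_nonneg_left ?_ (by positivity)
          exact mul_le_mul_of_nonneg_right h3 (by positivity)
      _ ≤ 8^N * ((ε * (2^(2*N) * (N:ℝ)^(2*N)) + ε * (N:ℝ)^(2*N)) * 2^(2*N)) := by
          refine mul_le_mul_of_nonneg_left ?_ (by positivity)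
          refine mul_le_mul_of_nonneg_right ?_ (by positivity)
          rw [hmp]
          have hεN : ε ≤ ε * (N:ℝ)^(2*N) := le_mul_of_one_le_right hε hNN
          linarith
      _ = 2^(3*N) * (ε * (N:ℝ)^(2*N) * ((2^(2*N)+1) * 2^(2*N))) := by
          rw [h8]
          ring
      _ ≤ 2^(3*N) * (ε * (N:ℝ)^(2*N) * (2^(2*N+1) * 2^(2*N))) := by
          refine mul_le_mul_of_nonneg_left ?_ (by positivity)
          refine mul_le_mul_of_nonneg_left ?_ (mul_nonneg hε (by positivity))
          exact mul_le_mul_of_nonneg_right hle (by positivity)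
      _ = 2^(7*N+1) * ε * (N:ℝ)^(2*N) := by
          rw [← hps]
          ring
  have hpos : (0:ℝ) < (N : ℝ) ^ (2 * N) := by positivity
  exact le_of_mul_le_mul_right key hpos


lemma key_eta {M : ℝ} (hM : 1/2 ≤ M) {N : ℕ} (hN : (N:ℝ) ≤ M + 3) :
    (2*((N:ℝ)+1)*(max 1 M))^(2*N+1) ≤ (2:ℝ) ^ (300*M*(1+Real.log M)) := by
  set m := max 1 M with hm
  have hm1 : (1:ℝ) ≤ m := le_max_left _ _
  have hMm : M ≤ m := le_max_right _ _
  have hm0 : (0:ℝ) < m := lt_of_lt_of_le one_pos hm1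
  have hM0 : (0:ℝ) < M := by linarith
  have hB : 2*((N:ℝ)+1)*m ≤ 16*m^2 := by nlinarith
  have hBpos : (0:ℝ) < 2*((N:ℝ)+1)*m := by positivity
  have step1 : (2*((N:ℝ)+1)*m)^(2*N+1) ≤ (16*m^2)^(2*N+1) :=
    pow_le_pow_left₀ hBpos.le hB _
  have hpos16 : (0:ℝ) < 16*m^2 := by positivity
  have step2 : (16*m^2)^(2*N+1) = Real.exp (((2*N+1 : ℕ):ℝ) * Real.log (16*m^2)) := by
    rw [Real.exp_nat_mul, Real.exp_log hpos16]
  have step3 : (2:ℝ) ^ (300*M*(1+Real.log M)) =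
      Real.exp (Real.log 2 * (300*M*(1+Real.log M))) := by
    rw [Real.rpow_def_of_pos (by norm_num : (0:ℝ) < 2)]
  have hlog16 : Real.log (16*m^2) = 4*Real.log 2 + 2*Real.log m := by
    rw [Real.log_mul (by norm_num) (by positivity),
      show (16:ℝ) = 2^4 by norm_num, Real.log_pow, Real.log_pow]
    push_cast
    ring
  have hlogm0 : 0 ≤ Real.log m := Real.log_nonneg hm1
  have hl2a : 0.6931471803 < Real.log 2 := Real.log_two_gt_d9
  have hl2b : Real.log 2 < 0.6931471808 := Real.log_two_lt_d9
  have hexp : ((2*N+1 : ℕ):ℝ) * Real.log (16*m^2)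
      ≤ Real.log 2 * (300*M*(1+Real.log M)) := by
    rw [hlog16]
    have hDc : ((2*N+1 : ℕ):ℝ) = 2*(N:ℝ)+1 := by push_cast; ring
    rw [hDc]
    by_cases hM1 : 1 ≤ M
    · have hmM : m = M := max_eq_right hM1
      rw [hmM]
      have hlogM0 : 0 ≤ Real.log M := Real.log_nonneg hM1
      have hD : 2*(N:ℝ)+1 ≤ 9*M := by nlinarith
      have h9 : (2*(N:ℝ)+1)*(4*Real.log 2+2*Real.log M)
          ≤ 9*M*(4*Real.log 2+2*Real.log M) := by
        refine mul_le_mul_of_nonneg_right hD ?_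
        positivity
      nlinarith [mul_nonneg (mul_nonneg hM0.le hlogM0) (by linarith : (0:ℝ) ≤ Real.log 2),
        mul_nonneg hM0.le (by linarith : (0:ℝ) ≤ Real.log 2)]
    · push_neg at hM1
      have hmM : m = 1 := max_eq_left hM1.le
      rw [hmM, Real.log_one]
      have hD : 2*(N:ℝ)+1 ≤ 9 := by nlinarith
      have hlogM : -Real.log 2 ≤ Real.log M := by
        have h1 : Real.log (1/2) ≤ Real.log M := by
          apply Real.log_le_log (by norm_num) hM
        rwa [one_div, Real.log_inv] at h1
      have hprod : (1/2)*(1 - Real.log 2) ≤ M*(1+Real.log M) := by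
        refine mul_le_mul hM (by linarith) (by linarith) (by linarith)
      nlinarith [mul_le_mul_of_nonneg_right hprod (by linarith : (0:ℝ) ≤ Real.log 2)]
  calc (2*((N:ℝ)+1)*m)^(2*N+1) ≤ (16*m^2)^(2*N+1) := step1
    _ = Real.exp (((2*N+1 : ℕ):ℝ) * Real.log (16*m^2)) := step2
    _ ≤ Real.exp (Real.log 2 * (300*M*(1+Real.log M))) := Real.exp_le_exp.mpr hexp
    _ = (2:ℝ) ^ (300*M*(1+Real.log M)) := step3.symm


end SPAI

open SPAI in
set_option maxHeartbeats 2000000 in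
theorem smooth_preserves_almost_integer :
    ∃ C : ℝ, 0 < C ∧ ∀ (n : ℕ) (f : (Fin n → ZMod 2) → ℝ) (fZ : (Fin n → ZMod 2) → ℤ)
      (ε M η : ℝ) (H : Submodule (ZMod 2) (Fin n → ZMod 2)),
      0 < ε → ε < 1 / 2 → (∀ x, |f x - fZ x| ≤ ε) → aNorm f ≤ M → (1 : ℝ) / 2 ≤ M →
      η ≤ (2 : ℝ) ^ (-(C * M * (1 + Real.log M))) * ε →
      (∀ r ∉ ann H, ∑ r' ∈ Finset.univ.filter (fun r' => r' - r ∈ ann H), |ft f r'| ≤ η) →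
      ∃ gZ hZ : (Fin n → ZMod 2) → ℤ,
        (∀ x, |smooth H f x - gZ x| ≤ (2 : ℝ) ^ (C * M) * ε) ∧
        (∀ x, |(f x - smooth H f x) - hZ x| ≤ (2 : ℝ) ^ (C * M) * ε) := by
  refine ⟨300, by norm_num, ?_⟩
  intro n f fZ ε M η H hε hεhalf hfZ hA hM hη hspec
  have hM0 : (0:ℝ) < M := by linarith
  set η' := max η 0 with hη'def
  have hη'0 : (0:ℝ) ≤ η' := le_max_right _ _
  have hη'le : η' ≤ (2:ℝ) ^ (-(300*M*(1+Real.log M))) * ε := by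
    refine max_le hη ?_
    positivity
  have hspec' : ∀ r ∉ ann H,
      (∑ r' ∈ Finset.univ.filter (fun r' => r' - r ∈ ann H), |ft f r'|) ≤ η' :=
    fun r hr => le_trans (hspec r hr) (le_max_left _ _)
  set N : ℕ := ⌈M⌉₊ + 2 with hNdef
  have hN1 : 1 ≤ N := by omega
  have hNM : M + 2 ≤ (N:ℝ) := by
    have h := Nat.le_ceil M
    rw [hNdef]
    push_cast
    linarith
  have hNM' : (N:ℝ) ≤ M + 3 := by
    have h := Nat.ceil_lt_add_one hM0.le
    rw [hNdef]
    push_cast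
    linarith
  have hA' : (∑ r : Fin n → ZMod 2, |ft f r|) ≤ M := hA
  -- MAIN CLAIM
  have key : ∀ x, |smooth H f x - ((round (smooth H f x) : ℤ) : ℝ)| ≤ 2^(7*N+1) * ε := by
    intro x
    set ψ := smooth H f x with hψ
    set z : ℤ := round ψ with hz
    set θ := ψ - (z:ℝ) with hθ
    have hθhalf : |θ| ≤ 1/2 := abs_sub_round ψ
    set a : (Fin n → ZMod 2) → ℝ :=
      fun r => if r ∈ ann H then 0 else ft f r * chi r x with ha
    have habs : ∀ r, |a r| ≤ |ft f r| := by
      intro r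
      simp only [ha]
      by_cases hr : r ∈ ann H
      · rw [if_pos hr]
        simp
      · rw [if_neg hr, abs_mul, chi_abs, mul_one]
    have hga : ∀ y : Fin n → ZMod 2,
        f (x + y) - smooth H f (x + y) = ev a y := by
      intro y
      have h1 : f (x + y) = ∑ r : Fin n → ZMod 2, ft f r * chi r x * chi r y := by
        rw [← inversion f (x + y)]
        exact Finset.sum_congr rfl fun r _ => by rw [chi_add_right, mul_assoc]
      have h2 : smooth H f (x + y)
          = ∑ r : Fin n → ZMod 2, (if r ∈ ann H then ft f r else 0) * chi r x * chi r y := by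
        rw [smooth_eq H f (x + y)]
        exact Finset.sum_congr rfl fun r _ => by rw [chi_add_right, mul_assoc]
      rw [h1, h2, ← Finset.sum_sub_distrib]
      refine Finset.sum_congr rfl fun r _ => ?_
      by_cases hr : r ∈ ann H
      · simp [ha, hr]
      · simp only [ha, hr, if_false]
        ring
    have htma : tmass a ≤ M :=
      le_trans (Finset.sum_le_sum (fun r _ => habs r)) hA'
    have hcma : ∀ t, cmass H a t ≤ η' := by
      intro t
      by_cases ht : t ∈ ann H
      · have hzero : cmass H a t = 0 := by
          unfold cmass
          refine Finset.sum_eq_zero fun r _ => ?_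
          by_cases hrt : r + t ∈ ann H
          · rw [if_pos hrt]
            have hr : r ∈ ann H := (ann_cancel ht).mp hrt
            simp [ha, hr]
          · rw [if_neg hrt]
        rw [hzero]
        exact hη'0
      · have hb := hspec' t ht
        rw [Finset.sum_filter] at hb
        refine le_trans ?_ hb
        unfold cmass
        refine Finset.sum_le_sum fun r _ => ?_
        have hiff : (r + t ∈ ann H) ↔ (r - t ∈ ann H) := by rw [Gsub_eq_add]
        by_cases hrt : r - t ∈ ann H
        · rw [if_pos (hiff.mpr hrt), if_pos hrt]
          exact habs r
        · rw [if_neg (fun hc => hrt (hiff.mp hc)), if_neg hrt]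
    set c : ℕ → (Fin n → ZMod 2) → ℝ :=
      fun k => (fun u => cnv u a)^[k]
        (fun r => if r = (0 : Fin n → ZMod 2) then (1:ℝ) else 0) with hcdef
    have hc0 : c 0 = fun r => if r = (0 : Fin n → ZMod 2) then (1:ℝ) else 0 := rfl
    have hcsucc : ∀ k, c (k+1) = cnv (c k) a := fun k =>
      Function.iterate_succ_apply' _ _ _
    have hev : ∀ k (y : Fin n → ZMod 2), ev (c k) y = (ev a y)^k := by
      intro k
      induction k with
      | zero =>
        intro y
        rw [hc0]
        unfold ev
        have h1 : ∀ r : Fin n → ZMod 2,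
            (if r = (0 : Fin n → ZMod 2) then (1:ℝ) else 0) * chi r y
            = if r = (0 : Fin n → ZMod 2) then chi r y else 0 := by
          intro r
          by_cases hr : r = 0 <;> simp [hr]
        rw [Finset.sum_congr rfl fun r _ => h1 r, Finset.sum_ite_eq' Finset.univ,
          if_pos (Finset.mem_univ _), chi_zero_left, pow_zero]
      | succ k ih =>
        intro y
        rw [hcsucc, ev_cnv, ih, pow_succ]
    have htmc : ∀ k, tmass (c k) ≤ M ^ k := by
      intro k
      induction k with
      | zero =>
        rw [hc0, pow_zero]
        unfold tmass
        have h1 : ∀ r : Fin n → ZMod 2,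
            |if r = (0 : Fin n → ZMod 2) then (1:ℝ) else 0|
            = if r = (0 : Fin n → ZMod 2) then (1:ℝ) else 0 := by
          intro r
          by_cases hr : r = 0 <;> simp [hr]
        rw [Finset.sum_congr rfl fun r _ => h1 r, Finset.sum_ite_eq' Finset.univ,
          if_pos (Finset.mem_univ _)]
      | succ k ih =>
        rw [hcsucc, pow_succ]
        exact le_trans (tmass_cnv (c k) a)
          (mul_le_mul ih htma (tmass_nonneg a) (pow_nonneg hM0.le k))
    have hcm : ∀ k, cmass H (c (k+1)) 0 ≤ M^k * η' := by
      intro k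
      rw [hcsucc]
      exact le_trans (cmass_cnv (c k) a hcma 0)
        (mul_le_mul_of_nonneg_right (htmc k) hη'0)
    set cH := (Fintype.card H : ℝ) with hcHdef
    have hcH : 0 < cH := cardH_pos H
    set μ : ℕ → ℝ := fun k => (∑ y : H, (ev a (y : Fin n → ZMod 2))^k) / cH with hμdef
    have hμ0 : μ 0 = 1 := by
      simp only [hμdef, pow_zero]
      rw [Finset.sum_const, Finset.card_univ, nsmul_eq_mul, mul_one]
      field_simp
      exact hcHdef.symm
    have hμsum : ∀ k, μ k = ∑ r : Fin n → ZMod 2, (if r ∈ ann H then c k r else 0) := by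
      intro k
      simp only [hμdef]
      rw [Finset.sum_congr rfl (fun (y : H) _ => (hev k (y : Fin n → ZMod 2)).symm)]
      unfold ev
      rw [Finset.sum_comm]
      have h2 : ∀ r : Fin n → ZMod 2, (∑ y : H, c k r * chi r (y : Fin n → ZMod 2))
          = c k r * (if r ∈ ann H then cH else 0) := by
        intro r
        rw [← Finset.mul_sum, sum_chi_H]
      rw [Finset.sum_congr rfl (fun r _ => h2 r), Finset.sum_div]
      refine Finset.sum_congr rfl fun r _ => ?_
      by_cases hr : r ∈ ann H
      · rw [if_pos hr, if_pos hr]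
        field_simp
      · rw [if_neg hr, if_neg hr]
        simp
    have hμb : ∀ k, |μ (k+1)| ≤ M^k * η' := by
      intro k
      rw [hμsum]
      refine le_trans (Finset.abs_sum_le_sum_abs _ _) (le_trans (le_of_eq ?_) (hcm k))
      unfold cmass
      refine Finset.sum_congr rfl fun r _ => ?_
      rw [add_zero]
      by_cases hr : r ∈ ann H <;> simp [hr]
    have hsm : ∀ y : H, smooth H f (x + (y : Fin n → ZMod 2)) = ψ :=
      fun y => smooth_shift H f x y
    have hgy : ∀ y : H, f (x + (y : Fin n → ZMod 2)) = ψ + ev a (y : Fin n → ZMod 2) := by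
      intro y
      have h := hga (y : Fin n → ZMod 2)
      rw [hsm y] at h
      linarith
    have hgyM : ∀ y : H, |ev a (y : Fin n → ZMod 2)| ≤ M :=
      fun y => le_trans (abs_ev_le a _) htma
    set I := Finset.Icc (-(N:ℤ)) (N:ℤ) with hI
    have hIcard : I.card = 2*N+1 := by
      rw [hI, Int.card_Icc]
      omega
    set ny : H → ℤ := fun y => fZ (x + (y : Fin n → ZMod 2)) - z with hny
    have hnymem : ∀ y : H, ny y ∈ I := by
      intro y
      have h1 := hfZ (x + (y : Fin n → ZMod 2))
      have h2 := hgyM y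
      have h3 := hgy y
      have habs1 : |(ny y : ℝ)| ≤ M + 1 := by
        have e : (ny y : ℝ) = (ev a (y : Fin n → ZMod 2))
            - (f (x + (y : Fin n → ZMod 2)) - (fZ (x + (y : Fin n → ZMod 2)) : ℝ)) + θ := by
          simp only [hny]
          push_cast
          rw [hθ]
          have h3' : ev a (y : Fin n → ZMod 2) = f (x + (y : Fin n → ZMod 2)) - ψ := by
            linarith
          rw [h3']
          ring
        rw [e]
        have ha1 := abs_le.mp h2
        have ha2 := abs_le.mp h1
        have ha3 := abs_le.mp hθhalf
        rw [abs_le]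
        constructor <;> linarith
      rw [hI, Finset.mem_Icc]
      have hb := abs_le.mp habs1
      have hc1 : ((ny y : ℤ) : ℝ) ≤ (N:ℝ) := by linarith
      have hc2 : -(N:ℝ) ≤ ((ny y : ℤ) : ℝ) := by linarith
      constructor
      · exact_mod_cast hc2
      · exact_mod_cast hc1
    set coef : Finset ℤ → ℝ := fun S => ∏ m ∈ I \ S, (-((m:ℝ) - θ)) with hcoef
    have hPident : ∀ t : ℝ, (∏ m ∈ I, (t - ((m:ℝ) - θ)))
        = ∑ S ∈ I.powerset, t ^ S.card * coef S := by
      intro t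
      calc (∏ m ∈ I, (t - ((m:ℝ) - θ)))
          = ∏ m ∈ I, (t + (-((m:ℝ) - θ))) :=
            Finset.prod_congr rfl fun m _ => by ring
        _ = ∑ S ∈ I.powerset, (∏ _m ∈ S, t) * ∏ m ∈ I \ S, (-((m:ℝ) - θ)) :=
            Finset.prod_add _ _ _
        _ = ∑ S ∈ I.powerset, t ^ S.card * coef S :=
            Finset.sum_congr rfl fun S _ => by rw [Finset.prod_const]
    have hEident : (∑ y : H, ∏ m ∈ I, (ev a (y : Fin n → ZMod 2) - ((m:ℝ) - θ))) / cH
        = ∑ S ∈ I.powerset, coef S * μ S.card := by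
      rw [Finset.sum_congr rfl (fun (y : H) _ => hPident (ev a (y : Fin n → ZMod 2)))]
      rw [Finset.sum_comm, Finset.sum_div]
      refine Finset.sum_congr rfl fun S _ => ?_
      simp only [hμdef]
      rw [← Finset.sum_mul]
      ring
    set P0 := ∏ m ∈ I, ((0:ℝ) - ((m:ℝ) - θ)) with hP0
    have hS0 : coef ∅ * μ 0 = P0 := by
      rw [hμ0, mul_one, hP0]
      simp only [hcoef, Finset.sdiff_empty]
      exact Finset.prod_congr rfl fun m _ => by ring
    have hsplit : P0 = (∑ y : H, ∏ m ∈ I, (ev a (y : Fin n → ZMod 2) - ((m:ℝ) - θ))) / cH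
        - ∑ S ∈ I.powerset.erase ∅, coef S * μ S.card := by
      rw [hEident, ← Finset.add_sum_erase _ _ (Finset.empty_mem_powerset I)]
      simp only [Finset.card_empty]
      rw [hS0]
      ring
    have hEb : |(∑ y : H, ∏ m ∈ I, (ev a (y : Fin n → ZMod 2) - ((m:ℝ) - θ))) / cH|
        ≤ ε * (2*(N:ℝ))^(2*N) := by
      rw [abs_div, abs_of_pos hcH, div_le_iff₀ hcH]
      refine le_trans (Finset.abs_sum_le_sum_abs _ _) ?_
      have hb : ∀ y : H, |∏ m ∈ I, (ev a (y : Fin n → ZMod 2) - ((m:ℝ) - θ))|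
          ≤ ε * (2*(N:ℝ))^(2*N) := by
        intro y
        have hm := hnymem y
        rw [← Finset.mul_prod_erase I _ hm, abs_mul]
        have h1 : |ev a (y : Fin n → ZMod 2) - (((ny y):ℝ) - θ)| ≤ ε := by
          have h3 := hgy y
          have e : ev a (y : Fin n → ZMod 2) - (((ny y):ℝ) - θ)
              = f (x + (y : Fin n → ZMod 2)) - (fZ (x + (y : Fin n → ZMod 2)) : ℝ) := by
            simp only [hny]
            push_cast
            rw [hθ]
            linarith
          rw [e]
          exact hfZ _
        have h2 : |∏ m ∈ I.erase (ny y), (ev a (y : Fin n → ZMod 2) - ((m:ℝ) - θ))|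
            ≤ (2*(N:ℝ))^(2*N) := by
          rw [Finset.abs_prod]
          have hbound : ∀ m ∈ I.erase (ny y),
              |ev a (y : Fin n → ZMod 2) - ((m:ℝ) - θ)| ≤ 2*(N:ℝ) := by
            intro m hmm
            have hmI : m ∈ I := Finset.mem_of_mem_erase hmm
            rw [hI, Finset.mem_Icc] at hmI
            have hmr1 : -(N:ℝ) ≤ (m:ℝ) := by exact_mod_cast hmI.1
            have hmr2 : (m:ℝ) ≤ (N:ℝ) := by exact_mod_cast hmI.2
            have hg := abs_le.mp (hgyM y)
            have hth := abs_le.mp hθhalf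
            rw [abs_le]
            constructor <;> nlinarith
          refine le_trans (Finset.prod_le_prod (fun m _ => abs_nonneg _) hbound) ?_
          rw [Finset.prod_const, Finset.card_erase_of_mem hm, hIcard]
          have : 2*N+1-1 = 2*N := by omega
          rw [this]
        exact mul_le_mul h1 h2 (abs_nonneg _) hε.le
      refine le_trans (Finset.sum_le_sum fun y _ => hb y) ?_
      rw [Finset.sum_const, Finset.card_univ, nsmul_eq_mul]
      exact le_of_eq (mul_comm _ _)
    have hTb : |∑ S ∈ I.powerset.erase ∅, coef S * μ S.card| ≤ ε := by
      set mx := max 1 M with hmx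
      have hmx1 : (1:ℝ) ≤ mx := le_max_left _ _
      have hMmx : M ≤ mx := le_max_right _ _
      have hterm : ∀ S ∈ I.powerset.erase ∅,
          |coef S * μ S.card| ≤ ((N:ℝ)+1)^(2*N+1) * (mx^(2*N+1) * η') := by
        intro S hS
        obtain ⟨hSne, hSp⟩ := Finset.mem_erase.mp hS
        have hSsub : S ⊆ I := Finset.mem_powerset.mp hSp
        rw [abs_mul]
        have hc1 : |coef S| ≤ ((N:ℝ)+1)^(2*N+1) := by
          simp only [hcoef]
          rw [Finset.abs_prod]
          have hbound : ∀ m ∈ I \ S, |(-((m:ℝ) - θ))| ≤ (N:ℝ)+1 := by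
            intro m hmm
            have hmI : m ∈ I := (Finset.mem_sdiff.mp hmm).1
            rw [hI, Finset.mem_Icc] at hmI
            have hmr1 : -(N:ℝ) ≤ (m:ℝ) := by exact_mod_cast hmI.1
            have hmr2 : (m:ℝ) ≤ (N:ℝ) := by exact_mod_cast hmI.2
            have hth := abs_le.mp hθhalf
            rw [abs_le]
            constructor <;> nlinarith
          refine le_trans (Finset.prod_le_prod (fun m _ => abs_nonneg _) hbound) ?_
          rw [Finset.prod_const]
          have hN1R : (1:ℝ) ≤ (N:ℝ) := by exact_mod_cast hN1
          refine pow_le_pow_right₀ (by linarith : (1:ℝ) ≤ (N:ℝ)+1) ?_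
          calc (I \ S).card ≤ I.card := Finset.card_le_card (Finset.sdiff_subset)
            _ = 2*N+1 := hIcard
        obtain ⟨k, hk⟩ : ∃ k, S.card = k + 1 := by
          have : S.card ≠ 0 := fun h => hSne (Finset.card_eq_zero.mp h)
          exact ⟨S.card - 1, by omega⟩
        rw [hk]
        have h2 := hμb k
        have hkle : k ≤ 2*N+1 := by
          have h4 : S.card ≤ I.card := Finset.card_le_card hSsub
          rw [hIcard] at h4
          omega
        have h3 : M^k ≤ mx^(2*N+1) := by
          calc M^k ≤ mx^k := pow_le_pow_left₀ hM0.le hMmx k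
            _ ≤ mx^(2*N+1) := pow_le_pow_right₀ hmx1 hkle
        calc |coef S| * |μ (k+1)| ≤ ((N:ℝ)+1)^(2*N+1) * (M^k * η') :=
              mul_le_mul hc1 h2 (abs_nonneg _) (by positivity)
          _ ≤ ((N:ℝ)+1)^(2*N+1) * (mx^(2*N+1) * η') := by
              refine mul_le_mul_of_nonneg_left ?_ (by positivity)
              exact mul_le_mul_of_nonneg_right h3 hη'0
      refine le_trans (Finset.abs_sum_le_sum_abs _ _) ?_
      refine le_trans (Finset.sum_le_sum hterm) ?_
      rw [Finset.sum_const, nsmul_eq_mul]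
      have hcard2 : (((I.powerset.erase ∅).card : ℕ) : ℝ) ≤ 2^(2*N+1) := by
        have h1 : (I.powerset.erase ∅).card ≤ I.powerset.card :=
          Finset.card_le_card (Finset.erase_subset _ _)
        rw [Finset.card_powerset, hIcard] at h1
        calc (((I.powerset.erase ∅).card : ℕ) : ℝ) ≤ ((2^(2*N+1) : ℕ) : ℝ) :=
              Nat.cast_le.mpr h1
          _ = 2^(2*N+1) := by push_cast; ring
      have hBD : (2*((N:ℝ)+1)*mx)^(2*N+1) ≤ (2:ℝ)^(300*M*(1+Real.log M)) :=
        key_eta hM hNM'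
      have hfin : (2:ℝ)^(300*M*(1+Real.log M)) * η' ≤ ε := by
        have h3 : (0:ℝ) < (2:ℝ)^(300*M*(1+Real.log M)) :=
          Real.rpow_pos_of_pos (by norm_num) _
        calc (2:ℝ)^(300*M*(1+Real.log M)) * η'
            ≤ (2:ℝ)^(300*M*(1+Real.log M)) * ((2:ℝ)^(-(300*M*(1+Real.log M))) * ε) :=
              mul_le_mul_of_nonneg_left hη'le h3.le
          _ = ε := by
              rw [← mul_assoc, ← Real.rpow_add (by norm_num : (0:ℝ) < 2)]
              simp
      calc (((I.powerset.erase ∅).card : ℕ) : ℝ)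
            * (((N:ℝ)+1)^(2*N+1) * (mx^(2*N+1) * η'))
          ≤ 2^(2*N+1) * (((N:ℝ)+1)^(2*N+1) * (mx^(2*N+1) * η')) :=
            mul_le_mul_of_nonneg_right hcard2 (by positivity)
        _ = (2*((N:ℝ)+1)*mx)^(2*N+1) * η' := by
            rw [mul_pow, mul_pow]
            ring
        _ ≤ (2:ℝ)^(300*M*(1+Real.log M)) * η' :=
            mul_le_mul_of_nonneg_right hBD hη'0
        _ ≤ ε := hfin
    have hth : |θ| * ((N.factorial:ℝ)^2 / 2^(2*N)) ≤ |P0| := by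
      rw [hP0, Finset.abs_prod]
      have h0I : (0:ℤ) ∈ I := by
        rw [hI, Finset.mem_Icc]
        omega
      rw [← Finset.mul_prod_erase I _ h0I]
      have h1 : |(0:ℝ) - (((0:ℤ):ℝ) - θ)| = |θ| := by norm_num
      rw [h1]
      refine mul_le_mul_of_nonneg_left ?_ (abs_nonneg θ)
      have h2 : ((N.factorial:ℝ)^2 / 2^(2*N)) = ∏ m ∈ I.erase 0, (|(m:ℝ)|/2) := by
        rw [Finset.prod_div_distrib, Finset.prod_const,
          Finset.card_erase_of_mem h0I, hIcard]
        have hrw : 2*N+1-1 = 2*N := by omega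
        rw [hrw, hI, prod_abs_Icc N]
      rw [h2]
      refine Finset.prod_le_prod (fun m _ => by positivity) (fun m hmm => ?_)
      have hmne : m ≠ 0 := (Finset.mem_erase.mp hmm).1
      have h3 : (1:ℝ) ≤ |(m:ℝ)| := by
        have h4 : (1:ℤ) ≤ |m| := by
          have := abs_pos.mpr hmne
          omega
        calc (1:ℝ) ≤ ((|m| : ℤ) : ℝ) := by exact_mod_cast h4
          _ = |(m:ℝ)| := by push_cast; ring
      have ht2 := abs_le.mp hθhalf
      have h4 : |(m:ℝ)| - |θ| ≤ |(0:ℝ) - ((m:ℝ)-θ)| := by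
        have e : (0:ℝ) - ((m:ℝ)-θ) = θ - (m:ℝ) := by ring
        rw [e, abs_sub_comm θ ((m:ℝ))]
        exact abs_sub_abs_le_abs_sub (m:ℝ) θ
      have h5 : |θ| ≤ 1/2 := hθhalf
      linarith
    have hP0b : |P0| ≤ ε * (2*(N:ℝ))^(2*N) + ε := by
      rw [hsplit]
      refine le_trans (abs_sub _ _) ?_
      exact add_le_add hEb hTb
    have := final_numeric hN1 hth hP0b hε.le
    exact this
  -- FINISH
  have hNM300a : (7*N+1 : ℕ) ≤ 300*M ∨ True := Or.inr trivial
  have hpowle : ∀ k : ℕ, (k:ℝ) ≤ 300*M → (2:ℝ)^(k:ℕ) ≤ (2:ℝ)^((300:ℝ)*M) := by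
    intro k hk
    rw [← Real.rpow_natCast 2 k]
    exact Real.rpow_le_rpow_of_exponent_le one_le_two hk
  have hexp1 : ((7*N+1 : ℕ) : ℝ) ≤ 300*M := by
    have hc : ((7*N+1 : ℕ) : ℝ) = 7*(N:ℝ)+1 := by push_cast; ring
    rw [hc]
    linarith
  have hexp2 : ((7*N+2 : ℕ) : ℝ) ≤ 300*M := by
    have hc : ((7*N+2 : ℕ) : ℝ) = 7*(N:ℝ)+2 := by push_cast; ring
    rw [hc]
    linarith
  refine ⟨fun x => round (smooth H f x), fun x => fZ x - round (smooth H f x), ?_, ?_⟩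
  · intro x
    refine le_trans (key x) ?_
    exact mul_le_mul_of_nonneg_right (hpowle _ hexp1) hε.le
  · intro x
    have h1 := key x
    have h2 := hfZ x
    have e : (f x - smooth H f x) - ((fZ x - round (smooth H f x) : ℤ) : ℝ)
        = (f x - (fZ x : ℝ)) - (smooth H f x - ((round (smooth H f x) : ℤ) : ℝ)) := by
      push_cast
      ring
    rw [e]
    refine le_trans (abs_sub _ _) ?_
    have h3 : (1:ℝ) ≤ 2^(7*N+1) := one_le_pow₀ one_le_two
    have h4 : ε + 2^(7*N+1) * ε ≤ 2^(7*N+2) * ε := by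
      have h5 : (2:ℝ)^(7*N+2) = 2 * 2^(7*N+1) := by
        rw [pow_succ]
        ring
      nlinarith
    refine le_trans (add_le_add h2 h1) (le_trans h4 ?_)
    exact mul_le_mul_of_nonneg_right (hpowle _ hexp2) hε.le
end

section
/- Suppose A ⊆ 𝔽₂ⁿ has density α and 𝔼 1_{A+A} ≤ K·𝔼 1_A, and let η ≤ 1/(2K⁴). With ν⁽⁴⁾ := 1_A ∗ 1_A ∗ 1_A ∗ 1_A and S_η := {x : ν⁽⁴⁾(x) ≥ ηα³}, we have 𝔼 1_{S_η} ≥ α/2 and ‖1_A ∗ 1_{S_η}‖_∞ ≥ ηα/2. -/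
open scoped Classical
open Finset

noncomputable def cnv {n : ℕ} (f g : (Fin n → ZMod 2) → ℝ) (x : Fin n → ZMod 2) : ℝ :=
  (∑ y : Fin n → ZMod 2, f y * g (x - y)) / (Fintype.card (Fin n → ZMod 2))

noncomputable def ind {n : ℕ} (A : Finset (Fin n → ZMod 2)) (x : Fin n → ZMod 2) : ℝ :=
  if x ∈ A then 1 else 0

noncomputable def density {n : ℕ} (A : Finset (Fin n → ZMod 2)) : ℝ :=
  (A.card : ℝ) / (Fintype.card (Fin n → ZMod 2))

section Helpers

variable {n : ℕ}

lemma my_Npos : (0:ℝ) < (Fintype.card (Fin n → ZMod 2) : ℝ) := by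
  exact_mod_cast Fintype.card_pos

lemma my_sub_comm (a b : Fin n → ZMod 2) : a - b = b - a := by
  funext i
  have h : ∀ x y : ZMod 2, x - y = y - x := by decide
  exact h _ _

lemma my_ind_nonneg (A : Finset (Fin n → ZMod 2)) (x : Fin n → ZMod 2) : 0 ≤ ind A x := by
  unfold ind; split_ifs <;> norm_num

lemma my_ind_le_one (A : Finset (Fin n → ZMod 2)) (x : Fin n → ZMod 2) : ind A x ≤ 1 := by
  unfold ind; split_ifs <;> norm_num

lemma my_sum_ind (A : Finset (Fin n → ZMod 2)) : ∑ x, ind A x = (A.card : ℝ) := by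
  unfold ind
  rw [Finset.sum_ite_mem, Finset.univ_inter, Finset.sum_const, nsmul_eq_mul, mul_one]

lemma my_sum_shift (f : (Fin n → ZMod 2) → ℝ) (x : Fin n → ZMod 2) :
    ∑ y, f (x - y) = ∑ y, f y := by
  exact Fintype.sum_bijective (fun y => x - y)
    (Function.Involutive.bijective (fun y => sub_sub_cancel x y)) _ _ (fun y => rfl)

lemma my_sum_shift' (f : (Fin n → ZMod 2) → ℝ) (y : Fin n → ZMod 2) :
    ∑ x, f (x - y) = ∑ x, f x := by
  simp_rw [fun x => congrArg f (my_sub_comm x y)]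
  exact my_sum_shift f y

lemma my_cnv_nonneg {f g : (Fin n → ZMod 2) → ℝ} (hf : ∀ x, 0 ≤ f x) (hg : ∀ x, 0 ≤ g x)
    (x : Fin n → ZMod 2) : 0 ≤ cnv f g x := by
  unfold cnv
  apply div_nonneg _ (le_of_lt my_Npos)
  exact Finset.sum_nonneg fun y _ => mul_nonneg (hf y) (hg _)

lemma my_cnv_le {g : (Fin n → ZMod 2) → ℝ} {C : ℝ} (hC : 0 ≤ C) (hg : ∀ x, g x ≤ C)
    (A : Finset (Fin n → ZMod 2)) (x : Fin n → ZMod 2) :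
    cnv g (ind A) x ≤ C * density A := by
  unfold cnv
  have h1 : ∑ y, g y * ind A (x - y) ≤ ∑ y, C * ind A (x - y) :=
    Finset.sum_le_sum fun y _ => mul_le_mul_of_nonneg_right (hg y) (my_ind_nonneg _ _)
  have h2 : ∑ y, C * ind A (x - y) = C * (A.card : ℝ) := by
    rw [← Finset.mul_sum, my_sum_shift (ind A) x, my_sum_ind]
  calc (∑ y, g y * ind A (x - y)) / (Fintype.card (Fin n → ZMod 2) : ℝ)
      ≤ (C * (A.card : ℝ)) / (Fintype.card (Fin n → ZMod 2) : ℝ) := by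
        gcongr
        exact h1.trans h2.le
    _ = C * density A := by unfold density; ring

lemma my_sum_cnv (f g : (Fin n → ZMod 2) → ℝ) :
    ∑ x, cnv f g x = (∑ x, f x) * (∑ x, g x) / (Fintype.card (Fin n → ZMod 2) : ℝ) := by
  unfold cnv
  rw [← Finset.sum_div]
  congr 1
  rw [Finset.sum_comm]
  simp_rw [← Finset.mul_sum]
  calc ∑ y, f y * ∑ x, g (x - y) = ∑ y, f y * ∑ x, g x := by
        simp_rw [fun y => my_sum_shift' g y]
    _ = (∑ x, f x) * (∑ x, g x) := by rw [← Finset.sum_mul]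

open scoped Pointwise in
lemma my_cnv_supp {f : (Fin n → ZMod 2) → ℝ} {T : Finset (Fin n → ZMod 2)}
    (hf : ∀ x, x ∉ T → f x = 0) (A : Finset (Fin n → ZMod 2)) (x : Fin n → ZMod 2)
    (hx : x ∉ T + A) : cnv f (ind A) x = 0 := by
  unfold cnv
  rw [div_eq_zero_iff]
  left
  apply Finset.sum_eq_zero
  intro y _
  by_cases hy : y ∈ T
  · by_cases hz : x - y ∈ A
    · exact absurd ((add_sub_cancel y x).symm ▸ Finset.add_mem_add hy hz) hx
    · simp [ind, hz]
  · simp [hf y hy]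

lemma my_exchange (f : (Fin n → ZMod 2) → ℝ) (A S : Finset (Fin n → ZMod 2)) :
    ∑ x ∈ S, cnv f (ind A) x = ∑ y, f y * cnv (ind A) (ind S) y := by
  unfold cnv
  rw [← Finset.sum_div]
  simp_rw [← mul_div_assoc, ← Finset.sum_div]
  congr 1
  rw [Finset.sum_comm]
  apply Finset.sum_congr rfl
  intro y _
  rw [← Finset.mul_sum]
  congr 1
  have key : ∑ x, ind A x * ind S (y - x) = ∑ x, ind A (y - x) * ind S x := by
    exact (Fintype.sum_bijective (fun x => y - x)
      (Function.Involutive.bijective (fun x => sub_sub_cancel y x)) _ _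
      (fun x => by rw [sub_sub_cancel])).symm
  rw [key]
  have h2 : ∀ x, ind A (y - x) * ind S x = if x ∈ S then ind A (x - y) else 0 := by
    intro x
    rw [my_sub_comm y x]
    unfold ind
    split_ifs <;> ring
  simp_rw [h2]
  rw [Finset.sum_ite_mem, Finset.univ_inter]

open scoped Pointwise in
lemma my_pluennecke {A : Finset (Fin n → ZMod 2)} {K : ℝ} (hA : A.Nonempty)
    (hd : ((A + A).card : ℝ) ≤ K * A.card) :
    ((A + A + A + A).card : ℝ) ≤ K ^ 4 * A.card := by
  have h4 : (4 : ℕ) • A = A + A + A + A := by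
    rw [show (4:ℕ) = 2 + 2 from rfl, add_nsmul, two_nsmul]
    abel
  have hq := Finset.pluennecke_ruzsa_inequality_nsmul_add hA A 4
  rw [h4] at hq
  have hcast : ((A + A + A + A).card : ℝ) ≤ ((A + A).card / A.card : ℝ) ^ 4 * A.card := by
    have := (NNRat.cast_le (K := ℝ)).2 hq
    push_cast at this
    convert this using 3
  have hApos : (0:ℝ) < A.card := by exact_mod_cast Finset.card_pos.2 hA
  have hK : ((A + A).card / A.card : ℝ) ≤ K := by
    rw [div_le_iff₀ hApos]
    exact hd
  calc ((A + A + A + A).card : ℝ) ≤ ((A + A).card / A.card : ℝ) ^ 4 * A.card := hcast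
    _ ≤ K ^ 4 * A.card := by
        apply mul_le_mul_of_nonneg_right _ hApos.le
        exact pow_le_pow_left₀ (div_nonneg (Nat.cast_nonneg _) (Nat.cast_nonneg _)) hK 4
end Helpers

open scoped Pointwise in
theorem S_eta_large {n : ℕ} (A : Finset (Fin n → ZMod 2)) (K η : ℝ)
    (hdoub : density (A + A) ≤ K * density A) (hη0 : 0 < η) (hη : η ≤ 1 / (2 * K ^ 4)) :
    density (Finset.univ.filter (fun x =>
        cnv (cnv (cnv (ind A) (ind A)) (ind A)) (ind A) x ≥ η * density A ^ 3))
      ≥ density A / 2 ∧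
    ∃ x : Fin n → ZMod 2,
      cnv (ind A) (ind (Finset.univ.filter (fun x =>
          cnv (cnv (cnv (ind A) (ind A)) (ind A)) (ind A) x ≥ η * density A ^ 3))) x
        ≥ η * density A / 2 := by
  have hN : (0:ℝ) < (Fintype.card (Fin n → ZMod 2) : ℝ) := my_Npos
  have hα0 : (0:ℝ) ≤ density A := by unfold density; positivity
  set ν2 := cnv (ind A) (ind A) with hν2
  set ν3 := cnv ν2 (ind A) with hν3
  set ν4 := cnv ν3 (ind A) with hν4
  set S := Finset.univ.filter (fun x => ν4 x ≥ η * density A ^ 3) with hS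
  have hnn2 : ∀ x, 0 ≤ ν2 x := by
    intro x; rw [hν2]; exact my_cnv_nonneg (my_ind_nonneg A) (my_ind_nonneg A) x
  have hnn3 : ∀ x, 0 ≤ ν3 x := by
    intro x; rw [hν3]; exact my_cnv_nonneg hnn2 (my_ind_nonneg A) x
  have hnn4 : ∀ x, 0 ≤ ν4 x := by
    intro x; rw [hν4]; exact my_cnv_nonneg hnn3 (my_ind_nonneg A) x
  rcases A.eq_empty_or_nonempty with rfl | hA
  · have hd0 : density (∅ : Finset (Fin n → ZMod 2)) = 0 := by unfold density; simp
    constructor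
    · have hfe : S = Finset.univ := by
        rw [hS]
        apply Finset.filter_true_of_mem
        intro x _
        rw [hd0]
        simpa using hnn4 x
      rw [hfe, hd0]
      unfold density
      rw [Finset.card_univ]
      norm_num
    · refine ⟨0, ?_⟩
      rw [hd0]
      have h0 : cnv (ind (∅ : Finset (Fin n → ZMod 2))) (ind S) 0 = 0 := by
        unfold cnv
        rw [div_eq_zero_iff]
        left
        apply Finset.sum_eq_zero
        intro y _
        simp [ind]
      rw [h0]
      norm_num
  · have hαpos : (0:ℝ) < density A := by
      unfold density
      exact div_pos (by exact_mod_cast Finset.card_pos.2 hA) hN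
    have hcard : (A.card : ℝ) = density A * (Fintype.card (Fin n → ZMod 2) : ℝ) := by
      unfold density; field_simp
    have hd' : ((A+A).card:ℝ) ≤ K * (A.card:ℝ) := by
      have h := hdoub
      unfold density at h
      rw [div_le_iff₀ hN] at h
      calc ((A+A).card:ℝ) ≤ K * ((A.card:ℝ)/(Fintype.card (Fin n → ZMod 2) : ℝ)) *
            (Fintype.card (Fin n → ZMod 2) : ℝ) := h
        _ = K * A.card := by field_simp
    have hApos : (0:ℝ) < A.card := by exact_mod_cast Finset.card_pos.2 hA
    have hK1 : (1:ℝ) ≤ K := by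
      have hle : (A.card:ℝ) ≤ ((A+A).card:ℝ) := by
        exact_mod_cast Finset.card_le_card_add_right hA
      nlinarith [hd', hle, hApos]
    have hK4pos : (0:ℝ) < K^4 := pow_pos (lt_of_lt_of_le one_pos hK1) 4
    have hηK : η * K^4 ≤ 1/2 := by
      rw [le_div_iff₀ (by positivity : (0:ℝ) < 2*K^4)] at hη
      linarith
    have hK14 : (1:ℝ) ≤ K^4 := by
      calc (1:ℝ) = 1^4 := by norm_num
        _ ≤ K^4 := pow_le_pow_left₀ zero_le_one hK1 4
    have hη2 : η ≤ 1/2 := by nlinarith [hηK, hK14, hη0]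
    -- pointwise bounds
    have hb2 : ∀ x, ν2 x ≤ 1 * density A := by
      intro x; rw [hν2]; exact my_cnv_le zero_le_one (my_ind_le_one A) A x
    have hb3 : ∀ x, ν3 x ≤ (1 * density A) * density A := by
      intro x; rw [hν3]
      exact my_cnv_le (mul_nonneg zero_le_one hα0) hb2 A x
    have hb4 : ∀ x, ν4 x ≤ ((1 * density A) * density A) * density A := by
      intro x; rw [hν4]
      exact my_cnv_le (mul_nonneg (mul_nonneg zero_le_one hα0) hα0) hb3 A x
    have hb4' : ∀ x, ν4 x ≤ density A ^ 3 := fun x => (hb4 x).trans_eq (by ring)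
    -- sums
    have s2 : ∑ x, ν2 x = density A^2 * (Fintype.card (Fin n → ZMod 2) : ℝ) := by
      rw [hν2, my_sum_cnv, my_sum_ind, hcard]
      field_simp
    have s3 : ∑ x, ν3 x = density A^3 * (Fintype.card (Fin n → ZMod 2) : ℝ) := by
      rw [hν3, my_sum_cnv, s2, my_sum_ind, hcard]
      field_simp
    have s4 : ∑ x, ν4 x = density A^4 * (Fintype.card (Fin n → ZMod 2) : ℝ) := by
      rw [hν4, my_sum_cnv, s3, my_sum_ind, hcard]
      field_simp
    -- support
    have hsupp2 : ∀ x, x ∉ A + A → ν2 x = 0 := by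
      intro x hx; rw [hν2]
      exact my_cnv_supp (fun z hz => by simp [ind, hz]) A x hx
    have hsupp3 : ∀ x, x ∉ A + A + A → ν3 x = 0 := by
      intro x hx; rw [hν3]
      exact my_cnv_supp hsupp2 A x hx
    have hsupp4 : ∀ x, x ∉ A + A + A + A → ν4 x = 0 := by
      intro x hx; rw [hν4]
      exact my_cnv_supp hsupp3 A x hx
    have hT : ((A+A+A+A).card:ℝ) ≤ K^4 * A.card := my_pluennecke hA hd'
    -- sum over the complement of S
    have hbad : ∑ x ∈ Finset.univ.filter (fun x => ¬ (ν4 x ≥ η * density A ^ 3)), ν4 x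
        ≤ η * density A ^ 3 * ((A+A+A+A).card:ℝ) := by
      have step1 : ∀ x ∈ Finset.univ.filter (fun x => ¬ (ν4 x ≥ η * density A ^ 3)),
          ν4 x ≤ (if x ∈ A+A+A+A then η * density A ^ 3 else 0) := by
        intro x hx
        have hlt := not_le.mp ((Finset.mem_filter.mp hx).2)
        split_ifs with hmem
        · exact hlt.le
        · exact (hsupp4 x hmem).le
      calc ∑ x ∈ Finset.univ.filter (fun x => ¬ (ν4 x ≥ η * density A ^ 3)), ν4 x
          ≤ ∑ x ∈ Finset.univ.filter (fun x => ¬ (ν4 x ≥ η * density A ^ 3)),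
              (if x ∈ A+A+A+A then η * density A ^ 3 else 0) := Finset.sum_le_sum step1
        _ ≤ ∑ x ∈ Finset.univ, (if x ∈ A+A+A+A then η * density A ^ 3 else 0) :=
            Finset.sum_le_sum_of_subset_of_nonneg (Finset.filter_subset _ _)
              (fun x _ _ => by
                split_ifs
                · exact mul_nonneg hη0.le (pow_nonneg hα0 3)
                · exact le_refl 0)
        _ = η * density A ^ 3 * ((A+A+A+A).card:ℝ) := by
            rw [Finset.sum_ite_mem, Finset.univ_inter, Finset.sum_const, nsmul_eq_mul]
            ring
    have hbad2 : η * density A ^ 3 * ((A+A+A+A).card:ℝ)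
        ≤ density A^4 * (Fintype.card (Fin n → ZMod 2) : ℝ) / 2 := by
      calc η * density A ^ 3 * ((A+A+A+A).card:ℝ)
          ≤ η * density A ^ 3 * (K^4 * A.card) :=
            mul_le_mul_of_nonneg_left hT (mul_nonneg hη0.le (pow_nonneg hα0 3))
        _ = (η * K^4) * (density A ^ 3 * A.card) := by ring
        _ ≤ (1/2) * (density A ^ 3 * A.card) :=
            mul_le_mul_of_nonneg_right hηK
              (mul_nonneg (pow_nonneg hα0 3) (Nat.cast_nonneg _))
        _ = density A^4 * (Fintype.card (Fin n → ZMod 2) : ℝ) / 2 := by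
            rw [hcard]; ring
    have hsplit := Finset.sum_filter_add_sum_filter_not Finset.univ
      (fun x => ν4 x ≥ η * density A ^ 3) ν4
    rw [← hS] at hsplit
    have hgood : density A^4 * (Fintype.card (Fin n → ZMod 2) : ℝ) / 2 ≤ ∑ x ∈ S, ν4 x := by
      have := s4
      linarith [hbad, hbad2, hsplit, this]
    have hcount : ∑ x ∈ S, ν4 x ≤ density A ^ 3 * S.card := by
      calc ∑ x ∈ S, ν4 x ≤ ∑ _x ∈ S, density A ^ 3 :=
            Finset.sum_le_sum (fun x _ => hb4' x)
        _ = density A ^ 3 * S.card := by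
            rw [Finset.sum_const, nsmul_eq_mul]; ring
    have hAcard2 : (A.card:ℝ) ≤ 2 * S.card := by
      have key : density A ^ 3 * (A.card:ℝ) ≤ density A ^ 3 * (2 * S.card) := by
        rw [hcard]
        nlinarith [hgood, hcount]
      exact le_of_mul_le_mul_left key (pow_pos hαpos 3)
    clear_value ν2 ν3 ν4 S
    constructor
    · show density A / 2 ≤ density S
      unfold density
      rw [div_div, div_le_div_iff₀ (mul_pos hN two_pos) hN]
      linarith only [mul_le_mul_of_nonneg_right hAcard2 hN.le]
    · by_contra hc
      push_neg at hc
      have hex := my_exchange ν3 A S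
      rw [← hν4] at hex
      have hub : ∑ y, ν3 y * cnv (ind A) (ind S) y ≤ ∑ y, ν3 y * (η * density A / 2) :=
        Finset.sum_le_sum fun y _ => mul_le_mul_of_nonneg_left (hc y).le (hnn3 y)
      have heq2 : ∑ y, ν3 y * (η * density A / 2)
          = density A^3 * (Fintype.card (Fin n → ZMod 2) : ℝ) * (η * density A / 2) := by
        rw [← Finset.sum_mul, s3]
      have hfin : density A^4 * (Fintype.card (Fin n → ZMod 2) : ℝ) / 2
          ≤ density A^3 * (Fintype.card (Fin n → ZMod 2) : ℝ) * (η * density A / 2) := by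
        calc density A^4 * (Fintype.card (Fin n → ZMod 2) : ℝ) / 2 ≤ ∑ x ∈ S, ν4 x := hgood
          _ = ∑ y, ν3 y * cnv (ind A) (ind S) y := hex
          _ ≤ _ := hub.trans_eq heq2
      have hP : (0:ℝ) < density A ^ 4 * (Fintype.card (Fin n → ZMod 2) : ℝ) :=
        mul_pos (pow_pos hαpos 4) hN
      have h2 : density A^3 * (Fintype.card (Fin n → ZMod 2) : ℝ) * (η * density A / 2)
          = η * (density A^4 * (Fintype.card (Fin n → ZMod 2) : ℝ)) / 2 := by ring
      rw [h2] at hfin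
      have h3 : η * (density A^4 * (Fintype.card (Fin n → ZMod 2) : ℝ))
          ≤ (1/2) * (density A^4 * (Fintype.card (Fin n → ZMod 2) : ℝ)) :=
        mul_le_mul_of_nonneg_right hη2 hP.le
      linarith only [hfin, h3, hP]
end

section
/- There exist absolute constants C, c > 0 such that: if A ⊆ 𝔽₂ⁿ satisfies 𝔼 1_{A+A} ≤ K·𝔼 1_A, then there is a subgroup H ≤ 𝔽₂ⁿ with 𝔼_{x∈A} 1_H(x) ≥ 2^{−C·K^C} and 𝔼_{x∈H} 1_A(x) ≥ c·K^{−C}. -/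
open scoped Classical Pointwise
open Finset

namespace FRaux

abbrev V (n : ℕ) := Fin n → ZMod 2

noncomputable def dotL {n : ℕ} (r : V n) : V n →ₗ[ZMod 2] ZMod 2 :=
  ∑ i, r i • LinearMap.proj i

lemma dotL_apply {n : ℕ} (r x : V n) : dotL r x = ∑ i, r i * x i := by
  simp [dotL, LinearMap.sum_apply, smul_eq_mul]

lemma dotL_comm {n : ℕ} (r x : V n) : dotL r x = dotL x r := by
  simp [dotL_apply, mul_comm]

lemma dotL_add_left {n : ℕ} (r s x : V n) : dotL (r + s) x = dotL r x + dotL s x := by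
  simp [dotL_apply, add_mul, Finset.sum_add_distrib]

lemma dotL_zero_left {n : ℕ} (x : V n) : dotL 0 x = 0 := by simp [dotL_apply]

noncomputable def sgn (t : ZMod 2) : ℝ := if t = 0 then 1 else -1

lemma zmod2_cases : ∀ t : ZMod 2, t = 0 ∨ t = 1 := by decide
lemma zmod2_ne_zero : ∀ t : ZMod 2, t ≠ 0 → t = 1 := by decide
lemma zmod2_add_self : ∀ t : ZMod 2, t + t = 0 := by decide

lemma sgn_zero : sgn 0 = 1 := by simp [sgn]
lemma sgn_one : sgn 1 = -1 := by norm_num [sgn]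
lemma sgn_add (a b : ZMod 2) : sgn (a + b) = sgn a * sgn b := by
  have h2 : (1 + 1 : ZMod 2) = 0 := by decide
  rcases zmod2_cases a with h | h <;> rcases zmod2_cases b with h' | h' <;>
    simp [h, h', sgn, h2, one_ne_zero]
lemma neg_one_le_sgn (t : ZMod 2) : -1 ≤ sgn t := by
  rcases zmod2_cases t with h | h <;> norm_num [h, sgn, one_ne_zero]

lemma card_V (n : ℕ) : Fintype.card (V n) = 2 ^ n := by
  simp [ZMod.card]

lemma addV_self {n : ℕ} (x : V n) : x + x = 0 := by
  funext i; exact zmod2_add_self (x i)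

lemma addV_eq_zero {n : ℕ} {x y : V n} (h : x + y = 0) : x = y := by
  have : x + (x + y) = x + 0 := by rw [h]
  rw [← add_assoc, addV_self, zero_add, add_zero] at this
  exact this.symm

lemma addV_eq_iff {n : ℕ} (x y : V n) : x + y = 0 ↔ x = y := by
  constructor
  · exact addV_eq_zero
  · rintro rfl; exact addV_self x

lemma sum_sgn_dotL {n : ℕ} (v : V n) (hv : v ≠ 0) : ∑ γ : V n, sgn (dotL γ v) = 0 := by
  obtain ⟨j, hj⟩ := Function.ne_iff.mp hv
  have hvj : v j = 1 := zmod2_ne_zero _ (by simpa using hj)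
  set e : V n := Pi.single j 1 with he
  have hdot : dotL e v = 1 := by
    rw [dotL_apply]
    have h1 : ∀ i ∈ (univ : Finset (Fin n)), e i * v i = if i = j then v j else 0 := by
      intro i _; by_cases h : i = j <;> simp [he, Pi.single_apply, h]
    rw [Finset.sum_congr rfl h1, Finset.sum_ite_eq' univ j (fun _ => v j)]
    simp [hvj]
  have key : ∀ γ : V n, sgn (dotL (e + γ) v) = - sgn (dotL γ v) := by
    intro γ
    rw [dotL_add_left, sgn_add, hdot, sgn_one]; ring
  have h1 : ∑ γ : V n, sgn (dotL (e + γ) v) = ∑ γ : V n, sgn (dotL γ v) :=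
    Fintype.sum_equiv (Equiv.addLeft e) _ _ (fun γ => rfl)
  have h2 : ∑ γ : V n, sgn (dotL (e + γ) v) = - ∑ γ : V n, sgn (dotL γ v) := by
    simp_rw [key]; rw [Finset.sum_neg_distrib]
  linarith [h1.symm.trans h2]

lemma sum_sgn_dotL_full {n : ℕ} (v : V n) :
    ∑ γ : V n, sgn (dotL γ v) = if v = 0 then (2:ℝ)^n else 0 := by
  by_cases hv : v = 0
  · subst hv
    have : ∀ γ : V n, sgn (dotL γ (0 : V n)) = 1 := by
      intro γ; rw [(dotL γ).map_zero, sgn_zero]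
    simp only [this, Finset.sum_const, card_univ, card_V, nsmul_eq_mul, mul_one, if_pos rfl]
    norm_num
  · rw [if_neg hv]; exact sum_sgn_dotL v hv

lemma card_dot_zero {n : ℕ} (v : V n) (hv : v ≠ 0) :
    2 * ((univ : Finset (V n)).filter fun r => dotL r v = 0).card = 2 ^ n := by
  have h0 := sum_sgn_dotL v hv
  have hsplit : ∑ γ : V n, sgn (dotL γ v)
      = ((univ.filter fun r => dotL r v = 0).card : ℝ)
        - ((univ.filter fun r => ¬ (dotL r v = 0)).card : ℝ) := by
    rw [← Finset.sum_filter_add_sum_filter_not univ (fun r => dotL r v = 0)]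
    have e1 : ∑ γ ∈ univ.filter (fun r => dotL r v = 0), sgn (dotL γ v)
        = ((univ.filter fun r => dotL r v = 0).card : ℝ) := by
      rw [Finset.sum_congr rfl (fun γ hγ => by
        rw [(Finset.mem_filter.mp hγ).2, sgn_zero])]
      simp
    have e2 : ∑ γ ∈ univ.filter (fun r => ¬ (dotL r v = 0)), sgn (dotL γ v)
        = -((univ.filter fun r => ¬ (dotL r v = 0)).card : ℝ) := by
      rw [Finset.sum_congr rfl (fun γ hγ => by
        have h := (Finset.mem_filter.mp hγ).2
        rw [zmod2_ne_zero _ h, sgn_one])]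
      simp
    rw [e1, e2]; ring
  have hcast : ((univ.filter fun r => dotL r v = 0).card : ℝ)
      = ((univ.filter fun r => ¬ (dotL r v = 0)).card : ℝ) := by linarith [hsplit.symm.trans h0]
  have heq : (univ.filter fun r => dotL r v = 0).card
      = (univ.filter fun r => ¬ (dotL r v = 0)).card := by exact_mod_cast hcast
  have htot := Finset.card_filter_add_card_filter_not
    (s := (univ : Finset (V n))) (p := fun r => dotL r v = 0)
  rw [card_univ, card_V] at htot
  omega

lemma exists_small_kill {n : ℕ} (D : Finset (V n)) (hD : ∀ d ∈ D, d ≠ 0) :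
    ∃ r : V n, 2 * (D.filter fun d => dotL r d = 0).card ≤ D.card := by
  have hdouble : ∑ r : V n, (D.filter fun d => dotL r d = 0).card
      = ∑ d ∈ D, ((univ : Finset (V n)).filter fun r => dotL r d = 0).card := by
    simp only [Finset.card_filter]
    exact Finset.sum_comm
  have htot : 2 * ∑ r : V n, (D.filter fun d => dotL r d = 0).card = D.card * 2 ^ n := by
    rw [hdouble, Finset.mul_sum]
    rw [Finset.sum_congr rfl (fun d hd => card_dot_zero d (hD d hd))]
    simp [Finset.sum_const, mul_comm]
  obtain ⟨r, -, hr⟩ := Finset.exists_min_image (univ : Finset (V n))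
      (fun r => (D.filter fun d => dotL r d = 0).card) ⟨0, mem_univ 0⟩
  refine ⟨r, ?_⟩
  have hsum : Fintype.card (V n) * (D.filter fun d => dotL r d = 0).card
      ≤ ∑ r' : V n, (D.filter fun d => dotL r' d = 0).card := by
    rw [← card_univ, ← smul_eq_mul]
    exact Finset.card_nsmul_le_sum univ _ _ (fun r' _ => hr r' (mem_univ r'))
  rw [card_V] at hsum
  have h2n : 0 < 2 ^ n := Nat.pow_pos (by norm_num)
  nlinarith [hsum, htot]

lemma exists_phi {n : ℕ} (m : ℕ) (D : Finset (V n)) (hD : ∀ d ∈ D, d ≠ 0)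
    (hcard : D.card < 2 ^ m) :
    ∃ φ : V n →ₗ[ZMod 2] V m, ∀ d ∈ D, φ d ≠ 0 := by
  induction m generalizing D with
  | zero =>
      have : D = ∅ := Finset.card_eq_zero.mp (by omega)
      subst this; exact ⟨0, fun d hd => absurd hd (by simp)⟩
  | succ m ih =>
      obtain ⟨r, hr⟩ := exists_small_kill D hD
      set D' := D.filter (fun d => dotL r d = 0) with hD'def
      obtain ⟨φ', hφ'⟩ := ih D' (fun d hd => hD d (Finset.mem_of_mem_filter d hd)) (by
        have h2 : D.card < 2 * 2 ^ m := by
          have : (2:ℕ) ^ (m+1) = 2 * 2 ^ m := by ring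
          omega
        omega)
      refine ⟨LinearMap.pi (Fin.cons (dotL r) (fun i => (LinearMap.proj i).comp φ')), ?_⟩
      intro d hd hzero
      have h0 : dotL r d = 0 := by
        have := congrFun hzero 0
        simpa [LinearMap.pi_apply] using this
      have hmem : d ∈ D' := Finset.mem_filter.mpr ⟨hd, h0⟩
      apply hφ' d hmem
      funext i
      have := congrFun hzero i.succ
      simpa [LinearMap.pi_apply] using this

section Fourier
variable {m : ℕ}

noncomputable def fhat (A' : Finset (V m)) (γ : V m) : ℝ := ∑ a ∈ A', sgn (dotL γ a)

lemma fhat_zero (A' : Finset (V m)) : fhat A' 0 = A'.card := by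
  simp [fhat, dotL_zero_left, sgn_zero]

lemma fhat_sq (A' : Finset (V m)) (γ : V m) :
    fhat A' γ ^ 2 = ∑ a ∈ A', ∑ b ∈ A', sgn (dotL γ (a + b)) := by
  rw [sq, fhat, Finset.sum_mul_sum]
  exact Finset.sum_congr rfl fun a _ => Finset.sum_congr rfl fun b _ => by
    rw [map_add, sgn_add]

lemma sum_fhat_sq (A' : Finset (V m)) :
    ∑ γ : V m, fhat A' γ ^ 2 = 2 ^ m * A'.card := by
  calc ∑ γ : V m, fhat A' γ ^ 2
      = ∑ γ : V m, ∑ a ∈ A', ∑ b ∈ A', sgn (dotL γ (a + b)) :=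
        Finset.sum_congr rfl fun γ _ => fhat_sq A' γ
    _ = ∑ a ∈ A', ∑ γ : V m, ∑ b ∈ A', sgn (dotL γ (a + b)) := Finset.sum_comm
    _ = ∑ a ∈ A', ∑ b ∈ A', ∑ γ : V m, sgn (dotL γ (a + b)) :=
        Finset.sum_congr rfl fun a _ => Finset.sum_comm
    _ = ∑ a ∈ A', ∑ b ∈ A', (if b = a then (2:ℝ)^m else 0) := by
        refine Finset.sum_congr rfl fun a _ => Finset.sum_congr rfl fun b _ => ?_
        rw [sum_sgn_dotL_full]
        congr 1
        rw [eq_iff_iff, addV_eq_iff]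
        exact ⟨fun h => h.symm, fun h => h.symm⟩
    _ = ∑ a ∈ A', (2:ℝ)^m := by
        refine Finset.sum_congr rfl fun a ha => ?_
        rw [Finset.sum_ite_eq' A' a (fun _ => (2:ℝ)^m), if_pos ha]
    _ = 2 ^ m * A'.card := by rw [Finset.sum_const]; ring

lemma fhat_quad (A' : Finset (V m)) (γ x : V m) :
    fhat A' γ ^ 4 * sgn (dotL γ x)
      = ∑ a ∈ A', ∑ b ∈ A', ∑ c ∈ A', ∑ d ∈ A', sgn (dotL γ (a + b + c + d + x)) := by
  have hbody : ∀ a b c d : V m, sgn (dotL γ (a + b + c + d + x))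
      = sgn (dotL γ a) * sgn (dotL γ b) * sgn (dotL γ c) * sgn (dotL γ d) * sgn (dotL γ x) := by
    intro a b c d; simp only [map_add, sgn_add]
  simp only [hbody]
  simp only [← Finset.sum_mul, ← Finset.mul_sum]
  simp only [fhat]
  ring

lemma no_quad_zero (A' : Finset (V m)) (x : V m)
    (h : ∀ a ∈ A', ∀ b ∈ A', ∀ c ∈ A', ∀ d ∈ A', a + b + c + d ≠ x) :
    ∑ γ : V m, fhat A' γ ^ 4 * sgn (dotL γ x) = 0 := by
  rw [Finset.sum_congr rfl fun γ (_ : γ ∈ univ) => fhat_quad A' γ x]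
  rw [Finset.sum_comm]
  refine Finset.sum_eq_zero fun a ha => ?_
  rw [Finset.sum_comm]
  refine Finset.sum_eq_zero fun b hb => ?_
  rw [Finset.sum_comm]
  refine Finset.sum_eq_zero fun c hc => ?_
  rw [Finset.sum_comm]
  refine Finset.sum_eq_zero fun d hd => ?_
  rw [sum_sgn_dotL_full, if_neg]
  intro hz
  exact h a ha b hb c hc d hd (addV_eq_iff _ _ |>.mp hz)

lemma bogolyubov (A' : Finset (V m)) (hne : A'.Nonempty) :
    ∃ Λ : Finset (V m),
      ((Λ.card : ℝ) * (A'.card:ℝ)^2 ≤ ((2:ℝ)^m)^2) ∧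
      ∀ x : V m, (∀ γ ∈ Λ, dotL γ x = 0) →
        ∃ a ∈ A', ∃ b ∈ A', ∃ c ∈ A', ∃ d ∈ A', a + b + c + d = x := by
  set s : ℝ := (A'.card : ℝ) with hs
  have hs0 : 0 < s := by
    have := Finset.card_pos.mpr hne
    positivity
  set p : ℝ := (2:ℝ)^m with hp
  have hp0 : 0 < p := by positivity
  set α : ℝ := s / p with hα
  have hα0 : 0 < α := by positivity
  clear_value s p α
  set Λ : Finset (V m) := univ.filter (fun γ => γ ≠ 0 ∧ α * s^2 ≤ fhat A' γ ^ 2) with hΛ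
  clear_value Λ
  have hsum2 : ∑ γ : V m, fhat A' γ ^ 2 = p * s := by rw [hp, hs]; exact sum_fhat_sq A'
  have hΛle : ∑ γ ∈ Λ, fhat A' γ ^2 ≤ p * s := by
    rw [← hsum2]
    exact Finset.sum_le_sum_of_subset_of_nonneg (subset_univ _) (fun _ _ _ => sq_nonneg _)
  have hΛlb : (Λ.card : ℝ) * (α * s^2) ≤ ∑ γ ∈ Λ, fhat A' γ ^2 := by
    have := Finset.card_nsmul_le_sum Λ (fun γ => fhat A' γ ^2) (α * s^2)
      (fun γ hγ => ((Finset.mem_filter.mp (hΛ ▸ hγ)).2.2))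
    simpa [nsmul_eq_mul] using this
  have hcard1 : (Λ.card : ℝ) * s^2 ≤ p^2 := by
    have h := hΛlb.trans hΛle
    have h2 : (Λ.card:ℝ) * s ^ 2 * s ≤ p ^ 2 * s := by
      have hp' : p ≠ 0 := ne_of_gt hp0
      calc (Λ.card:ℝ) * s^2 * s = ((Λ.card:ℝ) * (α * s^2)) * p := by
            rw [hα]; field_simp
        _ ≤ (p * s) * p := mul_le_mul_of_nonneg_right h hp0.le
        _ = p^2 * s := by ring
    exact le_of_mul_le_mul_right h2 hs0
  refine ⟨Λ, hcard1, ?_⟩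
  intro x hx
  by_contra hcon
  push_neg at hcon
  have hzero := no_quad_zero A' x hcon
  have hposs : α * s^4 ≤ ∑ γ : V m, fhat A' γ ^4 * sgn (dotL γ x) := by
    have hzt : fhat A' 0 ^4 * sgn (dotL 0 x) = s^4 := by
      rw [fhat_zero, dotL_zero_left, sgn_zero, ← hs]; ring
    have hsplit : ∑ γ : V m, fhat A' γ ^4 * sgn (dotL γ x)
        = fhat A' 0 ^4 * sgn (dotL 0 x)
          + ∑ γ ∈ univ.erase 0, fhat A' γ ^4 * sgn (dotL γ x) :=
      (Finset.add_sum_erase univ (fun γ => fhat A' γ ^4 * sgn (dotL γ x))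
        (mem_univ (0 : V m))).symm
    have hsub : Λ ⊆ univ.erase 0 := fun γ hγ =>
      Finset.mem_erase.mpr ⟨(Finset.mem_filter.mp (hΛ ▸ hγ)).2.1, mem_univ _⟩
    have herase : ∑ γ ∈ univ.erase 0, fhat A' γ ^4 * sgn (dotL γ x)
        = ∑ γ ∈ univ.erase 0 \ Λ, fhat A' γ ^4 * sgn (dotL γ x)
          + ∑ γ ∈ Λ, fhat A' γ ^4 * sgn (dotL γ x) := (Finset.sum_sdiff hsub).symm
    have hΛpos : 0 ≤ ∑ γ ∈ Λ, fhat A' γ ^4 * sgn (dotL γ x) := by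
      refine Finset.sum_nonneg fun γ hγ => ?_
      rw [hx γ hγ, sgn_zero, mul_one]
      positivity
    have herasesq : ∑ γ ∈ univ.erase 0, fhat A' γ ^2 = p * s - s^2 := by
      have := (Finset.add_sum_erase univ (fun γ => fhat A' γ ^2) (mem_univ (0 : V m))).symm
      rw [hsum2] at this
      rw [fhat_zero, ← hs] at this
      linarith
    have hrest : - (α * s^2 * (p * s - s^2))
        ≤ ∑ γ ∈ univ.erase 0 \ Λ, fhat A' γ ^4 * sgn (dotL γ x) := by
      have hterm : ∀ γ ∈ univ.erase 0 \ Λ,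
          - (α * s^2 * fhat A' γ ^2) ≤ fhat A' γ ^4 * sgn (dotL γ x) := by
        intro γ hγ
        obtain ⟨hγe, hγnΛ⟩ := Finset.mem_sdiff.mp hγ
        have hγ0 : γ ≠ 0 := (Finset.mem_erase.mp hγe).1
        have hflt : fhat A' γ ^2 < α * s^2 := by
          by_contra hge
          exact hγnΛ (by rw [hΛ]; exact Finset.mem_filter.mpr ⟨mem_univ _, hγ0, le_of_not_gt hge⟩)
        have h1 : - (fhat A' γ ^4) ≤ fhat A' γ ^4 * sgn (dotL γ x) := by
          have := mul_le_mul_of_nonneg_left (neg_one_le_sgn (dotL γ x))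
            (by positivity : (0:ℝ) ≤ fhat A' γ ^4)
          calc - (fhat A' γ ^4) = fhat A' γ ^4 * (-1) := by ring
            _ ≤ fhat A' γ ^4 * sgn (dotL γ x) := this
        have h2 : fhat A' γ ^4 ≤ α * s^2 * fhat A' γ ^2 := by
          have : fhat A' γ ^2 * fhat A' γ ^2 ≤ (α * s^2) * fhat A' γ ^2 :=
            mul_le_mul_of_nonneg_right hflt.le (sq_nonneg _)
          calc fhat A' γ ^4 = fhat A' γ ^2 * fhat A' γ ^2 := by ring
            _ ≤ (α * s^2) * fhat A' γ ^2 := this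
        linarith
      have hsum : ∑ γ ∈ univ.erase 0 \ Λ, - (α * s^2 * fhat A' γ ^2)
          ≤ ∑ γ ∈ univ.erase 0 \ Λ, fhat A' γ ^4 * sgn (dotL γ x) :=
        Finset.sum_le_sum hterm
      have hsq : ∑ γ ∈ univ.erase 0 \ Λ, fhat A' γ ^2
          ≤ ∑ γ ∈ univ.erase 0, fhat A' γ ^2 :=
        Finset.sum_le_sum_of_subset_of_nonneg (Finset.sdiff_subset)
          (fun _ _ _ => sq_nonneg _)
      have hneg : ∑ γ ∈ univ.erase 0 \ Λ, - (α * s^2 * fhat A' γ ^2)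
          = - (α * s^2 * ∑ γ ∈ univ.erase 0 \ Λ, fhat A' γ ^2) := by
        conv_rhs => rw [Finset.mul_sum, ← Finset.sum_neg_distrib]
      have hmono : α * s^2 * ∑ γ ∈ univ.erase 0 \ Λ, fhat A' γ ^2
          ≤ α * s^2 * (p * s - s^2) := by
        rw [← herasesq]
        exact mul_le_mul_of_nonneg_left hsq (by positivity)
      rw [hneg] at hsum
      linarith [hsum, hmono]
    have hexp : α * s^2 * (p * s - s^2) = s^4 - α * s^4 := by
      rw [hα]; field_simp
    rw [hsplit, herase, hzt]
    linarith [hΛpos, hrest, hexp]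
  rw [hzero] at hposs
  have : 0 < α * s^4 := by positivity
  linarith

end Fourier

lemma zero_singleton_add {n : ℕ} (S : Finset (V n)) : ({(0 : V n)} : Finset (V n)) + S = S := by
  simp [Finset.singleton_add, Finset.image_id]

lemma zero_mem_nsmul {n : ℕ} {A : Finset (V n)} (h0 : (0 : V n) ∈ A) (k : ℕ) :
    (0 : V n) ∈ k • A := by
  induction k with
  | zero => simp [zero_nsmul, Finset.mem_zero]
  | succ k ih => rw [succ_nsmul]; exact Finset.add_mem_add ih h0

lemma nsmul_subset_nsmul {n : ℕ} {A : Finset (V n)} (h0 : (0 : V n) ∈ A) {k l : ℕ}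
    (h : k ≤ l) : k • A ⊆ l • A := by
  have e : l • A = k • A + (l - k) • A := by rw [← add_nsmul, Nat.add_sub_cancel' h]
  rw [e]
  exact Finset.subset_add_left _ (zero_mem_nsmul h0 _)

lemma key_arith (K : ℝ) (hK : 1 ≤ K) (B : ℝ) (hB0 : 0 ≤ B) (hB : B ≤ 4 * K ^ (32:ℕ)) :
    (2:ℝ) ^ (-(33 * K ^ ((33:ℕ):ℝ))) ≤ 1 / ((2:ℝ) ^ B * K ^ (16:ℕ)) := by
  have hK0 : 0 < K := lt_of_lt_of_le one_pos hK
  have hmain : (2:ℝ) ^ B * K ^ (16:ℕ) ≤ (2:ℝ) ^ (33 * K ^ ((33:ℕ):ℝ)) := by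
    rw [Real.rpow_natCast K 33]
    have e2 : (2:ℝ) ^ B = Real.exp (Real.log 2 * B) := Real.rpow_def_of_pos (by norm_num) B
    have e3 : (2:ℝ) ^ (33 * K ^ (33:ℕ)) = Real.exp (Real.log 2 * (33 * K ^ (33:ℕ))) :=
      Real.rpow_def_of_pos (by norm_num) _
    have e4 : K ^ (16:ℕ) = Real.exp (Real.log K * 16) := by
      rw [← Real.rpow_natCast K 16, Real.rpow_def_of_pos hK0]
      norm_num
    rw [e2, e3, e4, ← Real.exp_add, Real.exp_le_exp]
    have hlog2 : (0.6931471803:ℝ) < Real.log 2 := Real.log_two_gt_d9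
    have hlogK : Real.log K ≤ K - 1 := Real.log_le_sub_one_of_pos hK0
    have h132 : K ≤ K ^ (32:ℕ) := by
      calc K = K ^ (1:ℕ) := (pow_one K).symm
        _ ≤ K ^ (32:ℕ) := pow_le_pow_right₀ hK (by norm_num)
    have h3233 : K ^ (32:ℕ) ≤ K ^ (33:ℕ) := pow_le_pow_right₀ hK (by norm_num)
    have hK33pos : (0:ℝ) < K ^ (33:ℕ) := by positivity
    have hlog2pos : (0:ℝ) < Real.log 2 := by linarith
    nlinarith [mul_le_mul_of_nonneg_right hB hlog2pos.le,
      mul_le_mul_of_nonneg_right h3233 hlog2pos.le,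
      mul_lt_mul_of_pos_right hlog2 hK33pos]
  have hpos : (0:ℝ) < (2:ℝ) ^ B * K ^ (16:ℕ) := by positivity
  rw [Real.rpow_neg (by norm_num : (0:ℝ) ≤ 2), one_div]
  exact inv_anti₀ hpos hmain

lemma ker_card {m : ℕ} (ι : Type) [Fintype ι]
    (L : (Fin m → ZMod 2) →ₗ[ZMod 2] (ι → ZMod 2)) :
    2 ^ m ≤ Nat.card (LinearMap.ker L) * 2 ^ (Fintype.card ι) := by
  have hrank := LinearMap.finrank_range_add_finrank_ker L
  rw [Module.finrank_fintype_fun_eq_card] at hrank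
  simp only [Fintype.card_fin] at hrank
  have hrle : Module.finrank (ZMod 2) (LinearMap.range L) ≤ Fintype.card ι := by
    have h := Submodule.finrank_le (LinearMap.range L)
    rwa [Module.finrank_fintype_fun_eq_card] at h
  have hcard : Nat.card (LinearMap.ker L) = 2 ^ Module.finrank (ZMod 2) (LinearMap.ker L) := by
    rw [Nat.card_eq_fintype_card]
    have := Module.card_eq_pow_finrank (K := ZMod 2) (V := LinearMap.ker L)
    simpa using this
  calc (2:ℕ) ^ m = 2 ^ (Module.finrank (ZMod 2) (LinearMap.range L)
        + Module.finrank (ZMod 2) (LinearMap.ker L)) := by rw [hrank]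
    _ = 2 ^ Module.finrank (ZMod 2) (LinearMap.ker L)
        * 2 ^ Module.finrank (ZMod 2) (LinearMap.range L) := by rw [pow_add]; ring
    _ ≤ Nat.card (LinearMap.ker L) * 2 ^ (Fintype.card ι) := by
        rw [hcard]
        exact Nat.mul_le_mul_left _ (Nat.pow_le_pow_right (by norm_num) hrle)

end FRaux

open FRaux

set_option maxHeartbeats 2000000 in
theorem freiman_ruzsa_refined :
    ∃ C c : ℝ, 0 < C ∧ 0 < c ∧
      ∀ (n : ℕ) (A : Finset (Fin n → ZMod 2)) (K : ℝ), 1 ≤ K → A.Nonempty →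
        ((A + A).card : ℝ) ≤ K * A.card →
        ∃ H : Submodule (ZMod 2) (Fin n → ZMod 2),
          ((A.filter (fun x => x ∈ H)).card : ℝ) / A.card ≥ (2 : ℝ) ^ (-(C * K ^ C)) ∧
          ((A.filter (fun x => x ∈ H)).card : ℝ) / (Fintype.card H) ≥ c * K ^ (-C) := by
  refine ⟨33, 1/2, by norm_num, by norm_num, ?_⟩
  intro n A K hK hA hcard
  obtain ⟨a₀, ha₀⟩ := hA
  have hK0 : (0:ℝ) < K := lt_of_lt_of_le one_pos hK
  have hs0 : 0 < A.card := Finset.card_pos.mpr ⟨a₀, ha₀⟩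
  have hsR1 : (1:ℝ) ≤ (A.card:ℝ) := by exact_mod_cast hs0
  have hsR0 : (0:ℝ) < (A.card:ℝ) := by exact_mod_cast hs0
  -- translate A so it contains 0
  obtain ⟨A₀, hA₀def⟩ : ∃ X : Finset (FRaux.V n), X = {a₀} + A := ⟨_, rfl⟩
  have h0A₀ : (0 : FRaux.V n) ∈ A₀ := by
    rw [hA₀def, show (0:FRaux.V n) = a₀ + a₀ from (FRaux.addV_self a₀).symm]
    exact Finset.add_mem_add (Finset.mem_singleton_self a₀) ha₀
  have hA₀ne : A₀.Nonempty := ⟨0, h0A₀⟩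
  have hcardA₀ : A₀.card = A.card := by
    rw [hA₀def, Finset.card_singleton_add]
  have hAA : A₀ + A₀ = A + A := by
    rw [hA₀def, add_add_add_comm, Finset.singleton_add_singleton, FRaux.addV_self,
      FRaux.zero_singleton_add]
  have hA₀mem : ∀ x : FRaux.V n, x ∈ A₀ → a₀ + x ∈ A := by
    intro x hx
    rw [hA₀def] at hx
    obtain ⟨y, hy, w, hw, rfl⟩ := Finset.mem_add.mp hx
    rw [Finset.mem_singleton] at hy; subst hy
    rwa [← add_assoc, FRaux.addV_self, zero_add]
  -- Plünnecke
  have plun : ∀ k : ℕ, (((k • A₀)).card : ℝ) ≤ K ^ k * A.card := by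
    intro k
    have h := Finset.pluennecke_ruzsa_inequality_nsmul_add (A := A₀) hA₀ne A₀ k
    rw [hAA, hcardA₀] at h
    have hR : (((k • A₀)).card : ℝ) ≤ (((A + A).card : ℝ) / A.card) ^ k * A.card := by
      have h2 : (((#(k • A₀) : ℚ≥0)) : ℝ) ≤ (((#(A + A) / #A : ℚ≥0) ^ k * #A : ℚ≥0) : ℝ) := by
        exact_mod_cast h
      push_cast at h2
      exact h2
    have hdiv : ((A + A).card : ℝ) / A.card ≤ K := by
      rw [div_le_iff₀ hsR0]; exact hcard
    calc (((k • A₀)).card : ℝ) ≤ (((A + A).card : ℝ) / A.card) ^ k * A.card := hR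
      _ ≤ K ^ k * A.card := by
          have := pow_le_pow_left₀ (by positivity) hdiv k
          exact mul_le_mul_of_nonneg_right this hsR0.le
  -- D = 16-fold sumset
  obtain ⟨D, hDdef⟩ : ∃ X, X = (16:ℕ) • A₀ := ⟨_, rfl⟩
  have hDcard : ((D.card:ℝ)) ≤ K^(16:ℕ) * A.card := by rw [hDdef]; exact plun 16
  have hsub_nsmul : ∀ k : ℕ, k ≤ 16 → (k:ℕ) • A₀ ⊆ D := by
    intro k hk; rw [hDdef]; exact FRaux.nsmul_subset_nsmul h0A₀ hk
  have hA₀D : A₀ ⊆ D := by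
    have := hsub_nsmul 1 (by norm_num)
    rwa [one_nsmul] at this
  have hD0 : (0:FRaux.V n) ∈ D := hA₀D h0A₀
  have hD1 : 1 ≤ D.card := Finset.card_pos.mpr ⟨0, hD0⟩
  -- choose m
  obtain ⟨m, hm⟩ : ∃ m, m = Nat.log 2 D.card + 1 := ⟨_, rfl⟩
  have hmlt : D.card < 2 ^ m := by rw [hm]; exact Nat.lt_pow_succ_log_self (by norm_num) _
  have hmle : (2:ℕ) ^ m ≤ 2 * D.card := by
    rw [hm, pow_succ]
    have := Nat.pow_log_le_self 2 (show D.card ≠ 0 by omega)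
    omega
  -- the model linear map φ
  obtain ⟨φ, hφ⟩ := FRaux.exists_phi m (D.erase 0) (fun d hd => (Finset.mem_erase.mp hd).1)
    (lt_of_le_of_lt (Finset.card_le_card (Finset.erase_subset _ _)) hmlt)
  have hker : ∀ d ∈ D, φ d = 0 → d = 0 := by
    intro d hd h0
    by_contra hne
    exact hφ d (Finset.mem_erase.mpr ⟨hne, hd⟩) h0
  have hinj : ∀ u v : FRaux.V n, u + v ∈ D → φ u = φ v → u = v := by
    intro u v huv heq
    have h1 : φ (u + v) = 0 := by rw [map_add, heq, FRaux.addV_self]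
    exact FRaux.addV_eq_zero (hker _ huv h1)
  -- A' = φ(A₀)
  obtain ⟨A', hA'def⟩ : ∃ X, X = A₀.image φ := ⟨_, rfl⟩
  have h2sub : A₀ + A₀ ⊆ D := by
    have := hsub_nsmul 2 (by norm_num); rwa [two_nsmul] at this
  have hinjA₀ : Set.InjOn φ ↑A₀ := fun a ha b hb h =>
    hinj a b (h2sub (Finset.add_mem_add (Finset.mem_coe.mp ha) (Finset.mem_coe.mp hb))) h
  have hcardA' : A'.card = A.card := by
    rw [hA'def, Finset.card_image_of_injOn hinjA₀, hcardA₀]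
  have hA'ne : A'.Nonempty := by
    rw [hA'def]; exact ⟨φ 0, Finset.mem_image_of_mem φ h0A₀⟩
  -- Bogolyubov downstairs
  obtain ⟨Λ, hΛcard, hΛcover⟩ := FRaux.bogolyubov A' hA'ne
  rw [hcardA'] at hΛcard
  -- P4 and the subgroup Sb upstairs
  obtain ⟨P4, hP4def⟩ : ∃ X, X = (4:ℕ) • A₀ := ⟨_, rfl⟩
  have hP4D : P4 ⊆ D := by rw [hP4def]; exact hsub_nsmul 4 (by norm_num)
  have h44D : P4 + P4 ⊆ D := by
    have e : P4 + P4 = (8:ℕ) • A₀ := by rw [hP4def, ← add_nsmul]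
    rw [e]; exact hsub_nsmul 8 (by norm_num)
  have h12D : P4 + (P4 + P4) ⊆ D := by
    have e : P4 + (P4 + P4) = (12:ℕ) • A₀ := by rw [hP4def, ← add_nsmul, ← add_nsmul]
    rw [e]; exact hsub_nsmul 12 (by norm_num)
  have hmem4 : ∀ a ∈ A₀, ∀ b ∈ A₀, ∀ c ∈ A₀, ∀ d ∈ A₀, a + b + c + d ∈ P4 := by
    intro a ha b hb c hc d hd
    have h4 : P4 = A₀ + A₀ + A₀ + A₀ := by
      rw [hP4def, show (4:ℕ) = 1+1+1+1 from by norm_num, add_nsmul, add_nsmul, add_nsmul,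
        one_nsmul]
    rw [h4]
    exact Finset.add_mem_add (Finset.add_mem_add (Finset.add_mem_add ha hb) hc) hd
  obtain ⟨Sb, hSbdef⟩ :
      ∃ X, X = P4.filter (fun v => ∀ γ ∈ Λ, FRaux.dotL γ (φ v) = 0) := ⟨_, rfl⟩
  have hSbmem : ∀ v, v ∈ Sb ↔ (v ∈ P4 ∧ ∀ γ ∈ Λ, FRaux.dotL γ (φ v) = 0) := by
    intro v; rw [hSbdef, Finset.mem_filter]
  have hSbP4 : Sb ⊆ P4 := fun v hv => ((hSbmem v).mp hv).1
  have hcover : ∀ y : FRaux.V m, (∀ γ ∈ Λ, FRaux.dotL γ y = 0) → ∃ v ∈ P4, φ v = y := by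
    intro y hy
    obtain ⟨a, ha, b, hb, c, hc, d, hd, habcd⟩ := hΛcover y hy
    rw [hA'def] at ha hb hc hd
    obtain ⟨a', ha', rfl⟩ := Finset.mem_image.mp ha
    obtain ⟨b', hb', rfl⟩ := Finset.mem_image.mp hb
    obtain ⟨c', hc', rfl⟩ := Finset.mem_image.mp hc
    obtain ⟨d', hd', rfl⟩ := Finset.mem_image.mp hd
    exact ⟨a' + b' + c' + d', hmem4 _ ha' _ hb' _ hc' _ hd',
      by rw [map_add, map_add, map_add]; exact habcd⟩
  have hSb0 : (0:FRaux.V n) ∈ Sb := by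
    rw [hSbmem]
    refine ⟨?_, ?_⟩
    · rw [hP4def]; exact FRaux.zero_mem_nsmul h0A₀ 4
    · intro γ hγ; rw [map_zero, map_zero]
  have hSbcard1 : 1 ≤ Sb.card := Finset.card_pos.mpr ⟨0, hSb0⟩
  have hSbadd : ∀ u ∈ Sb, ∀ v ∈ Sb, u + v ∈ Sb := by
    intro u hu v hv
    obtain ⟨hu4, huΛ⟩ := (hSbmem u).mp hu
    obtain ⟨hv4, hvΛ⟩ := (hSbmem v).mp hv
    have hyΛ : ∀ γ ∈ Λ, FRaux.dotL γ (φ (u + v)) = 0 := by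
      intro γ hγ
      rw [map_add, map_add, huΛ γ hγ, hvΛ γ hγ, add_zero]
    obtain ⟨w, hw4, hwφ⟩ := hcover (φ (u + v)) hyΛ
    have hw : w = u + v := by
      apply hinj w (u + v) _ hwφ
      exact h12D (Finset.add_mem_add hw4 (Finset.add_mem_add hu4 hv4))
    rw [hSbmem]
    exact ⟨hw ▸ hw4, hyΛ⟩
  -- the kernel downstairs and |Sb|
  obtain ⟨L, hLdef⟩ : ∃ X : FRaux.V m →ₗ[ZMod 2] (↥Λ → ZMod 2),
      X = LinearMap.pi (fun γ : ↥Λ => FRaux.dotL (γ : FRaux.V m)) := ⟨_, rfl⟩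
  have hLmem : ∀ y : FRaux.V m, y ∈ LinearMap.ker L ↔ ∀ γ ∈ Λ, FRaux.dotL γ y = 0 := by
    intro y
    rw [LinearMap.mem_ker, hLdef]
    constructor
    · intro h γ hγ
      have := congrFun h ⟨γ, hγ⟩
      simpa [LinearMap.pi_apply] using this
    · intro h
      funext γ
      simpa [LinearMap.pi_apply] using h γ.1 γ.2
  have hkerpow : 2 ^ m ≤ Nat.card (LinearMap.ker L) * 2 ^ Λ.card := by
    have := FRaux.ker_card (↥Λ) L
    rwa [Fintype.card_coe] at this
  have hSbker : Sb.card = Nat.card (LinearMap.ker L) := by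
    rw [← Nat.card_eq_finsetCard]
    apply Nat.card_congr
    refine Equiv.ofBijective
      (fun v : ↥Sb => (⟨φ v.1, (hLmem (φ v.1)).mpr ((hSbmem v.1).mp v.2).2⟩ :
        ↥(LinearMap.ker L))) ⟨?_, ?_⟩
    · intro u v huv
      have h1 : φ u.1 = φ v.1 := congrArg Subtype.val huv
      have h2 : u.1 + v.1 ∈ D := h44D (Finset.add_mem_add (hSbP4 u.2) (hSbP4 v.2))
      exact Subtype.ext (hinj u.1 v.1 h2 h1)
    · intro y
      obtain ⟨v, hv4, hvφ⟩ := hcover y.1 ((hLmem y.1).mp y.2)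
      refine ⟨⟨v, (hSbmem v).mpr ⟨hv4, ?_⟩⟩, Subtype.ext hvφ⟩
      intro γ hγ; rw [hvφ]; exact (hLmem y.1).mp y.2 γ hγ
  -- quotient pigeonhole
  obtain ⟨Smod, hSmoddef⟩ : ∃ X : Submodule (ZMod 2) (FRaux.V n), X = {
      carrier := ↑Sb
      add_mem' := fun {a b} ha hb => by
        simp only [Finset.mem_coe] at *
        exact hSbadd a ha b hb
      zero_mem' := by simp only [Finset.mem_coe]; exact hSb0
      smul_mem' := fun c x hx => by
        rcases FRaux.zmod2_cases c with h | h
        · rw [h, zero_smul]; simp only [Finset.mem_coe]; exact hSb0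
        · rwa [h, one_smul] } := ⟨_, rfl⟩
  have hSmodmem : ∀ x, x ∈ Smod ↔ x ∈ Sb := by
    intro x
    rw [hSmoddef]
    simp only [Submodule.mem_mk, AddSubmonoid.mem_mk, AddSubsemigroup.mem_mk, Finset.mem_coe]
  obtain ⟨π, hπdef⟩ : ∃ X : FRaux.V n →ₗ[ZMod 2] (FRaux.V n ⧸ Smod), X = Smod.mkQ := ⟨_, rfl⟩
  have hπ0 : ∀ x, π x = 0 ↔ x ∈ Sb := by
    intro x
    rw [hπdef, Submodule.mkQ_apply, Submodule.Quotient.mk_eq_zero, hSmodmem]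
  obtain ⟨T, hTdef⟩ : ∃ X, X = A₀.image π := ⟨_, rfl⟩
  have hTmemA₀ : ∀ x ∈ A₀, π x ∈ T := fun x hx => by
    rw [hTdef]; exact Finset.mem_image_of_mem π hx
  have hfib : A₀.card = ∑ t ∈ T, (A₀.filter fun x => π x = t).card :=
    Finset.card_eq_sum_card_fiberwise hTmemA₀
  have hTne : T.Nonempty := ⟨π 0, hTmemA₀ 0 h0A₀⟩
  obtain ⟨t0, ht0T, ht0max⟩ :=
    Finset.exists_max_image T (fun t => (A₀.filter fun x => π x = t).card) hTne
  have hmax1 : A₀.card ≤ T.card * (A₀.filter fun x => π x = t0).card := by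
    rw [hfib]
    calc ∑ t ∈ T, (A₀.filter fun x => π x = t).card
        ≤ T.card • (A₀.filter fun x => π x = t0).card :=
          Finset.sum_le_card_nsmul T _ _ (fun t ht => ht0max t ht)
      _ = T.card * (A₀.filter fun x => π x = t0).card := by rw [smul_eq_mul]
  obtain ⟨U, hUdef⟩ : ∃ X, X = A₀ + Sb := ⟨_, rfl⟩
  have hUD : U ⊆ D := by
    rw [hUdef]
    have h1 : A₀ + Sb ⊆ A₀ + P4 := Finset.add_subset_add_left hSbP4
    have e : A₀ + P4 = (5:ℕ) • A₀ := by
      rw [hP4def, show (5:ℕ) = 1 + 4 from by norm_num, add_nsmul, one_nsmul]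
    exact h1.trans (e ▸ hsub_nsmul 5 (by norm_num))
  have hUmemT : ∀ x ∈ U, π x ∈ T := by
    intro x hx
    rw [hUdef] at hx
    obtain ⟨a, ha, w, hw, rfl⟩ := Finset.mem_add.mp hx
    rw [map_add, (hπ0 w).mpr hw, add_zero]
    exact hTmemA₀ a ha
  have hUfib : U.card = ∑ t ∈ T, (U.filter fun x => π x = t).card :=
    Finset.card_eq_sum_card_fiberwise hUmemT
  have hfibUcard : ∀ t ∈ T, (U.filter fun x => π x = t).card = Sb.card := by
    intro t ht
    rw [hTdef] at ht
    obtain ⟨a, haA₀, rfl⟩ := Finset.mem_image.mp ht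
    have e : U.filter (fun x => π x = π a) = {a} + Sb := by
      ext x
      rw [Finset.mem_filter]
      constructor
      · rintro ⟨hxU, hxa⟩
        have hmem : a + x ∈ Sb := by
          apply (hπ0 _).mp
          rw [map_add, hxa, ← map_add, FRaux.addV_self, map_zero]
        exact Finset.mem_add.mpr ⟨a, Finset.mem_singleton_self _, a + x, hmem,
          by rw [← add_assoc, FRaux.addV_self, zero_add]⟩
      · intro hx
        obtain ⟨a', ha', w, hw, rfl⟩ := Finset.mem_add.mp hx
        rw [Finset.mem_singleton] at ha'; subst ha'
        constructor
        · rw [hUdef]; exact Finset.add_mem_add haA₀ hw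
        · rw [map_add, (hπ0 w).mpr hw, add_zero]
    rw [e, Finset.card_singleton_add]
  have hUcard : U.card = T.card * Sb.card := by
    rw [hUfib, Finset.sum_congr rfl hfibUcard, Finset.sum_const, smul_eq_mul]
  obtain ⟨ast, hastA₀, hastπ⟩ := Finset.mem_image.mp (by rw [hTdef] at ht0T; exact ht0T)
  have hfibast : A₀.filter (fun x => π x = t0) = A₀.filter (fun x => x ∈ {ast} + Sb) := by
    ext x
    simp only [Finset.mem_filter]
    constructor
    · rintro ⟨hxA₀, hxt⟩
      refine ⟨hxA₀, ?_⟩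
      have hππ : π x = π ast := by rw [hxt, ← hastπ]
      have hmem : ast + x ∈ Sb := by
        apply (hπ0 _).mp
        rw [map_add, hππ, ← map_add, FRaux.addV_self, map_zero]
      exact Finset.mem_add.mpr ⟨ast, Finset.mem_singleton_self _, ast + x, hmem,
        by rw [← add_assoc, FRaux.addV_self, zero_add]⟩
    · rintro ⟨hxA₀, hxmem⟩
      refine ⟨hxA₀, ?_⟩
      obtain ⟨a', ha', w, hw, rfl⟩ := Finset.mem_add.mp hxmem
      rw [Finset.mem_singleton] at ha'; subst ha'
      rw [map_add, (hπ0 w).mpr hw, add_zero, hastπ]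
  obtain ⟨z, hzdef⟩ : ∃ x : FRaux.V n, x = a₀ + ast := ⟨_, rfl⟩
  have hAfilter : (A.filter fun x => x ∈ {z} + Sb).card
      = (A₀.filter fun x => π x = t0).card := by
    rw [hfibast]
    apply Finset.card_bij (fun x _ => a₀ + x)
    · intro x hx
      obtain ⟨hxA, hxz⟩ := Finset.mem_filter.mp hx
      refine Finset.mem_filter.mpr ⟨?_, ?_⟩
      · rw [hA₀def]; exact Finset.add_mem_add (Finset.mem_singleton_self a₀) hxA
      · obtain ⟨z', hz', w, hw, rfl⟩ := Finset.mem_add.mp hxz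
        rw [Finset.mem_singleton] at hz'; subst hz'
        refine Finset.mem_add.mpr ⟨ast, Finset.mem_singleton_self _, w, hw, ?_⟩
        rw [hzdef, ← add_assoc, ← add_assoc, FRaux.addV_self, zero_add]
    · intro x1 hx1 x2 hx2 he
      exact add_left_cancel he
    · intro y hy
      obtain ⟨hyA₀, hymem⟩ := Finset.mem_filter.mp hy
      refine ⟨a₀ + y, ?_, ?_⟩
      · apply Finset.mem_filter.mpr
        constructor
        · exact hA₀mem y hyA₀
        · obtain ⟨a', ha', w, hw, rfl⟩ := Finset.mem_add.mp hymem
          rw [Finset.mem_singleton] at ha'; subst ha'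
          refine Finset.mem_add.mpr ⟨z, Finset.mem_singleton_self _, w, hw, ?_⟩
          rw [hzdef, add_assoc]
      · rw [← add_assoc, FRaux.addV_self, zero_add]
  -- the final subgroup H
  obtain ⟨HF, hHFdef⟩ : ∃ X, X = Sb ∪ ({z} + Sb) := ⟨_, rfl⟩
  have hHF0 : (0:FRaux.V n) ∈ HF := by rw [hHFdef]; exact Finset.mem_union_left _ hSb0
  have hHFmem : ∀ x, x ∈ HF ↔ (x ∈ Sb ∨ ∃ w ∈ Sb, x = z + w) := by
    intro x
    rw [hHFdef, Finset.mem_union]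
    constructor
    · rintro (h | h)
      · exact Or.inl h
      · obtain ⟨z', hz', w, hw, rfl⟩ := Finset.mem_add.mp h
        rw [Finset.mem_singleton] at hz'; subst hz'
        exact Or.inr ⟨w, hw, rfl⟩
    · rintro (h | ⟨w, hw, rfl⟩)
      · exact Or.inl h
      · exact Or.inr (Finset.mem_add.mpr ⟨z, Finset.mem_singleton_self _, w, hw, rfl⟩)
  have hHFadd : ∀ u ∈ HF, ∀ v ∈ HF, u + v ∈ HF := by
    intro u hu v hv
    rcases (hHFmem u).mp hu with h1 | ⟨w1, hw1, rfl⟩ <;>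
      rcases (hHFmem v).mp hv with h2 | ⟨w2, hw2, rfl⟩
    · exact (hHFmem _).mpr (Or.inl (hSbadd _ h1 _ h2))
    · refine (hHFmem _).mpr (Or.inr ⟨u + w2, hSbadd _ h1 _ hw2, ?_⟩)
      rw [← add_assoc, add_comm u z, add_assoc]
    · refine (hHFmem _).mpr (Or.inr ⟨w1 + v, hSbadd _ hw1 _ h2, ?_⟩)
      rw [add_assoc]
    · refine (hHFmem _).mpr (Or.inl ?_)
      have e : z + w1 + (z + w2) = w1 + w2 := by
        rw [add_add_add_comm, FRaux.addV_self, zero_add]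
      rw [e]; exact hSbadd _ hw1 _ hw2
  obtain ⟨H, hHdef⟩ : ∃ X : Submodule (ZMod 2) (FRaux.V n), X = {
      carrier := ↑HF
      add_mem' := fun {a b} ha hb => by
        simp only [Finset.mem_coe] at *
        exact hHFadd a ha b hb
      zero_mem' := by simp only [Finset.mem_coe]; exact hHF0
      smul_mem' := fun c x hx => by
        rcases FRaux.zmod2_cases c with h | h
        · rw [h, zero_smul]; simp only [Finset.mem_coe]; exact hHF0
        · rwa [h, one_smul] } := ⟨_, rfl⟩
  have hHmem : ∀ x, x ∈ H ↔ x ∈ HF := by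
    intro x
    rw [hHdef]
    simp only [Submodule.mem_mk, AddSubmonoid.mem_mk, AddSubsemigroup.mem_mk, Finset.mem_coe]
  have hcardHF : Fintype.card H = HF.card := by
    rw [← Fintype.card_coe HF]
    exact Fintype.card_congr (Equiv.subtypeEquivRight hHmem)
  have hHFcard2 : HF.card ≤ 2 * Sb.card := by
    rw [hHFdef]
    calc (Sb ∪ ({z} + Sb)).card ≤ Sb.card + ({z} + Sb).card := Finset.card_union_le _ _
      _ = 2 * Sb.card := by
        rw [Finset.card_singleton_add]
        ring
  have hfilter_sub : (A.filter fun x => x ∈ {z} + Sb) ⊆ (A.filter fun x => x ∈ H) := by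
    intro x hx
    obtain ⟨hxA, hxm⟩ := Finset.mem_filter.mp hx
    refine Finset.mem_filter.mpr ⟨hxA, ?_⟩
    rw [hHmem, hHFdef]
    exact Finset.mem_union_right _ hxm
  -- shared real-number facts
  have hFf0 : ((A₀.filter fun x => π x = t0).card : ℝ)
      ≤ ((A.filter fun x => x ∈ H).card : ℝ) := by
    have hnat : (A₀.filter fun x => π x = t0).card ≤ (A.filter fun x => x ∈ H).card := by
      rw [← hAfilter]; exact Finset.card_le_card hfilter_sub
    exact_mod_cast hnat
  have hf00 : (0:ℝ) ≤ ((A₀.filter fun x => π x = t0).card : ℝ) := Nat.cast_nonneg _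
  have hsc1 : (1:ℝ) ≤ (Sb.card : ℝ) := by exact_mod_cast hSbcard1
  have hsc0 : (0:ℝ) < (Sb.card : ℝ) := by linarith
  have key1 : (A.card : ℝ) ≤ (T.card : ℝ) * ((A₀.filter fun x => π x = t0).card : ℝ) := by
    rw [hcardA₀] at hmax1
    exact_mod_cast hmax1
  have key2 : (T.card : ℝ) * (Sb.card : ℝ) ≤ K^(16:ℕ) * (A.card : ℝ) := by
    have h1 : ((U.card : ℕ) : ℝ) ≤ (D.card : ℝ) := by
      exact_mod_cast Finset.card_le_card hUD
    have h2 : ((U.card : ℕ) : ℝ) = (T.card : ℝ) * (Sb.card : ℝ) := by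
      exact_mod_cast hUcard
    linarith [hDcard]
  have hscK : (Sb.card : ℝ) ≤ K^(16:ℕ) * ((A₀.filter fun x => π x = t0).card : ℝ) := by
    have hc : (A.card : ℝ) * (Sb.card : ℝ)
        ≤ (A.card : ℝ) * (K^(16:ℕ) * ((A₀.filter fun x => π x = t0).card : ℝ)) := by
      calc (A.card : ℝ) * (Sb.card : ℝ)
          ≤ ((T.card : ℝ) * ((A₀.filter fun x => π x = t0).card : ℝ)) * (Sb.card : ℝ) :=
            mul_le_mul_of_nonneg_right key1 hsc0.le
        _ = ((T.card : ℝ) * (Sb.card : ℝ)) * ((A₀.filter fun x => π x = t0).card : ℝ) := by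
            ring
        _ ≤ (K^(16:ℕ) * (A.card : ℝ)) * ((A₀.filter fun x => π x = t0).card : ℝ) :=
            mul_le_mul_of_nonneg_right key2 hf00
        _ = (A.card : ℝ) * (K^(16:ℕ) * ((A₀.filter fun x => π x = t0).card : ℝ)) := by
            ring
    exact le_of_mul_le_mul_left hc hsR0
  have hK16pos : (0:ℝ) < K^(16:ℕ) := by positivity
  have hSbF : (Sb.card : ℝ) ≤ K^(16:ℕ) * ((A.filter fun x => x ∈ H).card : ℝ) :=
    le_trans hscK (mul_le_mul_of_nonneg_left hFf0 hK16pos.le)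
  have hBle : ((Λ.card : ℕ) : ℝ) ≤ 4 * K^(32:ℕ) := by
    have hpmR : ((2:ℝ)^m) ≤ 2 * (K^(16:ℕ) * (A.card:ℝ)) := by
      have h1 : ((2:ℕ)^m : ℝ) ≤ 2 * (D.card:ℝ) := by exact_mod_cast hmle
      push_cast at h1
      linarith [hDcard]
    have hsq : ((2:ℝ)^m)^2 ≤ (2 * (K^(16:ℕ) * (A.card:ℝ)))^2 :=
      pow_le_pow_left₀ (by positivity) hpmR 2
    have hexp : (2 * (K^(16:ℕ) * (A.card:ℝ)))^2
        = (4 * K^(32:ℕ)) * (A.card:ℝ)^2 := by ring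
    have hc : ((Λ.card : ℕ) : ℝ) * (A.card:ℝ)^2 ≤ (4 * K^(32:ℕ)) * (A.card:ℝ)^2 := by
      calc ((Λ.card : ℕ) : ℝ) * (A.card:ℝ)^2 ≤ ((2:ℝ)^m)^2 := hΛcard
        _ ≤ (4 * K^(32:ℕ)) * (A.card:ℝ)^2 := by rw [← hexp]; exact hsq
    exact le_of_mul_le_mul_right hc (by positivity)
  have hsA2m : (A.card : ℝ) ≤ (2:ℝ)^m := by
    have h2 := Finset.card_le_card hA₀D
    rw [hcardA₀] at h2
    have h1 : A.card < 2 ^ m := lt_of_le_of_lt h2 hmlt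
    have h3 : ((A.card:ℕ):ℝ) ≤ (((2:ℕ)^m : ℕ):ℝ) := by exact_mod_cast h1.le
    push_cast at h3
    exact h3
  have hscm : (2:ℝ)^m ≤ (Sb.card:ℝ) * (2:ℝ)^(Λ.card) := by
    have h1 : (2:ℕ)^m ≤ Sb.card * 2^(Λ.card) := by rw [hSbker]; exact hkerpow
    exact_mod_cast h1
  have h2Λpos : (0:ℝ) < (2:ℝ)^(Λ.card) := by positivity
  have hA3 : (A.card:ℝ)
      ≤ (K^(16:ℕ) * ((A.filter fun x => x ∈ H).card : ℝ)) * (2:ℝ)^(Λ.card) := by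
    calc (A.card:ℝ) ≤ (Sb.card:ℝ) * (2:ℝ)^(Λ.card) := le_trans hsA2m hscm
      _ ≤ (K^(16:ℕ) * ((A.filter fun x => x ∈ H).card : ℝ)) * (2:ℝ)^(Λ.card) :=
          mul_le_mul_of_nonneg_right hSbF h2Λpos.le
  refine ⟨H, ?_, ?_⟩
  · -- portion bound
    rw [ge_iff_le]
    have hka := FRaux.key_arith K hK ((Λ.card : ℕ) : ℝ) (Nat.cast_nonneg _) hBle
    rw [Real.rpow_natCast (2:ℝ) (Λ.card)] at hka
    rw [show ((33:ℕ):ℝ) = (33:ℝ) from by norm_num] at hka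
    calc (2:ℝ)^(-(33 * K^(33:ℝ))) ≤ 1/((2:ℝ)^(Λ.card) * K^(16:ℕ)) := hka
      _ ≤ ((A.filter fun x => x ∈ H).card : ℝ) / (A.card : ℝ) := by
          rw [div_le_div_iff₀ (by positivity) hsR0]
          calc 1 * (A.card:ℝ) = (A.card:ℝ) := one_mul _
            _ ≤ (K^(16:ℕ) * ((A.filter fun x => x ∈ H).card : ℝ)) * (2:ℝ)^(Λ.card) := hA3
            _ = ((A.filter fun x => x ∈ H).card : ℝ) * ((2:ℝ)^(Λ.card) * K^(16:ℕ)) := by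
                ring
  · -- density bound
    rw [ge_iff_le]
    have hHR : ((Fintype.card H : ℕ):ℝ) ≤ 2 * (Sb.card:ℝ) := by
      have h1 : Fintype.card H ≤ 2 * Sb.card := by rw [hcardHF]; exact hHFcard2
      exact_mod_cast h1
    have hHpos : (0:ℝ) < ((Fintype.card H : ℕ):ℝ) := by
      have h1 : 0 < Fintype.card H := Fintype.card_pos_iff.mpr ⟨⟨0, H.zero_mem⟩⟩
      exact_mod_cast h1
    have hstep : (1:ℝ)/(2 * K^(16:ℕ))
        ≤ ((A.filter fun x => x ∈ H).card : ℝ) / ((Fintype.card H : ℕ):ℝ) := by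
      rw [div_le_div_iff₀ (by positivity) hHpos]
      calc 1 * ((Fintype.card H : ℕ):ℝ) = ((Fintype.card H : ℕ):ℝ) := one_mul _
        _ ≤ 2 * (Sb.card:ℝ) := hHR
        _ ≤ 2 * (K^(16:ℕ) * ((A.filter fun x => x ∈ H).card : ℝ)) := by linarith
        _ = ((A.filter fun x => x ∈ H).card : ℝ) * (2 * K^(16:ℕ)) := by ring
    have hfin : (1/2:ℝ) * K^(-(33:ℝ)) ≤ 1/(2 * K^(16:ℕ)) := by
      rw [Real.rpow_neg hK0.le]
      have h' : K^(16:ℕ) ≤ K^((33:ℝ)) := by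
        rw [show (33:ℝ) = ((33:ℕ):ℝ) from by norm_num, Real.rpow_natCast]
        exact pow_le_pow_right₀ hK (by norm_num)
      have hKpow33 : (0:ℝ) < K^((33:ℝ)) := Real.rpow_pos_of_pos hK0 _
      have hne : K ^ ((33:ℝ)) ≠ 0 := ne_of_gt hKpow33
      have e : (1/2:ℝ) * (K^((33:ℝ)))⁻¹ = 1/(2 * K^((33:ℝ))) := by
        field_simp
      rw [e]
      apply one_div_le_one_div_of_le (by positivity)
      linarith
    exact le_trans hfin hstep
end

section
/- Let m be a positive integer. Suppose A ⊆ 𝔽₂ⁿ with 0 ∉ A is m-arithmetically connected and |A| ≥ m². Then there exist r with 3 ≤ r ≤ m+1 and x_1 + ⋯ + x_r = 0 has at least |A|^{r−1}/2^{m+2} solutions with all x_i ∈ A. -/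
open scoped Classical
open Finset

def ArithConnected {n : ℕ} (m : ℕ) (A : Finset (Fin n → ZMod 2)) : Prop :=
  ∀ a : Fin m → (Fin n → ZMod 2), (∀ i, a i ∈ A) → Function.Injective a →
    (¬ LinearIndependent (ZMod 2) a) ∨
    (LinearIndependent (ZMod 2) a ∧ ∃ a' ∈ A, a' ∉ Set.range a ∧
      a' ∈ Submodule.span (ZMod 2) (Set.range a))

/-- Auxiliary numeric bound. -/
lemma AC.desc_aux (N : ℕ) : ∀ k, k ≤ N → 2 * N ^ k ≤ 2 * N.descFactorial k + k * (k - 1) * N ^ (k - 1) := by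
  intro k
  induction k with
  | zero => simp
  | succ k ih =>
    intro hk
    have hkN : k ≤ N := Nat.le_of_succ_le hk
    have ih' := ih hkN
    have h1 : 2 * N ^ (k+1) ≤ N * (2 * N.descFactorial k + k * (k - 1) * N ^ (k - 1)) := by
      calc 2 * N ^ (k+1) = N * (2 * N ^ k) := by ring
        _ ≤ _ := Nat.mul_le_mul_left N ih'
    have hNN : k * (k-1) * (N * N ^ (k - 1)) ≤ k * (k - 1) * N ^ k := by
      rcases Nat.eq_zero_or_pos k with h | h
      · simp [h]
      · have : N * N ^ (k - 1) = N ^ k := by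
          rw [← pow_succ']
          congr 1
          omega
        rw [this]
    have hsplit : N * N.descFactorial k = (N - k) * N.descFactorial k + k * N.descFactorial k := by
      have : N - k + k = N := by omega
      nlinarith [this]
    have hdle : N.descFactorial k ≤ N ^ k := Nat.descFactorial_le_pow N k
    calc 2 * N ^ (k+1) ≤ N * (2 * N.descFactorial k + k * (k - 1) * N ^ (k - 1)) := h1
      _ = 2 * (N * N.descFactorial k) + k * (k-1) * (N * N ^ (k-1)) := by ring
      _ ≤ 2 * ((N - k) * N.descFactorial k + k * N.descFactorial k) + k * (k-1) * N ^ k := by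
          rw [hsplit]; exact Nat.add_le_add_left hNN _
      _ ≤ 2 * ((N - k) * N.descFactorial k) + 2 * (k * N ^ k) + k * (k-1) * N ^ k := by
          have := Nat.mul_le_mul_left k hdle
          nlinarith [this]
      _ = 2 * N.descFactorial (k+1) + (k * 2 + k * (k-1)) * N ^ k := by
          rw [Nat.descFactorial_succ]; ring
      _ = 2 * N.descFactorial (k+1) + (k+1) * ((k+1) - 1) * N ^ ((k+1) - 1) := by
          have h4 : (k+1) - 1 = k := by omega
          have h5 : k * 2 + k * (k-1) = (k+1) * k := by
            cases k with
            | zero => simp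
            | succ j => have : j + 1 - 1 = j := by omega
                        rw [this]; ring
          rw [h4, h5]

lemma AC.pow_le_two_mul_desc {N m : ℕ} (hm : 0 < m) (h : m ^ 2 ≤ N) :
    N ^ m ≤ 2 * N.descFactorial m := by
  have hmN : m ≤ N := le_trans (Nat.le_self_pow two_ne_zero m) h
  have := AC.desc_aux N m hmN
  have h2 : m * (m - 1) * N ^ (m - 1) ≤ N * N ^ (m-1) := by
    apply Nat.mul_le_mul_right
    calc m * (m-1) ≤ m * m := Nat.mul_le_mul_left m (by omega)
      _ = m ^ 2 := by ring
      _ ≤ N := h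
  have h3 : N * N ^ (m - 1) = N ^ m := by
    rw [← pow_succ']; congr 1; omega
  omega

lemma AC.card_inj_tuples {V : Type*} [DecidableEq V] [Fintype V] (m : ℕ) (A : Finset V) :
    ((Finset.univ : Finset (Fin m → V)).filter
      (fun x => (∀ i, x i ∈ A) ∧ Function.Injective x)).card = A.card.descFactorial m := by
  have e : {x : Fin m → V // (∀ i, x i ∈ A) ∧ Function.Injective x} ≃ (Fin m ↪ ↥A) := by
    refine ⟨fun x => ⟨fun i => ⟨x.1 i, x.2.1 i⟩, fun i j h => x.2.2 (by simpa using congrArg Subtype.val h)⟩,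
      fun f => ⟨fun i => (f i : V), ⟨fun i => (f i).2, fun i j h => f.injective (Subtype.ext h)⟩⟩, ?_, ?_⟩
    · intro x; rfl
    · intro f; rfl
  calc ((Finset.univ : Finset (Fin m → V)).filter
      (fun x => (∀ i, x i ∈ A) ∧ Function.Injective x)).card
      = Fintype.card {x : Fin m → V // (∀ i, x i ∈ A) ∧ Function.Injective x} := by
        rw [Fintype.card_subtype]
    _ = Fintype.card (Fin m ↪ ↥A) := Fintype.card_congr e
    _ = A.card.descFactorial m := by
        rw [Fintype.card_embedding_eq, Fintype.card_coe, Fintype.card_fin]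

/-- A pattern certifying a zero-sum relation inside a tuple. -/
def AC.Ok {n m : ℕ} (A : Finset (Fin n → ZMod 2)) (x : Fin m → Fin n → ZMod 2)
    (p : Finset (Fin m) × Bool) : Prop :=
  (p.2 = false ∧ 3 ≤ p.1.card ∧ ∑ i ∈ p.1, x i = 0) ∨
  (p.2 = true ∧ 2 ≤ p.1.card ∧ ∑ i ∈ p.1, x i ∈ A)

lemma AC.extract {n m : ℕ} (A : Finset (Fin n → ZMod 2)) (h0 : (0 : Fin n → ZMod 2) ∉ A)
    (hconn : ArithConnected m A) (x : Fin m → Fin n → ZMod 2)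
    (hxA : ∀ i, x i ∈ A) (hxinj : Function.Injective x) :
    ∃ p : Finset (Fin m) × Bool, AC.Ok A x p := by
  have h01 : ∀ c : ZMod 2, c ≠ 1 → c = 0 := by decide
  have hadd : ∀ a b : ZMod 2, a + b = 0 → a = b := by decide
  have haddV : ∀ a b : Fin n → ZMod 2, a + b = 0 → a = b := by
    intro a b h; funext k; exact hadd _ _ (congrFun h k)
  have hsum : ∀ g : Fin m → ZMod 2,
      ∑ i ∈ Finset.univ.filter (fun i => g i = 1), x i = ∑ i, g i • x i := by
    intro g
    rw [Finset.sum_filter]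
    apply Finset.sum_congr rfl
    intro i _
    by_cases h : g i = 1
    · simp [h]
    · simp [h, h01 _ h]
  rcases hconn x hxA hxinj with hdep | ⟨_, a', ha'A, ha'r, ha's⟩
  · rw [Fintype.not_linearIndependent_iff] at hdep
    obtain ⟨g, hg0, i0, hgi0⟩ := hdep
    set S := Finset.univ.filter (fun i => g i = 1) with hS
    have hSsum : ∑ i ∈ S, x i = 0 := by rw [hS, hsum, hg0]
    have hi0 : i0 ∈ S := by
      simp only [hS, mem_filter, mem_univ, true_and]
      by_contra h; exact hgi0 (h01 _ h)
    have hcard : 3 ≤ S.card := by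
      by_contra hlt
      push_neg at hlt
      interval_cases h : S.card
      · exact absurd (Finset.card_eq_zero.mp h ▸ hi0) (Finset.notMem_empty i0)
      · obtain ⟨a, ha⟩ := Finset.card_eq_one.mp h
        rw [ha, Finset.sum_singleton] at hSsum
        exact h0 (hSsum ▸ hxA a)
      · obtain ⟨a, b, hab, hS2⟩ := Finset.card_eq_two.mp h
        rw [hS2, Finset.sum_pair hab] at hSsum
        exact hab (hxinj (haddV _ _ hSsum))
    exact ⟨(S, false), Or.inl ⟨rfl, hcard, hSsum⟩⟩
  · rw [Submodule.mem_span_range_iff_exists_fun] at ha's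
    obtain ⟨g, hg⟩ := ha's
    set S := Finset.univ.filter (fun i => g i = 1) with hS
    have hSsum : ∑ i ∈ S, x i = a' := by rw [hS, hsum, hg]
    have hcard : 2 ≤ S.card := by
      by_contra hlt
      push_neg at hlt
      interval_cases h : S.card
      · rw [Finset.card_eq_zero.mp h, Finset.sum_empty] at hSsum
        exact h0 (hSsum ▸ ha'A)
      · obtain ⟨a, ha⟩ := Finset.card_eq_one.mp h
        rw [ha, Finset.sum_singleton] at hSsum
        exact ha'r ⟨a, hSsum⟩
    exact ⟨(S, true), Or.inr ⟨rfl, hcard, hSsum ▸ ha'A⟩⟩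

lemma AC.sum_orderIso {m : ℕ} {V : Type*} [AddCommMonoid V] (S : Finset (Fin m)) (x : Fin m → V) :
    ∑ j : Fin S.card, x ((S.orderIsoOfFin rfl j : Fin m)) = ∑ i ∈ S, x i := by
  rw [← Finset.sum_attach S (fun i => x i)]
  exact Fintype.sum_equiv (S.orderIsoOfFin rfl).toEquiv _ _ (fun j => rfl)

lemma AC.count_false {n m : ℕ} (A : Finset (Fin n → ZMod 2)) (S : Finset (Fin m))
    (T : Finset (Fin m → Fin n → ZMod 2))
    (hT : ∀ x ∈ T, (∀ i, x i ∈ A) ∧ ∑ i ∈ S, x i = 0) :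
    T.card ≤ ((Finset.univ : Finset (Fin S.card → Fin n → ZMod 2)).filter
      (fun y => (∀ i, y i ∈ A) ∧ ∑ i, y i = 0)).card * A.card ^ (m - S.card) := by
  classical
  set σ := S.orderIsoOfFin rfl
  set Sol := ((Finset.univ : Finset (Fin S.card → Fin n → ZMod 2)).filter
      (fun y => (∀ i, y i ∈ A) ∧ ∑ i, y i = 0)) with hSol
  set t := Sol ×ˢ Fintype.piFinset (fun _ : ↥(Sᶜ) => A) with ht
  have hmaps : ∀ x ∈ T, ((fun j => x (σ j)), (fun i : ↥(Sᶜ) => x i.1)) ∈ t := by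
    intro x hx
    rw [ht, Finset.mem_product]
    refine ⟨Finset.mem_filter.mpr ⟨Finset.mem_univ _, fun j => (hT x hx).1 _, ?_⟩,
      Fintype.mem_piFinset.mpr (fun i => (hT x hx).1 _)⟩
    rw [AC.sum_orderIso S x]
    exact (hT x hx).2
  have hinj : Set.InjOn (fun x : Fin m → Fin n → ZMod 2 =>
      ((fun j => x (σ j)), (fun i : ↥(Sᶜ) => x i.1))) T := by
    intro x hx x' hx' h
    obtain ⟨h1, h2⟩ := Prod.ext_iff.mp h
    funext i
    by_cases hi : i ∈ S
    · have := congrFun h1 (σ.symm ⟨i, hi⟩)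
      simpa using this
    · exact congrFun h2 ⟨i, Finset.mem_compl.mpr hi⟩
  calc T.card ≤ t.card := Finset.card_le_card_of_injOn _ hmaps hinj
    _ = Sol.card * A.card ^ (m - S.card) := by
        rw [ht, Finset.card_product]
        congr 1
        rw [Fintype.card_piFinset, Finset.prod_const, Finset.card_univ, Fintype.card_coe,
          Finset.card_compl, Fintype.card_fin]

lemma AC.count_true {n m : ℕ} (A : Finset (Fin n → ZMod 2)) (S : Finset (Fin m))
    (T : Finset (Fin m → Fin n → ZMod 2))
    (hT : ∀ x ∈ T, (∀ i, x i ∈ A) ∧ (∑ i ∈ S, x i) ∈ A) :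
    T.card ≤ ((Finset.univ : Finset (Fin (S.card + 1) → Fin n → ZMod 2)).filter
      (fun y => (∀ i, y i ∈ A) ∧ ∑ i, y i = 0)).card * A.card ^ (m - S.card) := by
  classical
  have hself : ∀ a : Fin n → ZMod 2, a + a = 0 := by
    have : ∀ c : ZMod 2, c + c = 0 := by decide
    intro a; funext k; exact this (a k)
  set σ := S.orderIsoOfFin rfl
  set Sol := ((Finset.univ : Finset (Fin (S.card + 1) → Fin n → ZMod 2)).filter
      (fun y => (∀ i, y i ∈ A) ∧ ∑ i, y i = 0)) with hSol
  set t := Sol ×ˢ Fintype.piFinset (fun _ : ↥(Sᶜ) => A) with ht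
  set f : (Fin m → Fin n → ZMod 2) → _ := fun x =>
    ((Fin.cons (∑ i ∈ S, x i) (fun j => x (σ j)) : Fin (S.card + 1) → Fin n → ZMod 2),
      (fun i : ↥(Sᶜ) => x i.1)) with hf
  have hmaps : ∀ x ∈ T, f x ∈ t := by
    intro x hx
    rw [ht, Finset.mem_product]
    refine ⟨Finset.mem_filter.mpr ⟨Finset.mem_univ _, ?_, ?_⟩,
      Fintype.mem_piFinset.mpr (fun i => (hT x hx).1 _)⟩
    · intro i
      refine Fin.cases ?_ ?_ i
      · simpa [hf] using (hT x hx).2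
      · intro j; simpa [hf] using (hT x hx).1 _
    · rw [Fin.sum_cons, AC.sum_orderIso S x, hself]
  have hinj : Set.InjOn f T := by
    intro x hx x' hx' h
    obtain ⟨h1, h2⟩ := Prod.ext_iff.mp h
    funext i
    by_cases hi : i ∈ S
    · have := congrFun h1 (Fin.succ (σ.symm ⟨i, hi⟩))
      simpa [hf] using this
    · exact congrFun h2 ⟨i, Finset.mem_compl.mpr hi⟩
  calc T.card ≤ t.card := Finset.card_le_card_of_injOn _ hmaps hinj
    _ = Sol.card * A.card ^ (m - S.card) := by
        rw [ht, Finset.card_product]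
        congr 1
        rw [Fintype.card_piFinset, Finset.prod_const, Finset.card_univ, Fintype.card_coe,
          Finset.card_compl, Fintype.card_fin]

theorem arith_connected_many_solutions {n m : ℕ} (hm : 0 < m)
    (A : Finset (Fin n → ZMod 2)) (h0 : (0 : Fin n → ZMod 2) ∉ A)
    (hcard : m ^ 2 ≤ A.card) (hconn : ArithConnected m A) :
    ∃ r : ℕ, 3 ≤ r ∧ r ≤ m + 1 ∧
      ((A.card : ℝ) ^ (r - 1) / 2 ^ (m + 2)) ≤
        ((Finset.univ : Finset (Fin r → Fin n → ZMod 2)).filter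
          (fun x => (∀ i, x i ∈ A) ∧ ∑ i, x i = 0)).card := by
  classical
  set N := A.card with hNdef
  have hN1 : 1 ≤ N := le_trans (Nat.one_le_iff_ne_zero.mpr (by positivity)) hcard
  set D := (Finset.univ : Finset (Fin m → Fin n → ZMod 2)).filter
      (fun x => (∀ i, x i ∈ A) ∧ Function.Injective x) with hD
  have hDcard : N ^ m ≤ 2 * D.card := by
    rw [hD, AC.card_inj_tuples]
    exact AC.pow_le_two_mul_desc hm hcard
  set pat : (Fin m → Fin n → ZMod 2) → Finset (Fin m) × Bool := fun x =>
    if h : ∃ p, AC.Ok A x p then h.choose else default with hpat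
  have hpatOk : ∀ x ∈ D, AC.Ok A x (pat x) := by
    intro x hx
    rw [hD, Finset.mem_filter] at hx
    have hex : ∃ p, AC.Ok A x p := AC.extract A h0 hconn x hx.2.1 hx.2.2
    simp only [hpat, dif_pos hex]
    exact hex.choose_spec
  obtain ⟨p₀, -, hp₀⟩ := Finset.exists_max_image (Finset.univ : Finset (Finset (Fin m) × Bool))
    (fun p => (D.filter (fun x => pat x = p)).card) ⟨default, Finset.mem_univ _⟩
  set T := D.filter (fun x => pat x = p₀) with hT
  have hpigeon : D.card ≤ 2 ^ (m + 1) * T.card := by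
    have hsum : D.card = ∑ p : Finset (Fin m) × Bool, (D.filter (fun x => pat x = p)).card :=
      Finset.card_eq_sum_card_fiberwise (fun x _ => Finset.mem_univ (pat x))
    have hle : ∑ p : Finset (Fin m) × Bool, (D.filter (fun x => pat x = p)).card
        ≤ ∑ _p : Finset (Fin m) × Bool, T.card :=
      Finset.sum_le_sum (fun p _ => hp₀ p (Finset.mem_univ p))
    have hcardu : (Finset.univ : Finset (Finset (Fin m) × Bool)).card = 2 ^ (m + 1) := by
      rw [Finset.card_univ, Fintype.card_prod, Fintype.card_finset, Fintype.card_fin,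
        Fintype.card_bool]
      ring
    rw [hsum]
    refine le_trans hle ?_
    rw [Finset.sum_const, hcardu, smul_eq_mul]
  have hTD : ∀ x ∈ T, x ∈ D := fun x hx => (Finset.mem_filter.mp hx).1
  have hNmT : N ^ m ≤ 2 ^ (m + 2) * T.card := by
    calc N ^ m ≤ 2 * D.card := hDcard
      _ ≤ 2 * (2 ^ (m + 1) * T.card) := by exact Nat.mul_le_mul_left 2 hpigeon
      _ = 2 ^ (m + 2) * T.card := by ring
  have hTne : T.Nonempty := by
    rw [← Finset.card_pos]
    by_contra h
    push_neg at h
    interval_cases h2 : T.card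
    · simp only [h2, Nat.mul_zero] at hNmT
      have : 1 ≤ N ^ m := Nat.one_le_pow m N hN1
      omega
  obtain ⟨x₀, hx₀T⟩ := hTne
  have hx₀pat : pat x₀ = p₀ := (Finset.mem_filter.mp hx₀T).2
  have hOk₀ : AC.Ok A x₀ p₀ := by
    have h := hpatOk x₀ (hTD x₀ hx₀T)
    rwa [hx₀pat] at h
  set S := p₀.1 with hSdef
  have hsm : S.card ≤ m := by
    calc S.card ≤ Fintype.card (Fin m) := Finset.card_le_univ S
      _ = m := Fintype.card_fin m
  -- common arithmetic finisher
  have finisher : ∀ r : ℕ, r - 1 ≤ S.card →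
      (T.card ≤ ((Finset.univ : Finset (Fin r → Fin n → ZMod 2)).filter
          (fun y => (∀ i, y i ∈ A) ∧ ∑ i, y i = 0)).card * N ^ (m - S.card)) →
      ((N : ℝ) ^ (r - 1) / 2 ^ (m + 2)) ≤
        ((Finset.univ : Finset (Fin r → Fin n → ZMod 2)).filter
          (fun y => (∀ i, y i ∈ A) ∧ ∑ i, y i = 0)).card := by
    intro r hr hcnt
    set Sc := ((Finset.univ : Finset (Fin r → Fin n → ZMod 2)).filter
          (fun y => (∀ i, y i ∈ A) ∧ ∑ i, y i = 0)).card
    have hk : N ^ S.card * N ^ (m - S.card) ≤ (2 ^ (m + 2) * Sc) * N ^ (m - S.card) := by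
      calc N ^ S.card * N ^ (m - S.card) = N ^ m := by
            rw [← pow_add, Nat.add_sub_cancel' hsm]
        _ ≤ 2 ^ (m + 2) * T.card := hNmT
        _ ≤ 2 ^ (m + 2) * (Sc * N ^ (m - S.card)) := Nat.mul_le_mul_left _ hcnt
        _ = (2 ^ (m + 2) * Sc) * N ^ (m - S.card) := by ring
    have hkey : N ^ S.card ≤ 2 ^ (m + 2) * Sc :=
      Nat.le_of_mul_le_mul_right hk (Nat.pow_pos hN1)
    rw [div_le_iff₀ (by positivity)]
    calc ((N : ℝ)) ^ (r - 1) ≤ (N : ℝ) ^ S.card := by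
          apply pow_le_pow_right₀ (by exact_mod_cast hN1) hr
      _ ≤ 2 ^ (m + 2) * Sc := by exact_mod_cast hkey
      _ = (Sc : ℝ) * 2 ^ (m + 2) := by ring
  rcases hOk₀ with ⟨hb, h3, -⟩ | ⟨hb, h2, -⟩ <;> rw [← hSdef] at *
  · -- no extra element: r = S.card
    refine ⟨S.card, h3, by omega, ?_⟩
    apply finisher S.card (by omega)
    apply AC.count_false A S T
    intro x hx
    have hxD := hTD x hx
    rw [hD, Finset.mem_filter] at hxD
    have hOkx : AC.Ok A x p₀ := by
      have h := hpatOk x (hTD x hx)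
      rwa [(Finset.mem_filter.mp hx).2] at h
    rcases hOkx with ⟨-, -, hs⟩ | ⟨hb', -, -⟩
    · exact ⟨hxD.2.1, hs⟩
    · rw [hb] at hb'; exact absurd hb' (by simp)
  · -- extra element: r = S.card + 1
    refine ⟨S.card + 1, by omega, by omega, ?_⟩
    apply finisher (S.card + 1) (by omega)
    apply AC.count_true A S T
    intro x hx
    have hxD := hTD x hx
    rw [hD, Finset.mem_filter] at hxD
    have hOkx : AC.Ok A x p₀ := by
      have h := hpatOk x (hTD x hx)
      rwa [(Finset.mem_filter.mp hx).2] at h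
    rcases hOkx with ⟨hb', -, -⟩ | ⟨-, -, hs⟩
    · rw [hb] at hb'; exact absurd hb' (by simp)
    · exact ⟨hxD.2.1, hs⟩
end
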